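/- arXiv:0906.0375 — 7 statements merged into one kernel-verified Lean document; each statement's English description precedes it below -/
import Mathlib

section
/- Let p > 10/3, p > q > 0, F(x) = x^{p/2}/(1 + x^{(p−q)/2}) for x ≥ 0 with F(0)=0, and let F' denote its derivative (extended by F'(0)=0). For every R₀ > 0 there is a constant C > 0 such that for all real R with 0 ≤ R ≤ R₀ and all v ∈ ℂ: | [ F(|R+v|²) + F'(|R+v|²)·|R+v|² ] − [ F(R²) + F'(R²)·R² ] | ≤ C·( R^{p−1}·|v| + |v|^{p} ). -/
/-!
For `r ≥ 0` the coefficient `F (r²) + F' (r²) r²` equals `g r = r ^ p * h (r ^ (p - q))` with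
`h s = ((1 + p/2) + (1 + q/2) s) / (1 + s)²`. Both `h` and `s h'(s)` are bounded on `[0, ∞)`,
so `|g' r| ≤ K r ^ (p - 1)` and the mean value theorem gives
`|g a - g R| ≤ K max(a, R) ^ (p - 1) |a - R|`. For `a = |R + v|` we have `|a - R| ≤ |v|` and
`max(a, R) ≤ R + |v|`, which bounds this by `2 ^ (p - 1) K (R ^ (p - 1) |v| + |v| ^ p)`,
uniformly in `R`.
-/

open Real Set

section RpowMulCompRpow

variable {p α M₀ M₁ : ℝ} {f f' : ℝ → ℝ}

theorem hasDerivAt_rpow_mul_comp_rpow (hf' : ∀ s, 0 < s → HasDerivAt f (f' s) s)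
    {r : ℝ} (hr : 0 < r) :
    HasDerivAt (fun r ↦ r ^ p * f (r ^ α))
      (r ^ (p - 1) * (p * f (r ^ α) + α * (r ^ α * f' (r ^ α)))) r := by
  have hpow : ∀ β : ℝ, HasDerivAt (fun r : ℝ ↦ r ^ β) (β * r ^ (β - 1)) r :=
    fun β ↦ hasDerivAt_rpow_const (Or.inl hr.ne')
  refine ((hpow p).mul ((hf' _ (rpow_pos_of_pos hr α)).comp r (hpow α))).congr_deriv ?_
  rw [Function.comp_apply, rpow_sub_one hr.ne', rpow_sub_one hr.ne']
  field_simp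

theorem abs_rpow_mul_comp_rpow_sub_le (hp : 1 ≤ p) (hα : 0 ≤ α)
    (hfc : ContinuousOn f (Ici 0)) (hf' : ∀ s, 0 < s → HasDerivAt f (f' s) s)
    (hM₀ : ∀ s, 0 ≤ s → |f s| ≤ M₀) (hM₁ : ∀ s, 0 < s → |s * f' s| ≤ M₁)
    {x y : ℝ} (hx : 0 ≤ x) (hxy : x ≤ y) :
    |y ^ p * f (y ^ α) - x ^ p * f (x ^ α)| ≤
      (p * M₀ + α * M₁) * y ^ (p - 1) * (y - x) := by
  rcases hxy.eq_or_lt with rfl | hxy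
  · simp
  have hcont : ContinuousOn (fun r ↦ r ^ p * f (r ^ α)) (Icc x y) :=
    ((continuous_rpow_const (by linarith)).continuousOn).mul
      (hfc.comp (continuous_rpow_const hα).continuousOn
        fun r hr ↦ rpow_nonneg (hx.trans hr.1) α)
  obtain ⟨c, hc, hslope⟩ := exists_hasDerivAt_eq_slope _ _ hxy hcont
    fun r hr ↦ hasDerivAt_rpow_mul_comp_rpow hf' (hx.trans_lt hr.1)
  have hc₀ : 0 < c := hx.trans_lt hc.1
  rw [eq_div_iff (sub_pos.2 hxy).ne'] at hslope
  rw [← hslope, abs_mul, abs_of_pos (sub_pos.2 hxy)]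
  gcongr
  have hM₀' : 0 ≤ M₀ := (abs_nonneg _).trans (hM₀ 0 le_rfl)
  have hM₁' : 0 ≤ M₁ := (abs_nonneg _).trans (hM₁ 1 one_pos)
  calc |c ^ (p - 1) * (p * f (c ^ α) + α * (c ^ α * f' (c ^ α)))|
      = c ^ (p - 1) * |p * f (c ^ α) + α * (c ^ α * f' (c ^ α))| := by
        rw [abs_mul, abs_of_pos (rpow_pos_of_pos hc₀ _)]
    _ ≤ c ^ (p - 1) * (p * M₀ + α * M₁) := by
        gcongr
        refine (abs_add_le _ _).trans ?_
        rw [abs_mul, abs_mul, abs_of_nonneg (by linarith : 0 ≤ p), abs_of_nonneg hα]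
        gcongr
        · exact hM₀ _ (rpow_nonneg hc₀.le _)
        · exact hM₁ _ (rpow_pos_of_pos hc₀ _)
    _ ≤ y ^ (p - 1) * (p * M₀ + α * M₁) := by
        gcongr
        exact hc.2.le
    _ = _ := mul_comm _ _

theorem abs_rpow_mul_comp_rpow_sub_le_max (hp : 1 ≤ p) (hα : 0 ≤ α)
    (hfc : ContinuousOn f (Ici 0)) (hf' : ∀ s, 0 < s → HasDerivAt f (f' s) s)
    (hM₀ : ∀ s, 0 ≤ s → |f s| ≤ M₀) (hM₁ : ∀ s, 0 < s → |s * f' s| ≤ M₁)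
    {x y : ℝ} (hx : 0 ≤ x) (hy : 0 ≤ y) :
    |x ^ p * f (x ^ α) - y ^ p * f (y ^ α)| ≤
      (p * M₀ + α * M₁) * max x y ^ (p - 1) * |x - y| := by
  rcases le_total x y with h | h
  · rw [abs_sub_comm, abs_sub_comm x, max_eq_right h, abs_of_nonneg (sub_nonneg.2 h)]
    exact abs_rpow_mul_comp_rpow_sub_le hp hα hfc hf' hM₀ hM₁ hx h
  · rw [max_eq_left h, abs_of_nonneg (sub_nonneg.2 h)]
    exact abs_rpow_mul_comp_rpow_sub_le hp hα hfc hf' hM₀ hM₁ hy h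

end RpowMulCompRpow

section AffineDivOneAddSq

variable (A B : ℝ) {s : ℝ}

theorem hasDerivAt_affine_div_one_add_sq (hs : 0 ≤ s) :
    HasDerivAt (fun s ↦ (A + B * s) / (1 + s) ^ 2) ((B - 2 * A - B * s) / (1 + s) ^ 3) s := by
  have hs₁ : 1 + s ≠ 0 := by positivity
  refine ((((hasDerivAt_id s).const_mul B).const_add A).div
    (((hasDerivAt_id s).const_add 1).pow 2) (pow_ne_zero 2 hs₁)).congr_deriv ?_
  simp only [Pi.pow_apply, id]
  field_simp
  ring

theorem abs_affine_div_one_add_sq_le (hs : 0 ≤ s) :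
    |(A + B * s) / (1 + s) ^ 2| ≤ |A| + |B| := by
  rw [abs_div, abs_of_pos (by positivity : (0 : ℝ) < (1 + s) ^ 2), div_le_iff₀ (by positivity)]
  calc |A + B * s| ≤ |A| + |B| * s := by
        simpa [abs_mul, abs_of_nonneg hs] using abs_add_le A (B * s)
    _ ≤ (|A| + |B|) * (1 + s) ^ 2 := by
        have : 1 ≤ (1 + s) ^ 2 := by nlinarith
        have : s ≤ (1 + s) ^ 2 := by nlinarith
        nlinarith [abs_nonneg A, abs_nonneg B]

theorem abs_mul_deriv_affine_div_one_add_sq_le (hs : 0 ≤ s) :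
    |s * ((B - 2 * A - B * s) / (1 + s) ^ 3)| ≤ |B - 2 * A| + |B| := by
  rw [← mul_div_assoc, abs_div, abs_of_pos (by positivity : (0 : ℝ) < (1 + s) ^ 3),
    div_le_iff₀ (by positivity)]
  calc |s * (B - 2 * A - B * s)| ≤ s * (|B - 2 * A| + |B| * s) := by
        rw [abs_mul, abs_of_nonneg hs]
        gcongr
        simpa [abs_mul, abs_of_nonneg hs] using abs_sub (B - 2 * A) (B * s)
    _ ≤ (|B - 2 * A| + |B|) * (1 + s) ^ 3 := by
        have : s ≤ (1 + s) ^ 3 := by nlinarith [pow_nonneg hs 2, pow_nonneg hs 3]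
        have : s ^ 2 ≤ (1 + s) ^ 3 := by nlinarith [pow_nonneg hs 2, pow_nonneg hs 3]
        nlinarith [abs_nonneg (B - 2 * A), abs_nonneg B]

theorem continuousOn_affine_div_one_add_sq :
    ContinuousOn (fun s ↦ (A + B * s) / (1 + s) ^ 2) (Ici 0) :=
  fun _ hs ↦ (hasDerivAt_affine_div_one_add_sq A B hs).continuousAt.continuousWithinAt

end AffineDivOneAddSq

theorem rpow_div_one_add_rpow_add_deriv_mul {a b x d : ℝ} (hx : 0 < x)
    (hd : HasDerivAt (fun x ↦ x ^ a / (1 + x ^ b)) d x) :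
    x ^ a / (1 + x ^ b) + d * x = x ^ a * (((1 + a) + (1 + a - b) * x ^ b) / (1 + x ^ b) ^ 2) := by
  have hpow : ∀ β : ℝ, HasDerivAt (fun x : ℝ ↦ x ^ β) (β * x ^ (β - 1)) x :=
    fun β ↦ hasDerivAt_rpow_const (Or.inl hx.ne')
  have hden : 1 + x ^ b ≠ 0 := by positivity
  rw [hd.unique ((hpow a).div ((hpow b).const_add 1) hden), rpow_sub_one hx.ne',
    rpow_sub_one hx.ne']
  field_simp
  ring

theorem add_deriv_mul_sq_eq {p q : ℝ} (hp : 0 < p) {F F' : ℝ → ℝ}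
    (hF : ∀ x : ℝ, 0 ≤ x → F x = x ^ (p / 2) / (1 + x ^ ((p - q) / 2)))
    (hF' : ∀ x : ℝ, 0 < x → HasDerivAt F (F' x) x) (hF'0 : F' 0 = 0)
    {r : ℝ} (hr : 0 ≤ r) :
    F (r ^ 2) + F' (r ^ 2) * r ^ 2 =
      r ^ p * (((1 + p / 2) + (1 + q / 2) * r ^ (p - q)) / (1 + r ^ (p - q)) ^ 2) := by
  rcases hr.eq_or_lt with rfl | hr
  · simp [hF, hF'0, zero_rpow hp.ne', zero_rpow (half_pos hp).ne']
  have hx : 0 < r ^ 2 := by positivity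
  have hsq : ∀ β : ℝ, (r ^ 2) ^ (β / 2) = r ^ β := fun β ↦ by
    rw [← rpow_natCast_mul hr.le, Nat.cast_two, mul_div_cancel₀ β two_ne_zero]
  have hFx : HasDerivAt (fun x ↦ x ^ (p / 2) / (1 + x ^ ((p - q) / 2))) (F' (r ^ 2)) (r ^ 2) :=
    (hF' _ hx).congr_of_eventuallyEq
      (Filter.eventuallyEq_of_mem (Ioi_mem_nhds hx) fun y hy ↦ (hF y (le_of_lt hy)).symm)
  rw [hF _ hx.le, rpow_div_one_add_rpow_add_deriv_mul hx hFx, hsq, hsq,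
    show 1 + p / 2 - (p - q) / 2 = 1 + q / 2 by ring]

theorem max_rpow_mul_abs_sub_le {p a R w : ℝ} (hp : 1 ≤ p) (ha : 0 ≤ a) (hR : 0 ≤ R)
    (haR : |a - R| ≤ w) :
    max a R ^ (p - 1) * |a - R| ≤ 2 ^ (p - 1) * (R ^ (p - 1) * w + w ^ p) := by
  have hw : 0 ≤ w := (abs_nonneg _).trans haR
  have hmax : max a R ≤ R + w := max_le (by linarith [le_abs_self (a - R)]) (by linarith)
  have hp₁ : 0 ≤ p - 1 := by linarith
  calc max a R ^ (p - 1) * |a - R| ≤ (R + w) ^ (p - 1) * w := by gcongr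
    _ ≤ 2 ^ (p - 1) * (R ^ (p - 1) * w + w ^ p) := by
      rw [show w ^ p = w ^ (p - 1) * w by rw [← rpow_add_one' hw (by linarith)]; ring_nf]
      rcases le_total R w with h | h
      · calc (R + w) ^ (p - 1) * w ≤ (2 * w) ^ (p - 1) * w := by gcongr; linarith
          _ = 2 ^ (p - 1) * (w ^ (p - 1) * w) := by rw [mul_rpow (by norm_num) hw]; ring
          _ ≤ _ := by gcongr; exact le_add_of_nonneg_left (by positivity)
      · calc (R + w) ^ (p - 1) * w ≤ (2 * R) ^ (p - 1) * w := by gcongr; linarith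
          _ = 2 ^ (p - 1) * (R ^ (p - 1) * w) := by rw [mul_rpow (by norm_num) hR]; ring
          _ ≤ _ := by gcongr; exact le_add_of_nonneg_right (by positivity)

theorem stmt_7_general (p q : ℝ) (hp : 10 / 3 < p) (hqp : q < p)
    (F F' : ℝ → ℝ)
    (hF : ∀ x : ℝ, 0 ≤ x → F x = x ^ (p / 2) / (1 + x ^ ((p - q) / 2)))
    (hF' : ∀ x : ℝ, 0 < x → HasDerivAt F (F' x) x)
    (hF'0 : F' 0 = 0) :
    ∀ R₀ : ℝ, 0 < R₀ → ∃ C : ℝ, 0 < C ∧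
      ∀ R : ℝ, 0 ≤ R → R ≤ R₀ → ∀ v : ℂ,
        |(F (‖(R : ℂ) + v‖ ^ 2)
            + F' (‖(R : ℂ) + v‖ ^ 2) * ‖(R : ℂ) + v‖ ^ 2)
          - (F (R ^ 2) + F' (R ^ 2) * R ^ 2)|
          ≤ C * (R ^ (p - 1) * ‖v‖ + ‖v‖ ^ p) := by
  intro _ _
  set A := 1 + p / 2
  set B := 1 + q / 2
  set K := p * (|A| + |B|) + (p - q) * (|B - 2 * A| + |B|)
  have hp₁ : 1 ≤ p := by linarith
  have hK : 0 ≤ K := by have := sub_pos.2 hqp; positivity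
  refine ⟨2 ^ (p - 1) * K + 1, by positivity, fun R hR _ v ↦ ?_⟩
  have hdist : |‖(R : ℂ) + v‖ - R| ≤ ‖v‖ := by
    simpa [Complex.norm_real, abs_of_nonneg hR] using abs_norm_sub_norm_le ((R : ℂ) + v) R
  rw [add_deriv_mul_sq_eq (by linarith) hF hF' hF'0 (norm_nonneg _),
    add_deriv_mul_sq_eq (by linarith) hF hF' hF'0 hR]
  calc _ ≤ K * max ‖(R : ℂ) + v‖ R ^ (p - 1) * |‖(R : ℂ) + v‖ - R| :=
        abs_rpow_mul_comp_rpow_sub_le_max hp₁ (sub_nonneg.2 hqp.le)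
          (continuousOn_affine_div_one_add_sq A B)
          (fun s hs ↦ hasDerivAt_affine_div_one_add_sq A B hs.le)
          (fun s hs ↦ abs_affine_div_one_add_sq_le A B hs)
          (fun s hs ↦ abs_mul_deriv_affine_div_one_add_sq_le A B hs.le) (norm_nonneg _) hR
    _ ≤ K * (2 ^ (p - 1) * (R ^ (p - 1) * ‖v‖ + ‖v‖ ^ p)) := by
        rw [mul_assoc]
        exact mul_le_mul_of_nonneg_left (max_rpow_mul_abs_sub_le hp₁ (norm_nonneg _) hR hdist) hK
    _ ≤ (2 ^ (p - 1) * K + 1) * (R ^ (p - 1) * ‖v‖ + ‖v‖ ^ p) := by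
        rw [← mul_assoc, mul_comm K]
        gcongr
        linarith

theorem stmt_7 (p q : ℝ) (hp : 10 / 3 < p) (hq : 0 < q) (hqp : q < p)
    (F F' : ℝ → ℝ)
    (hF : ∀ x : ℝ, 0 ≤ x → F x = x ^ (p / 2) / (1 + x ^ ((p - q) / 2)))
    (hF' : ∀ x : ℝ, 0 < x → HasDerivAt F (F' x) x)
    (hF'0 : F' 0 = 0) :
    ∀ R₀ : ℝ, 0 < R₀ → ∃ C : ℝ, 0 < C ∧
      ∀ R : ℝ, 0 ≤ R → R ≤ R₀ → ∀ v : ℂ,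
        |(F (‖(R : ℂ) + v‖ ^ 2)
            + F' (‖(R : ℂ) + v‖ ^ 2) * ‖(R : ℂ) + v‖ ^ 2)
          - (F (R ^ 2) + F' (R ^ 2) * R ^ 2)|
          ≤ C * (R ^ (p - 1) * ‖v‖ + ‖v‖ ^ p) :=
  stmt_7_general p q hp hqp F F' hF hF' hF'0
end

section
/- Let p > 10/3, p > q > 0, F(x) = x^{p/2}/(1 + x^{(p−q)/2}) for x ≥ 0 with F(0)=0, and let F' denote its derivative (extended by F'(0)=0). For every R₀ > 0 there is a constant C > 0 such that for all real R with 0 ≤ R ≤ R₀ and all v ∈ ℂ: | F'(|R+v|²)·(R+v)² − F'(R²)·R² | ≤ C·( R^{p−1}·|v| + |v|^{p} ). -/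
/-!
Write `F x = x ^ a * h (x ^ s)` with `a = p / 2`, `s = (p - q) / 2` and `h y = (1 + y)⁻¹`.
Differentiating `x ^ c * h (x ^ s)` gives `x ^ (c - 1) * (c * h + s * y * h') (x ^ s)`, and the
bracket stays bounded as soon as `h` and `y * h'` are bounded on `(0, ∞)`. Applied twice, this gives
`|F' x| ≲ x ^ (p / 2 - 1)` and `|F'' x| ≲ x ^ (p / 2 - 2)`.

For such an `f`, put `G w = f (‖w‖ ^ 2) * w ^ 2`, so that `‖G w‖ ≲ ‖w‖ ^ p`. If `‖w‖ ≤ 2 ‖v‖`,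
then `‖G (w + v)‖ + ‖G w‖ ≲ ‖v‖ ^ p`. Otherwise the segment from `w` to `w + v` avoids `0` and stays
in the ball of radius `3 ‖w‖`, the derivative of `G` along it is `≲ ‖z‖ ^ (p - 1) ‖v‖`, and the mean
value inequality gives `‖G (w + v) - G w‖ ≲ ‖w‖ ^ (p - 1) ‖v‖`.
-/

open Real

section RpowProfile

variable {h h' : ℝ → ℝ} {c s x : ℝ}

theorem hasDerivAt_rpow_mul_comp_rpow_s8 (hx : 0 < x) (hh : HasDerivAt h (h' (x ^ s)) (x ^ s)) :
    HasDerivAt (fun x => x ^ c * h (x ^ s))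
      (x ^ (c - 1) * (c * h (x ^ s) + s * x ^ s * h' (x ^ s))) x := by
  have hxs := hasDerivAt_rpow_const (p := s) (Or.inl hx.ne')
  refine ((hasDerivAt_rpow_const (Or.inl hx.ne')).mul (hh.comp x hxs)).congr_deriv ?_
  have : x ^ c * x ^ (s - 1) = x ^ (c - 1) * x ^ s := by
    rw [← rpow_add hx, ← rpow_add hx]; ring_nf
  simp only [Function.comp_def]
  linear_combination (s * h' (x ^ s)) * this

theorem abs_deriv_rpow_mul_comp_rpow_le {M N : ℝ} (hx : 0 < x) (hM : ∀ y, 0 < y → |h y| ≤ M)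
    (hN : ∀ y, 0 < y → |y * h' y| ≤ N) :
    |x ^ (c - 1) * (c * h (x ^ s) + s * x ^ s * h' (x ^ s))|
      ≤ (|c| * M + |s| * N) * x ^ (c - 1) := by
  have hy := rpow_pos_of_pos hx s
  rw [abs_mul, abs_of_pos (rpow_pos_of_pos hx _), mul_comm]
  gcongr
  calc |c * h (x ^ s) + s * x ^ s * h' (x ^ s)|
      ≤ |c| * |h (x ^ s)| + |s| * |x ^ s * h' (x ^ s)| := by
        rw [← abs_mul, ← abs_mul, mul_assoc]; exact abs_add_le _ _
    _ ≤ |c| * M + |s| * N := by gcongr <;> [exact hM _ hy; exact hN _ hy]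

end RpowProfile

theorem hasDerivAt_inv_one_add {y : ℝ} (hy : 0 < y) :
    HasDerivAt (fun y : ℝ => (1 + y)⁻¹) (-((1 + y) ^ 2)⁻¹) y := by
  refine (((hasDerivAt_id y).const_add 1).inv (by positivity)).congr_deriv ?_
  simp only [neg_div, one_div, id]

/-- If `F x = x ^ a / (1 + x ^ s)`, then `F' x = x ^ (a - 1) * satProfile a s (x ^ s)`. -/
noncomputable def satProfile (a s y : ℝ) : ℝ := a * (1 + y)⁻¹ - s * y * ((1 + y) ^ 2)⁻¹

noncomputable def satProfileDeriv (a s y : ℝ) : ℝ :=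
  -(a + s) * ((1 + y) ^ 2)⁻¹ + 2 * s * y * ((1 + y) ^ 3)⁻¹

theorem hasDerivAt_satProfile (a s : ℝ) {y : ℝ} (hy : 0 < y) :
    HasDerivAt (satProfile a s) (satProfileDeriv a s y) y := by
  have h1 : HasDerivAt (fun y : ℝ => 1 + y) 1 y := (hasDerivAt_id y).const_add 1
  have h2 := h1.inv (by positivity)
  have h3 := (h1.pow 2).inv (pow_ne_zero 2 (by positivity))
  refine ((h2.const_mul a).sub (((hasDerivAt_id y).const_mul s).mul h3)).congr_deriv ?_
  simp only [satProfileDeriv, Pi.pow_apply, Pi.inv_apply, id]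
  field_simp
  ring

theorem inv_one_add_le_one {y : ℝ} (hy : 0 ≤ y) : (1 + y)⁻¹ ≤ 1 :=
  inv_le_one_of_one_le₀ (by linarith)

theorem mul_inv_one_add_sq_le_one {y : ℝ} (hy : 0 ≤ y) : y * ((1 + y) ^ 2)⁻¹ ≤ 1 := by
  rw [← div_eq_mul_inv, div_le_one (by positivity)]; nlinarith

theorem sq_mul_inv_one_add_cube_le_one {y : ℝ} (hy : 0 ≤ y) :
    y ^ 2 * ((1 + y) ^ 3)⁻¹ ≤ 1 := by
  rw [← div_eq_mul_inv, div_le_one (by positivity)]; nlinarith [pow_nonneg hy 3]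

theorem abs_satProfile_le (a s : ℝ) {y : ℝ} (hy : 0 < y) : |satProfile a s y| ≤ |a| + |s| :=
  calc |satProfile a s y| ≤ |a * (1 + y)⁻¹| + |s * (y * ((1 + y) ^ 2)⁻¹)| := by
        rw [satProfile, mul_assoc s]; exact abs_sub _ _
    _ = |a| * (1 + y)⁻¹ + |s| * (y * ((1 + y) ^ 2)⁻¹) := by
        rw [abs_mul, abs_mul, abs_of_pos (show 0 < (1 + y)⁻¹ by positivity),
          abs_of_pos (show 0 < y * ((1 + y) ^ 2)⁻¹ by positivity)]
    _ ≤ |a| * 1 + |s| * 1 := by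
        gcongr
        exacts [inv_one_add_le_one hy.le, mul_inv_one_add_sq_le_one hy.le]
    _ = |a| + |s| := by ring

theorem abs_mul_satProfileDeriv_le (a s : ℝ) {y : ℝ} (hy : 0 < y) :
    |y * satProfileDeriv a s y| ≤ |a| + 3 * |s| :=
  calc |y * satProfileDeriv a s y|
        ≤ |(a + s) * (y * ((1 + y) ^ 2)⁻¹)| + |2 * s * (y ^ 2 * ((1 + y) ^ 3)⁻¹)| := by
        have : y * satProfileDeriv a s y
            = -((a + s) * (y * ((1 + y) ^ 2)⁻¹)) + 2 * s * (y ^ 2 * ((1 + y) ^ 3)⁻¹) := by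
          rw [satProfileDeriv]; ring
        rw [this, ← abs_neg ((a + s) * _)]
        exact abs_add_le _ _
    _ = |a + s| * (y * ((1 + y) ^ 2)⁻¹) + 2 * |s| * (y ^ 2 * ((1 + y) ^ 3)⁻¹) := by
        rw [abs_mul (a + s), abs_mul (2 * s), abs_mul 2, abs_two,
          abs_of_pos (show 0 < y * ((1 + y) ^ 2)⁻¹ by positivity),
          abs_of_pos (show 0 < y ^ 2 * ((1 + y) ^ 3)⁻¹ by positivity)]
    _ ≤ (|a| + |s|) * 1 + 2 * |s| * 1 := by
        gcongr
        exacts [abs_add_le a s, mul_inv_one_add_sq_le_one hy.le,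
          sq_mul_inv_one_add_cube_le_one hy.le]
    _ = |a| + 3 * |s| := by ring

section Saturated

variable {F F' : ℝ → ℝ} {a s x : ℝ}

theorem eq_rpow_mul_satProfile (hF : ∀ x, 0 ≤ x → F x = x ^ a / (1 + x ^ s))
    (hF' : ∀ x, 0 < x → HasDerivAt F (F' x) x) (hx : 0 < x) :
    F' x = x ^ (a - 1) * satProfile a s (x ^ s) := by
  have hF_eq : (fun x => x ^ a * (1 + x ^ s)⁻¹) =ᶠ[nhds x] F := by
    filter_upwards [Ioi_mem_nhds hx] with y hy
    rw [hF y (le_of_lt hy), div_eq_mul_inv]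
  have h := (hasDerivAt_rpow_mul_comp_rpow_s8 (c := a) (h := fun y => (1 + y)⁻¹)
    (h' := fun y => -((1 + y) ^ 2)⁻¹) hx
    (hasDerivAt_inv_one_add (rpow_pos_of_pos hx s))).congr_of_eventuallyEq hF_eq.symm
  rw [(hF' x hx).unique h, satProfile]
  ring

theorem abs_le_rpow_of_saturated (hF : ∀ x, 0 ≤ x → F x = x ^ a / (1 + x ^ s))
    (hF' : ∀ x, 0 < x → HasDerivAt F (F' x) x) (hF'0 : F' 0 = 0) (hx : 0 ≤ x) :
    |F' x| ≤ (|a| + |s|) * x ^ (a - 1) := by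
  rcases hx.eq_or_lt with rfl | hx
  · rw [hF'0, abs_zero]; positivity
  rw [eq_rpow_mul_satProfile hF hF' hx, abs_mul, abs_of_pos (rpow_pos_of_pos hx _), mul_comm]
  gcongr
  exact abs_satProfile_le a s (rpow_pos_of_pos hx s)

theorem hasDerivAt_deriv_of_saturated (hF : ∀ x, 0 ≤ x → F x = x ^ a / (1 + x ^ s))
    (hF' : ∀ x, 0 < x → HasDerivAt F (F' x) x) (hx : 0 < x) :
    HasDerivAt F' (x ^ (a - 2) * ((a - 1) * satProfile a s (x ^ s)
      + s * x ^ s * satProfileDeriv a s (x ^ s))) x := by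
  have hF'_eq : (fun x => x ^ (a - 1) * satProfile a s (x ^ s)) =ᶠ[nhds x] F' := by
    filter_upwards [Ioi_mem_nhds hx] with y hy
    rw [eq_rpow_mul_satProfile hF hF' hy]
  rw [show a - 2 = a - 1 - 1 by ring]
  exact (hasDerivAt_rpow_mul_comp_rpow_s8 hx
    (hasDerivAt_satProfile a s (rpow_pos_of_pos hx s))).congr_of_eventuallyEq hF'_eq.symm

theorem abs_deriv_le_rpow_of_saturated (hF : ∀ x, 0 ≤ x → F x = x ^ a / (1 + x ^ s))
    (hF' : ∀ x, 0 < x → HasDerivAt F (F' x) x) (hx : 0 < x) :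
    |deriv F' x| ≤ (|a - 1| * (|a| + |s|) + |s| * (|a| + 3 * |s|)) * x ^ (a - 2) := by
  rw [(hasDerivAt_deriv_of_saturated hF hF' hx).deriv, show a - 2 = a - 1 - 1 by ring]
  exact abs_deriv_rpow_mul_comp_rpow_le hx (fun _ hy => abs_satProfile_le a s hy)
    (fun _ hy => abs_mul_satProfileDeriv_le a s hy)

end Saturated


theorem sq_rpow_mul_pow {r : ℝ} (hr : 0 < r) (e : ℝ) (n : ℕ) :
    (r ^ 2) ^ e * r ^ n = r ^ (2 * e + n) := by
  rw [← rpow_natCast_mul hr.le, ← rpow_natCast, ← rpow_add hr]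
  norm_num

theorem nonneg_of_abs_le_mul_rpow {f : ℝ → ℝ} {A e : ℝ} (h : ∀ x, 0 < x → |f x| ≤ A * x ^ e) :
    0 ≤ A := by
  simpa using (abs_nonneg _).trans (h 1 one_pos)

section NormSqProfile

variable {f f' : ℝ → ℝ} {p A B : ℝ}

theorem norm_ofReal_normSq_mul_sq_le (hp : 1 ≤ p) (hf : ∀ x, 0 ≤ x → |f x| ≤ A * x ^ (p / 2 - 1))
    (w : ℂ) : ‖(f (‖w‖ ^ 2) : ℂ) * w ^ 2‖ ≤ A * ‖w‖ ^ p := by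
  rcases eq_or_ne w 0 with rfl | hw
  · simp [zero_rpow (by linarith : p ≠ 0)]
  have hw := norm_pos_iff.2 hw
  calc ‖(f (‖w‖ ^ 2) : ℂ) * w ^ 2‖ = |f (‖w‖ ^ 2)| * ‖w‖ ^ 2 := by
        rw [norm_mul, norm_pow, Complex.norm_real, Real.norm_eq_abs]
    _ ≤ A * (‖w‖ ^ 2) ^ (p / 2 - 1) * ‖w‖ ^ 2 := by gcongr; exact hf _ (by positivity)
    _ = A * ‖w‖ ^ p := by rw [mul_assoc, sq_rpow_mul_pow hw]; ring_nf

theorem hasDerivAt_ofReal_comp_normSq_mul_sq (hf : ∀ x, 0 < x → HasDerivAt f (f' x) x)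
    {g : ℝ → ℂ} {g' : ℂ} {t : ℝ} (hg : HasDerivAt g g' t) (hgt : g t ≠ 0) :
    HasDerivAt (fun t => (f (‖g t‖ ^ 2) : ℂ) * g t ^ 2)
      (((f' (‖g t‖ ^ 2) * (2 * inner ℝ (g t) g') : ℝ) : ℂ) * g t ^ 2
        + (f (‖g t‖ ^ 2) : ℂ) * (2 * g t * g')) t := by
  have hfg := (hf _ (by positivity)).comp t hg.norm_sq
  refine (hfg.ofReal_comp.mul (hg.pow 2)).congr_deriv ?_
  simp only [Function.comp_apply, Pi.pow_apply]
  push_cast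
  ring

theorem norm_deriv_ofReal_normSq_mul_sq_le (hf : ∀ x, 0 ≤ x → |f x| ≤ A * x ^ (p / 2 - 1))
    (hf' : ∀ x, 0 < x → |f' x| ≤ B * x ^ (p / 2 - 2)) {z : ℂ} (hz : z ≠ 0) (v : ℂ) :
    ‖((f' (‖z‖ ^ 2) * (2 * inner ℝ z v) : ℝ) : ℂ) * z ^ 2 + (f (‖z‖ ^ 2) : ℂ) * (2 * z * v)‖
      ≤ 2 * (A + B) * ‖z‖ ^ (p - 1) * ‖v‖ := by
  have hz := norm_pos_iff.2 hz
  have hinner : |2 * inner ℝ z v| ≤ 2 * ‖z‖ * ‖v‖ := by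
    rw [abs_mul, abs_two, mul_assoc]; gcongr; exact abs_real_inner_le_norm z v
  calc _ ≤ |f' (‖z‖ ^ 2)| * |2 * inner ℝ z v| * ‖z‖ ^ 2 + |f (‖z‖ ^ 2)| * (2 * ‖z‖ * ‖v‖) := by
        refine (norm_add_le _ _).trans_eq ?_
        simp only [norm_mul, norm_pow, Complex.norm_real, Real.norm_eq_abs, Complex.norm_two,
          abs_mul]
    _ ≤ B * (‖z‖ ^ 2) ^ (p / 2 - 2) * (2 * ‖z‖ * ‖v‖) * ‖z‖ ^ 2
          + A * (‖z‖ ^ 2) ^ (p / 2 - 1) * (2 * ‖z‖ * ‖v‖) := by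
        have hf'z := hf' (‖z‖ ^ 2) (by positivity)
        have hfz := hf (‖z‖ ^ 2) (by positivity)
        have hf'z_nonneg := (abs_nonneg _).trans hf'z
        gcongr
    _ = 2 * (B * ((‖z‖ ^ 2) ^ (p / 2 - 2) * ‖z‖ ^ 3) + A * ((‖z‖ ^ 2) ^ (p / 2 - 1) * ‖z‖ ^ 1))
          * ‖v‖ := by ring
    _ = 2 * (A + B) * ‖z‖ ^ (p - 1) * ‖v‖ := by
        rw [sq_rpow_mul_pow hz, sq_rpow_mul_pow hz]; ring_nf

theorem norm_ofReal_normSq_mul_sq_sub_le_of_le_two_mul (hp : 1 ≤ p)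
    (hf : ∀ x, 0 ≤ x → |f x| ≤ A * x ^ (p / 2 - 1))
    {w v : ℂ} (hwv : ‖w‖ ≤ 2 * ‖v‖) :
    ‖(f (‖w + v‖ ^ 2) : ℂ) * (w + v) ^ 2 - (f (‖w‖ ^ 2) : ℂ) * w ^ 2‖
      ≤ 2 * A * (3 * ‖v‖) ^ p := by
  have hA := nonneg_of_abs_le_mul_rpow fun x hx => hf x hx.le
  have hwv' : ‖w + v‖ ≤ 3 * ‖v‖ := by linarith [norm_add_le w v]
  calc _ ≤ A * ‖w + v‖ ^ p + A * ‖w‖ ^ p :=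
        (norm_sub_le _ _).trans (add_le_add (norm_ofReal_normSq_mul_sq_le hp hf _)
          (norm_ofReal_normSq_mul_sq_le hp hf _))
    _ ≤ A * (3 * ‖v‖) ^ p + A * (3 * ‖v‖) ^ p := by
        gcongr
        linarith [norm_nonneg v]
    _ = 2 * A * (3 * ‖v‖) ^ p := by ring

theorem norm_ofReal_normSq_mul_sq_sub_le_of_two_mul_lt (hp : 1 ≤ p)
    (hf : ∀ x, 0 ≤ x → |f x| ≤ A * x ^ (p / 2 - 1)) (hfd : ∀ x, 0 < x → HasDerivAt f (f' x) x)
    (hf' : ∀ x, 0 < x → |f' x| ≤ B * x ^ (p / 2 - 2)) {w v : ℂ} (hvw : 2 * ‖v‖ < ‖w‖) :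
    ‖(f (‖w + v‖ ^ 2) : ℂ) * (w + v) ^ 2 - (f (‖w‖ ^ 2) : ℂ) * w ^ 2‖
      ≤ 2 * (A + B) * (3 * ‖w‖) ^ (p - 1) * ‖v‖ := by
  have hA := nonneg_of_abs_le_mul_rpow fun x hx => hf x hx.le
  have hB := nonneg_of_abs_le_mul_rpow hf'
  have hpath : ∀ t ∈ Set.Icc (0 : ℝ) 1, 0 < ‖w + t • v‖ ∧ ‖w + t • v‖ ≤ 3 * ‖w‖ := by
    intro t ⟨ht0, ht1⟩
    have htv : ‖t • v‖ ≤ ‖v‖ := by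
      rw [norm_smul, Real.norm_of_nonneg ht0]; exact mul_le_of_le_one_left (norm_nonneg v) ht1
    constructor
    · have := norm_sub_norm_le w (-(t • v))
      rw [sub_neg_eq_add, norm_neg] at this
      linarith [norm_nonneg v]
    · linarith [norm_add_le w (t • v), norm_nonneg v]
  have hg : ∀ t : ℝ, HasDerivAt (fun t : ℝ => w + t • v) v t := fun t => by
    simpa using ((hasDerivAt_id t).smul_const v).const_add w
  have hderiv : ∀ t ∈ Set.Icc (0 : ℝ) 1, HasDerivAt
      (fun t : ℝ => (f (‖w + t • v‖ ^ 2) : ℂ) * (w + t • v) ^ 2)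
      (((f' (‖w + t • v‖ ^ 2) * (2 * inner ℝ (w + t • v) v) : ℝ) : ℂ) * (w + t • v) ^ 2
        + (f (‖w + t • v‖ ^ 2) : ℂ) * (2 * (w + t • v) * v)) t := fun t ht =>
    hasDerivAt_ofReal_comp_normSq_mul_sq hfd (hg t) (norm_pos_iff.1 (hpath t ht).1)
  have hbound : ∀ t ∈ Set.Ico (0 : ℝ) 1,
      ‖((f' (‖w + t • v‖ ^ 2) * (2 * inner ℝ (w + t • v) v) : ℝ) : ℂ) * (w + t • v) ^ 2
        + (f (‖w + t • v‖ ^ 2) : ℂ) * (2 * (w + t • v) * v)‖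
      ≤ 2 * (A + B) * (3 * ‖w‖) ^ (p - 1) * ‖v‖ := fun t ht => by
    obtain ⟨hpos, hle⟩ := hpath t (Set.Ico_subset_Icc_self ht)
    refine (norm_deriv_ofReal_normSq_mul_sq_le hf hf' (norm_pos_iff.1 hpos) v).trans ?_
    gcongr
  simpa using norm_image_sub_le_of_norm_deriv_le_segment_01'
    (fun t ht => (hderiv t ht).hasDerivWithinAt) hbound

theorem norm_ofReal_normSq_mul_sq_sub_le (hp : 1 ≤ p)
    (hf : ∀ x, 0 ≤ x → |f x| ≤ A * x ^ (p / 2 - 1)) (hfd : ∀ x, 0 < x → HasDerivAt f (f' x) x)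
    (hf' : ∀ x, 0 < x → |f' x| ≤ B * x ^ (p / 2 - 2)) (w v : ℂ) :
    ‖(f (‖w + v‖ ^ 2) : ℂ) * (w + v) ^ 2 - (f (‖w‖ ^ 2) : ℂ) * w ^ 2‖
      ≤ 2 * (A + B) * 3 ^ p * (‖w‖ ^ (p - 1) * ‖v‖ + ‖v‖ ^ p) := by
  have hA := nonneg_of_abs_le_mul_rpow fun x hx => hf x hx.le
  have hB := nonneg_of_abs_le_mul_rpow hf'
  have h3 : (3 : ℝ) ^ (p - 1) ≤ 3 ^ p := rpow_le_rpow_of_exponent_le (by norm_num) (by linarith)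
  rcases le_or_gt ‖w‖ (2 * ‖v‖) with hwv | hvw
  · calc _ ≤ 2 * A * (3 * ‖v‖) ^ p :=
          norm_ofReal_normSq_mul_sq_sub_le_of_le_two_mul hp hf hwv
      _ = 2 * A * 3 ^ p * ‖v‖ ^ p := by rw [mul_rpow (by norm_num) (norm_nonneg v)]; ring
      _ ≤ 2 * (A + B) * 3 ^ p * (‖w‖ ^ (p - 1) * ‖v‖ + ‖v‖ ^ p) := by
        gcongr
        · linarith
        · exact le_add_of_nonneg_left (by positivity)
  · calc _ ≤ 2 * (A + B) * (3 * ‖w‖) ^ (p - 1) * ‖v‖ :=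
          norm_ofReal_normSq_mul_sq_sub_le_of_two_mul_lt hp hf hfd hf' hvw
      _ = 2 * (A + B) * 3 ^ (p - 1) * (‖w‖ ^ (p - 1) * ‖v‖) := by
        rw [mul_rpow (by norm_num) (norm_nonneg w)]; ring
      _ ≤ 2 * (A + B) * 3 ^ p * (‖w‖ ^ (p - 1) * ‖v‖ + ‖v‖ ^ p) := by
        gcongr
        exact le_add_of_nonneg_right (by positivity)

end NormSqProfile

theorem stmt_8_general (p q : ℝ) (hp : 10 / 3 < p)
    (F F' : ℝ → ℝ)
    (hF : ∀ x : ℝ, 0 ≤ x → F x = x ^ (p / 2) / (1 + x ^ ((p - q) / 2)))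
    (hF' : ∀ x : ℝ, 0 < x → HasDerivAt F (F' x) x)
    (hF'0 : F' 0 = 0) :
    ∀ R₀ : ℝ, 0 < R₀ → ∃ C : ℝ, 0 < C ∧
      ∀ R : ℝ, 0 ≤ R → R ≤ R₀ → ∀ v : ℂ,
        ‖((F' (‖(R : ℂ) + v‖ ^ 2) : ℂ) * ((R : ℂ) + v) ^ 2
            - (F' (R ^ 2) : ℂ) * (R : ℂ) ^ 2)‖
          ≤ C * (R ^ (p - 1) * ‖v‖ + ‖v‖ ^ p) := by
  intro _ _
  set a := p / 2
  set s := (p - q) / 2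
  refine ⟨2 * ((|a| + |s|) + (|a - 1| * (|a| + |s|) + |s| * (|a| + 3 * |s|))) * 3 ^ p,
    by positivity, fun R hR _ v => ?_⟩
  have h := norm_ofReal_normSq_mul_sq_sub_le (f' := deriv F') (by linarith)
    (fun x hx => abs_le_rpow_of_saturated hF hF' hF'0 hx)
    (fun x hx => (hasDerivAt_deriv_of_saturated hF hF' hx).differentiableAt.hasDerivAt)
    (fun x hx => abs_deriv_le_rpow_of_saturated hF hF' hx) (R : ℂ) v
  simpa [abs_of_nonneg hR] using h

theorem stmt_8 (p q : ℝ) (hp : 10 / 3 < p) (hq : 0 < q) (hqp : q < p)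
    (F F' : ℝ → ℝ)
    (hF : ∀ x : ℝ, 0 ≤ x → F x = x ^ (p / 2) / (1 + x ^ ((p - q) / 2)))
    (hF' : ∀ x : ℝ, 0 < x → HasDerivAt F (F' x) x)
    (hF'0 : F' 0 = 0) :
    ∀ R₀ : ℝ, 0 < R₀ → ∃ C : ℝ, 0 < C ∧
      ∀ R : ℝ, 0 ≤ R → R ≤ R₀ → ∀ v : ℂ,
        ‖((F' (‖(R : ℂ) + v‖ ^ 2) : ℂ) * ((R : ℂ) + v) ^ 2
            - (F' (R ^ 2) : ℂ) * (R : ℂ) ^ 2)‖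
          ≤ C * (R ^ (p - 1) * ‖v‖ + ‖v‖ ^ p) :=
  stmt_8_general p q hp F F' hF hF' hF'0
end

section
/- Let p > 10/3, p > q > 0, F(x) = x^{p/2}/(1 + x^{(p−q)/2}) for x ≥ 0 with F(0)=0, and F' its derivative (extended by F'(0)=0). For a ∈ ℂ define G_a(w) = F(|a+w|²)(a+w) − F(|a|²)a − [ F(|a|²) + F'(|a|²)|a|² ]·w − F'(|a|²)a²·conj(w). Then for every A > 0 there is a constant C > 0 such that for all a ∈ ℂ with |a| ≤ A and all w ∈ ℂ with |w| ≤ 1: | G_a(w) | ≤ C·|w|². -/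
/-!
With `s = |a + w|²` and `t = |a|²` one has the algebraic identity
`G_a(w) = (F s - F t - F' t (s - t)) (a + w) + F' t (2 a |w|² + ā w² + |w|² w)`,
so everything reduces to bounding the Taylor remainder of `F` at `t` by `K (|a + w| - |a|)²`.

On `(0, ∞)`, `F` and its first two derivatives are of the form `x ^ β P((1 + x ^ r)⁻¹)` with `P`
a polynomial, and `(1 + x ^ r)⁻¹ ∈ [0, 1]`; since `p / 2 ≥ 1` this gives `|F x| ≲ x`,
`|F' x| ≲ 1` and `x |F'' x| ≲ 1` on bounded sets. If `|a + w|` and `|a|` are within a factor `2`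
of each other, the second-order Taylor estimate with `|F''| ≲ 1 / min(s, t)` applies; otherwise
`||a + w| - |a||` is comparable to `max(|a + w|, |a|)` and the three terms of the remainder are
bounded separately.
-/

open Real Set Polynomial ComplexConjugate

lemma abs_sub_sub_mul_le_of_abs_deriv2_le {f f' f'' : ℝ → ℝ} {s t C : ℝ}
    (hf : ∀ u ∈ uIcc s t, HasDerivAt f (f' u) u)
    (hf' : ∀ u ∈ uIcc s t, HasDerivAt f' (f'' u) u)
    (hC : ∀ u ∈ uIcc s t, |f'' u| ≤ C) :
    |f s - f t - f' t * (s - t)| ≤ C * (s - t) ^ 2 := by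
  have ht : t ∈ uIcc s t := right_mem_uIcc
  have hs : s ∈ uIcc s t := left_mem_uIcc
  have hC0 : 0 ≤ C := (abs_nonneg _).trans (hC t ht)
  have hf'_lip : ∀ u ∈ uIcc s t, ‖f' u - f' t‖ ≤ C * |s - t| := fun u hu =>
    ((convex_uIcc s t).norm_image_sub_le_of_norm_hasDerivWithin_le
      (fun v hv => (hf' v hv).hasDerivWithinAt) hC ht hu).trans
      (mul_le_mul_of_nonneg_left (abs_sub_left_of_mem_uIcc (uIcc_comm s t ▸ hu)) hC0)
  have hmvt := (convex_uIcc s t).norm_image_sub_le_of_norm_hasDerivWithin_le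
    (f := fun y => f y - f' t * y)
    (fun u hu => ((hf u hu).sub ((hasDerivAt_id u).const_mul (f' t))).hasDerivWithinAt)
    (by simpa using hf'_lip) ht hs
  simp only [Real.norm_eq_abs] at hmvt
  calc |f s - f t - f' t * (s - t)| = |f s - f' t * s - (f t - f' t * t)| := by ring_nf
    _ ≤ C * |s - t| * |s - t| := hmvt
    _ = C * (s - t) ^ 2 := by rw [mul_assoc, ← sq, sq_abs]

lemma abs_sub_sub_mul_sq_le_sq_sub {f f' f'' : ℝ → ℝ} {B M L : ℝ}
    (hf : ∀ x ∈ Ioc 0 B, HasDerivAt f (f' x) x)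
    (hf' : ∀ x ∈ Ioc 0 B, HasDerivAt f' (f'' x) x)
    (hfM : ∀ x ∈ Icc 0 B, |f x| ≤ M * x)
    (hf'M : ∀ x ∈ Icc 0 B, |f' x| ≤ M)
    (hf''L : ∀ x ∈ Ioc 0 B, x * |f'' x| ≤ L)
    {σ τ : ℝ} (hσ : 0 ≤ σ) (hτ : 0 ≤ τ) (hσB : σ ^ 2 ≤ B) (hτB : τ ^ 2 ≤ B) :
    |f (σ ^ 2) - f (τ ^ 2) - f' (τ ^ 2) * (σ ^ 2 - τ ^ 2)|
      ≤ max (12 * M) (9 * L) * (σ - τ) ^ 2 := by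
  have hσ2 : σ ^ 2 ∈ Icc 0 B := ⟨sq_nonneg σ, hσB⟩
  have hτ2 : τ ^ 2 ∈ Icc 0 B := ⟨sq_nonneg τ, hτB⟩
  by_cases hcomp : τ < 2 * σ ∧ σ < 2 * τ
  · obtain ⟨h₁, h₂⟩ := hcomp
    have hσ0 : 0 < σ := by linarith
    have hτ0 : 0 < τ := by linarith
    set μ := min (σ ^ 2) (τ ^ 2)
    have hμ : 0 < μ := lt_min (by positivity) (by positivity)
    have hsub : uIcc (σ ^ 2) (τ ^ 2) ⊆ Ioc 0 B := fun u hu =>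
      ⟨hμ.trans_le hu.1, hu.2.trans (max_le hσB hτB)⟩
    have hL0 : 0 ≤ L := (by positivity : 0 ≤ τ ^ 2 * |f'' (τ ^ 2)|).trans
      (hf''L _ (hsub right_mem_uIcc))
    have hL : ∀ u ∈ uIcc (σ ^ 2) (τ ^ 2), |f'' u| ≤ L / μ := fun u hu => by
      have hu0 : 0 < u := (hsub hu).1
      calc |f'' u| ≤ L / u := by rw [le_div_iff₀ hu0, mul_comm]; exact hf''L u (hsub hu)
        _ ≤ L / μ := div_le_div_of_nonneg_left hL0 hμ hu.1
    have hsum : (σ + τ) ^ 2 ≤ 9 * μ := by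
      rw [mul_min_of_nonneg _ _ (by norm_num)]
      exact le_min (by nlinarith) (by nlinarith)
    calc _ ≤ L / μ * (σ ^ 2 - τ ^ 2) ^ 2 :=
          abs_sub_sub_mul_le_of_abs_deriv2_le (fun u hu => hf u (hsub hu))
            (fun u hu => hf' u (hsub hu)) hL
      _ = L / μ * (σ + τ) ^ 2 * (σ - τ) ^ 2 := by ring
      _ ≤ L / μ * (9 * μ) * (σ - τ) ^ 2 := by gcongr
      _ = 9 * L * (σ - τ) ^ 2 := by field_simp
      _ ≤ _ := by gcongr; exact le_max_right _ _
  · have hmax : max σ τ ≤ 2 * |σ - τ| := by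
      have := le_abs_self (σ - τ); have := neg_abs_le (σ - τ); rw [not_and_or] at hcomp
      rcases hcomp with h | h <;> exact max_le (by linarith) (by linarith)
    have hσ4 : σ ^ 2 ≤ 4 * (σ - τ) ^ 2 := by nlinarith [le_max_left σ τ, sq_abs (σ - τ)]
    have hτ4 : τ ^ 2 ≤ 4 * (σ - τ) ^ 2 := by nlinarith [le_max_right σ τ, sq_abs (σ - τ)]
    have hd4 : |σ ^ 2 - τ ^ 2| ≤ 4 * (σ - τ) ^ 2 :=
      abs_sub_le_of_nonneg_of_le (sq_nonneg σ) hσ4 (sq_nonneg τ) hτ4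
    have hM0 : 0 ≤ M := (abs_nonneg _).trans (hf'M _ hτ2)
    calc _ ≤ |f (σ ^ 2)| + |f (τ ^ 2)| + |f' (τ ^ 2)| * |σ ^ 2 - τ ^ 2| := by
          rw [← abs_mul]
          linarith [abs_sub (f (σ ^ 2) - f (τ ^ 2)) (f' (τ ^ 2) * (σ ^ 2 - τ ^ 2)),
            abs_sub (f (σ ^ 2)) (f (τ ^ 2))]
      _ ≤ M * σ ^ 2 + M * τ ^ 2 + M * (4 * (σ - τ) ^ 2) := by
          gcongr
          · exact hfM _ hσ2
          · exact hfM _ hτ2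
          · exact hf'M _ hτ2
      _ ≤ 12 * M * (σ - τ) ^ 2 := by nlinarith
      _ ≤ _ := by gcongr; exact le_max_left _ _

lemma rpow_le_rpow_sub_one_mul {x B α : ℝ} (hx : 0 ≤ x) (hxB : x ≤ B) (hα : 1 ≤ α) :
    x ^ α ≤ B ^ (α - 1) * x := by
  calc x ^ α = x ^ (α - 1) * x := by
        rw [← rpow_add_one' hx (by linarith), sub_add_cancel]
    _ ≤ B ^ (α - 1) * x := by gcongr

noncomputable def rpowPoly (β r : ℝ) (P : ℝ[X]) (x : ℝ) : ℝ := x ^ β * P.eval (1 + x ^ r)⁻¹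

/-- With `e = (1 + x ^ r)⁻¹` one has `x * de/dx = -r e (1 - e)`. -/
noncomputable def rpowPolyDeriv (β r : ℝ) (P : ℝ[X]) : ℝ[X] :=
  C β * P - C r * (X * (1 - X) * derivative P)

lemma hasDerivAt_rpowPoly (β r : ℝ) (P : ℝ[X]) {x : ℝ} (hx : 0 < x) :
    HasDerivAt (rpowPoly β r P) (rpowPoly (β - 1) r (rpowPolyDeriv β r P) x) x := by
  have hxr : 0 < x ^ r := rpow_pos_of_pos hx r
  have hden : 1 + x ^ r ≠ 0 := by positivity
  have hinv : HasDerivAt (fun y : ℝ => (1 + y ^ r)⁻¹) (-(r * x ^ (r - 1)) / (1 + x ^ r) ^ 2) x :=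
    ((hasDerivAt_rpow_const (Or.inl hx.ne')).const_add 1).inv hden
  refine ((hasDerivAt_rpow_const (p := β) (Or.inl hx.ne')).mul
    ((P.hasDerivAt _).comp x hinv)).congr_deriv ?_
  simp only [rpowPoly, rpowPolyDeriv, Function.comp_apply, eval_sub, eval_mul, eval_C, eval_X,
    eval_one]
  rw [rpow_sub_one hx.ne', rpow_sub_one hx.ne']
  field_simp
  ring

lemma exists_abs_rpowPoly_le (β r : ℝ) (P : ℝ[X]) :
    ∃ c, 0 ≤ c ∧ ∀ x, 0 ≤ x → |rpowPoly β r P x| ≤ c * x ^ β := by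
  obtain ⟨c, hc⟩ := isCompact_Icc.exists_bound_of_continuousOn
    (P.continuous.continuousOn (s := Icc (0 : ℝ) 1))
  refine ⟨c, (norm_nonneg _).trans (hc 0 ⟨le_rfl, zero_le_one⟩), fun x hx => ?_⟩
  have hxr : 0 ≤ x ^ r := rpow_nonneg hx r
  have he : (1 + x ^ r)⁻¹ ∈ Icc (0 : ℝ) 1 := ⟨by positivity, inv_le_one_of_one_le₀ (by linarith)⟩
  rw [rpowPoly, abs_mul, abs_of_nonneg (rpow_nonneg hx β), mul_comm]
  exact mul_le_mul_of_nonneg_right (hc _ he) (rpow_nonneg hx β)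

namespace SaturatedNonlinearity

variable {α r : ℝ} {F F' : ℝ → ℝ}

lemma eq_rpowPoly (hF : ∀ x : ℝ, 0 ≤ x → F x = x ^ α / (1 + x ^ r)) {x : ℝ} (hx : 0 ≤ x) :
    F x = rpowPoly α r X x := by
  simp [hF x hx, rpowPoly, div_eq_mul_inv]

lemma eventuallyEq_rpowPoly (hF : ∀ x : ℝ, 0 ≤ x → F x = x ^ α / (1 + x ^ r)) {x : ℝ}
    (hx : 0 < x) : F =ᶠ[nhds x] rpowPoly α r X := by
  filter_upwards [Ioi_mem_nhds hx] with y hy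
  exact eq_rpowPoly hF hy.le

lemma deriv_eq_rpowPoly (hF : ∀ x : ℝ, 0 ≤ x → F x = x ^ α / (1 + x ^ r))
    (hF' : ∀ x : ℝ, 0 < x → HasDerivAt F (F' x) x) {x : ℝ} (hx : 0 < x) :
    F' x = rpowPoly (α - 1) r (rpowPolyDeriv α r X) x :=
  (hF' x hx).unique ((hasDerivAt_rpowPoly α r X hx).congr_of_eventuallyEq
    (eventuallyEq_rpowPoly hF hx))

lemma hasDerivAt_deriv (hF : ∀ x : ℝ, 0 ≤ x → F x = x ^ α / (1 + x ^ r))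
    (hF' : ∀ x : ℝ, 0 < x → HasDerivAt F (F' x) x) {x : ℝ} (hx : 0 < x) :
    HasDerivAt F'
      (rpowPoly (α - 1 - 1) r (rpowPolyDeriv (α - 1) r (rpowPolyDeriv α r X)) x) x := by
  refine (hasDerivAt_rpowPoly _ r _ hx).congr_of_eventuallyEq ?_
  filter_upwards [Ioi_mem_nhds hx] with y hy
  exact deriv_eq_rpowPoly hF hF' hy

lemma exists_abs_deriv_le (hα : 1 ≤ α) (hF : ∀ x : ℝ, 0 ≤ x → F x = x ^ α / (1 + x ^ r))
    (hF' : ∀ x : ℝ, 0 < x → HasDerivAt F (F' x) x) (hF'0 : F' 0 = 0) {B : ℝ} (hB : 0 ≤ B) :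
    ∃ M, 0 ≤ M ∧ ∀ x ∈ Icc 0 B, |F' x| ≤ M := by
  obtain ⟨c, hc0, hc⟩ := exists_abs_rpowPoly_le (α - 1) r (rpowPolyDeriv α r X)
  have hM0 : 0 ≤ c * B ^ (α - 1) := by positivity
  refine ⟨c * B ^ (α - 1), hM0, fun x hx => ?_⟩
  rcases hx.1.eq_or_lt with rfl | hx0
  · simpa [hF'0] using hM0
  · rw [deriv_eq_rpowPoly hF hF' hx0]
    exact (hc x hx.1).trans
      (mul_le_mul_of_nonneg_left (rpow_le_rpow hx.1 hx.2 (by linarith)) hc0)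

lemma exists_abs_sub_sub_mul_sq_le (hα : 1 ≤ α)
    (hF : ∀ x : ℝ, 0 ≤ x → F x = x ^ α / (1 + x ^ r))
    (hF' : ∀ x : ℝ, 0 < x → HasDerivAt F (F' x) x) (hF'0 : F' 0 = 0) {B : ℝ} (hB : 0 ≤ B) :
    ∃ K, 0 ≤ K ∧ ∀ σ τ : ℝ, 0 ≤ σ → 0 ≤ τ → σ ^ 2 ≤ B → τ ^ 2 ≤ B →
      |F (σ ^ 2) - F (τ ^ 2) - F' (τ ^ 2) * (σ ^ 2 - τ ^ 2)| ≤ K * (σ - τ) ^ 2 := by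
  obtain ⟨M', hM'0, hM'⟩ := exists_abs_deriv_le hα hF hF' hF'0 hB
  obtain ⟨c₀, hc₀0, hc₀⟩ := exists_abs_rpowPoly_le α r X
  obtain ⟨c₂, hc₂0, hc₂⟩ :=
    exists_abs_rpowPoly_le (α - 1 - 1) r (rpowPolyDeriv (α - 1) r (rpowPolyDeriv α r X))
  set M := max (c₀ * B ^ (α - 1)) M'
  set L := c₂ * B ^ (α - 1)
  have hfM : ∀ x ∈ Icc 0 B, |F x| ≤ M * x := fun x hx => by
    calc |F x| ≤ c₀ * x ^ α := eq_rpowPoly hF hx.1 ▸ hc₀ x hx.1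
      _ ≤ c₀ * (B ^ (α - 1) * x) := by gcongr; exact rpow_le_rpow_sub_one_mul hx.1 hx.2 hα
      _ ≤ M * x := by rw [← mul_assoc]; gcongr; exacts [hx.1, le_max_left _ _]
  have hf'M : ∀ x ∈ Icc 0 B, |F' x| ≤ M := fun x hx => (hM' x hx).trans (le_max_right _ _)
  have hf''L : ∀ x ∈ Ioc 0 B, x * |rpowPoly (α - 1 - 1) r
      (rpowPolyDeriv (α - 1) r (rpowPolyDeriv α r X)) x| ≤ L := fun x hx => by
    have hx0 := hx.1.ne'
    calc _ ≤ x * (c₂ * x ^ (α - 1 - 1)) := mul_le_mul_of_nonneg_left (hc₂ x hx.1.le) hx.1.le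
      _ = c₂ * x ^ (α - 1) := by rw [rpow_sub_one hx0]; field_simp
      _ ≤ L := mul_le_mul_of_nonneg_left (rpow_le_rpow hx.1.le hx.2 (by linarith)) hc₂0
  refine ⟨max (12 * M) (9 * L), le_max_of_le_right (by positivity), fun σ τ hσ hτ hσB hτB => ?_⟩
  exact abs_sub_sub_mul_sq_le_sq_sub (fun x hx => hF' x hx.1)
    (fun x hx => hasDerivAt_deriv hF hF' hx.1) hfM hf'M hf''L hσ hτ hσB hτB

end SaturatedNonlinearity

noncomputable def quadraticPart (a w : ℂ) : ℂ := 2 * a * ‖w‖ ^ 2 + conj a * w ^ 2 + ‖w‖ ^ 2 * w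

lemma sub_sub_sub_eq_remainder_add_quadraticPart (a w : ℂ) (y₁ y₀ d : ℝ) :
    (y₁ : ℂ) * (a + w) - (y₀ : ℂ) * a - ((y₀ + d * ‖a‖ ^ 2 : ℝ) : ℂ) * w
        - (d : ℂ) * a ^ 2 * conj w
      = ((y₁ - y₀ - d * (‖a + w‖ ^ 2 - ‖a‖ ^ 2) : ℝ) : ℂ) * (a + w)
        + d * quadraticPart a w := by
  push_cast
  simp only [quadraticPart, ← Complex.mul_conj', map_add]
  ring

lemma norm_quadraticPart_le (a w : ℂ) :
    ‖quadraticPart a w‖ ≤ (3 * ‖a‖ + ‖w‖) * ‖w‖ ^ 2 := by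
  refine norm_add₃_le.trans (le_of_eq ?_)
  simp only [norm_mul, norm_pow, Complex.norm_conj, Complex.norm_real, Complex.norm_ofNat,
    Real.norm_eq_abs, abs_norm]
  ring

theorem stmt_10_general (p q : ℝ) (hp : 10 / 3 < p)
    (F F' : ℝ → ℝ)
    (hF : ∀ x : ℝ, 0 ≤ x → F x = x ^ (p / 2) / (1 + x ^ ((p - q) / 2)))
    (hF' : ∀ x : ℝ, 0 < x → HasDerivAt F (F' x) x)
    (hF'0 : F' 0 = 0)
    (Ga : ℂ → ℂ → ℂ)
    (hGa : ∀ a w : ℂ, Ga a w =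
      (F (‖a + w‖ ^ 2) : ℂ) * (a + w)
        - (F (‖a‖ ^ 2) : ℂ) * a
        - ((F (‖a‖ ^ 2) + F' (‖a‖ ^ 2) * ‖a‖ ^ 2 : ℝ) : ℂ) * w
        - ((F' (‖a‖ ^ 2) : ℝ) : ℂ) * a ^ 2 * (starRingEnd ℂ) w) :
    ∀ A : ℝ, 0 < A → ∃ C : ℝ, 0 < C ∧
      ∀ a : ℂ, ‖a‖ ≤ A → ∀ w : ℂ, ‖w‖ ≤ 1 →
        ‖Ga a w‖ ≤ C * ‖w‖ ^ 2 := by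
  intro A hA
  have hα : 1 ≤ p / 2 := by linarith
  have hB : 0 ≤ (A + 1) ^ 2 := by positivity
  obtain ⟨M, hM0, hM⟩ := SaturatedNonlinearity.exists_abs_deriv_le hα hF hF' hF'0 hB
  obtain ⟨K, hK0, hK⟩ := SaturatedNonlinearity.exists_abs_sub_sub_mul_sq_le hα hF hF' hF'0 hB
  refine ⟨K * (A + 1) + M * (3 * A + 1) + 1, by positivity, fun a ha w hw => ?_⟩
  have haw : ‖a + w‖ ≤ A + 1 := (norm_add_le a w).trans (add_le_add ha hw)
  have hτ : ‖a‖ ^ 2 ≤ (A + 1) ^ 2 := by gcongr; linarith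
  have hdist : (‖a + w‖ - ‖a‖) ^ 2 ≤ ‖w‖ ^ 2 := by
    rw [← sq_abs]
    gcongr
    simpa using abs_norm_sub_norm_le (a + w) a
  rw [hGa, sub_sub_sub_eq_remainder_add_quadraticPart]
  calc _ ≤ |F (‖a + w‖ ^ 2) - F (‖a‖ ^ 2) - F' (‖a‖ ^ 2) * (‖a + w‖ ^ 2 - ‖a‖ ^ 2)| * ‖a + w‖
        + |F' (‖a‖ ^ 2)| * ‖quadraticPart a w‖ := by
        refine (norm_add_le _ _).trans (le_of_eq ?_)
        simp only [norm_mul, Complex.norm_real, Real.norm_eq_abs]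
    _ ≤ K * ‖w‖ ^ 2 * (A + 1) + M * ((3 * A + 1) * ‖w‖ ^ 2) := by
        gcongr
        · exact (hK _ _ (norm_nonneg _) (norm_nonneg _) (by gcongr) hτ).trans
            (mul_le_mul_of_nonneg_left hdist hK0)
        · exact hM _ ⟨sq_nonneg _, hτ⟩
        · exact (norm_quadraticPart_le a w).trans (by gcongr)
    _ ≤ (K * (A + 1) + M * (3 * A + 1) + 1) * ‖w‖ ^ 2 := by nlinarith [sq_nonneg ‖w‖]

theorem stmt_10 (p q : ℝ) (hp : 10 / 3 < p) (hq : 0 < q) (hqp : q < p)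
    (F F' : ℝ → ℝ)
    (hF : ∀ x : ℝ, 0 ≤ x → F x = x ^ (p / 2) / (1 + x ^ ((p - q) / 2)))
    (hF' : ∀ x : ℝ, 0 < x → HasDerivAt F (F' x) x)
    (hF'0 : F' 0 = 0)
    (Ga : ℂ → ℂ → ℂ)
    (hGa : ∀ a w : ℂ, Ga a w =
      (F (‖a + w‖ ^ 2) : ℂ) * (a + w)
        - (F (‖a‖ ^ 2) : ℂ) * a
        - ((F (‖a‖ ^ 2) + F' (‖a‖ ^ 2) * ‖a‖ ^ 2 : ℝ) : ℂ) * w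
        - ((F' (‖a‖ ^ 2) : ℝ) : ℂ) * a ^ 2 * (starRingEnd ℂ) w) :
    ∀ A : ℝ, 0 < A → ∃ C : ℝ, 0 < C ∧
      ∀ a : ℂ, ‖a‖ ≤ A → ∀ w : ℂ, ‖w‖ ≤ 1 →
        ‖Ga a w‖ ≤ C * ‖w‖ ^ 2 :=
  stmt_10_general p q hp F F' hF hF' hF'0 Ga hGa
end

section
/- Let p > 10/3, p > q > 0, F(x) = x^{p/2}/(1 + x^{(p−q)/2}) for x ≥ 0 with F(0)=0, and F' its derivative (extended by F'(0)=0). For a ∈ ℂ define G_a(w) = F(|a+w|²)(a+w) − F(|a|²)a − [ F(|a|²) + F'(|a|²)|a|² ]·w − F'(|a|²)a²·conj(w). Then for every A > 0 there is a constant C > 0 such that for all a ∈ ℂ with |a| ≤ A and all w₁, w₂ ∈ ℂ with |w₁| ≤ 1 and |w₂| ≤ 1: | G_a(w₁) − G_a(w₂) | ≤ C·( |w₁| + |w₂| )·| w₁ − w₂ |. -/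
open Real Set Metric Filter Topology
open scoped NNReal ComplexConjugate

/-
Write `Φ z = F (|z|²) z`. Its real derivative is `DΦ z v = (F + x F')(|z|²) v + F'(|z|²) z² v̄`,
and `G_a w = Φ (a + w) - Φ a - DΦ a w`. The mean value inequality for `Φ - DΦ a` on the segment
`[a + w₂, a + w₁]` bounds `|G_a w₁ - G_a w₂|` by `Lip(DΦ) (|w₁| + |w₂|) |w₁ - w₂|`, so it suffices
that `DΦ` be Lipschitz on balls. This reduces to one-variable facts on `[0, X]`: `F` and `x F'` are
Lipschitz and `F'` is bounded. They hold since `F`, `F'` and `x F'` are combinations of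
`x ^ a / (1 + x ^ r) ^ k` with `a ≥ 1` (`a ≥ 0` for `F'`), as `p / 2 ≥ 1`.
-/

theorem LipschitzOnWith.congr {α β : Type*} [PseudoEMetricSpace α] [PseudoEMetricSpace β]
    {f g : α → β} {s : Set α} {K : ℝ≥0} (hf : LipschitzOnWith K f s) (h : EqOn f g s) :
    LipschitzOnWith K g s := fun x hx y hy => by
  rw [← h hx, ← h hy]
  exact hf hx hy

theorem lipschitzOnWith_Icc_of_hasDerivAt_Ioo {f f' : ℝ → ℝ} {a b : ℝ} {C : ℝ≥0} (hab : a < b)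
    (hf : ContinuousOn f (Icc a b)) (hf' : ∀ x ∈ Ioo a b, HasDerivAt f (f' x) x)
    (bound : ∀ x ∈ Ioo a b, |f' x| ≤ C) : LipschitzOnWith C f (Icc a b) := by
  rw [← closure_Ioo hab.ne] at hf ⊢
  refine LipschitzOnWith.closure hf ?_
  refine (convex_Ioo a b).lipschitzOnWith_of_nnnorm_hasDerivWithin_le
    (fun x hx => (hf' x hx).hasDerivWithinAt) fun x hx => ?_
  rw [← NNReal.coe_le_coe, coe_nnnorm, Real.norm_eq_abs]
  exact bound x hx

theorem Convex.norm_sub_sub_fderiv_sub_le {E F : Type*} [NormedAddCommGroup E] [NormedSpace ℝ E]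
    [NormedAddCommGroup F] [NormedSpace ℝ F] {f : E → F} {f' : E → E →L[ℝ] F} {s : Set E}
    {K : ℝ≥0} (hs : Convex ℝ s) (hf : ∀ z ∈ s, HasFDerivAt f (f' z) z)
    (hK : LipschitzOnWith K f' s) {a w₁ w₂ : E} (ha : a ∈ s) (h₁ : a + w₁ ∈ s)
    (h₂ : a + w₂ ∈ s) :
    ‖(f (a + w₁) - f a - f' a w₁) - (f (a + w₂) - f a - f' a w₂)‖
      ≤ K * (‖w₁‖ + ‖w₂‖) * ‖w₁ - w₂‖ := by
  set t := segment ℝ (a + w₂) (a + w₁)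
  have hts : t ⊆ s := hs.segment_subset h₂ h₁
  have htball : t ⊆ closedBall a (‖w₁‖ + ‖w₂‖) :=
    (convex_closedBall _ _).segment_subset
      (by simp [le_add_of_nonneg_left (norm_nonneg w₁)])
      (by simp [le_add_of_nonneg_right (norm_nonneg w₂)])
  have bound : ∀ z ∈ t, ‖f' z - f' a‖ ≤ K * (‖w₁‖ + ‖w₂‖) := fun z hz =>
    calc ‖f' z - f' a‖ ≤ K * ‖z - a‖ := hK.norm_sub_le (hts hz) ha
      _ ≤ K * (‖w₁‖ + ‖w₂‖) := by
        gcongr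
        simpa [dist_eq_norm] using htball hz
  have key := (convex_segment (a + w₂) (a + w₁)).norm_image_sub_le_of_norm_hasFDerivWithin_le'
    (fun z hz => (hf z (hts hz)).hasFDerivWithinAt) bound
    (left_mem_segment ℝ _ _) (right_mem_segment ℝ _ _)
  convert key using 2
  · rw [add_sub_add_left_eq_sub, map_sub]
    abel
  · rw [add_sub_add_left_eq_sub]

section NormSq

variable {E : Type*} [SeminormedAddCommGroup E] (R : ℝ≥0)

theorem lipschitzOnWith_norm_sq_closedBall :
    LipschitzOnWith (2 * R) (fun z : E => ‖z‖ ^ 2) (closedBall 0 R) := by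
  refine LipschitzOnWith.of_dist_le_mul fun z₁ h₁ z₂ h₂ => ?_
  rw [mem_closedBall_zero_iff] at h₁ h₂
  rw [Real.dist_eq, dist_eq_norm, sq_sub_sq, abs_mul, abs_of_nonneg (by positivity)]
  push_cast
  exact mul_le_mul (by linarith) (abs_norm_sub_norm_le z₁ z₂) (abs_nonneg _) (by positivity)

theorem mapsTo_norm_sq_closedBall :
    MapsTo (fun z : E => ‖z‖ ^ 2) (closedBall 0 R) (Icc 0 ((R : ℝ) ^ 2)) := fun z hz =>
  ⟨sq_nonneg _, pow_le_pow_left₀ (norm_nonneg z) (mem_closedBall_zero_iff.1 hz) 2⟩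

end NormSq

-- `F = satPow r (p / 2) 1` on `[0, ∞)`; derivatives and `x`-multiples stay in this family.
noncomputable def satPow (r a : ℝ) (k : ℕ) (x : ℝ) : ℝ := x ^ a / (1 + x ^ r) ^ k

noncomputable def satPowDeriv (r a : ℝ) (k : ℕ) (x : ℝ) : ℝ :=
  a * satPow r (a - 1) (k + 1) x + (a - k * r) * satPow r (a + r - 1) (k + 1) x

namespace satPow

variable {r a : ℝ} {k : ℕ} {x : ℝ}

theorem apply_zero (ha : a ≠ 0) : satPow r a k 0 = 0 := by
  simp [satPow, zero_rpow ha]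

theorem abs_le_rpow (hx : 0 ≤ x) : |satPow r a k x| ≤ x ^ a := by
  have hx' : 0 ≤ x ^ a := rpow_nonneg hx a
  rw [satPow, abs_of_nonneg (by positivity)]
  exact div_le_self hx' (one_le_pow₀ (le_add_of_nonneg_right (rpow_nonneg hx r)))

theorem abs_le_rpow_of_le {X : ℝ} (ha : 0 ≤ a) (hx : 0 ≤ x) (hxX : x ≤ X) :
    |satPow r a k x| ≤ X ^ a :=
  (abs_le_rpow hx).trans (rpow_le_rpow hx hxX ha)

theorem arg_mul (hx : 0 < x) : x * satPow r a k x = satPow r (a + 1) k x := by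
  rw [satPow, satPow, rpow_add_one hx.ne', mul_div_assoc', mul_comm x]

theorem hasDerivAt (hx : 0 < x) : HasDerivAt (satPow r a k) (satPowDeriv r a k x) x := by
  have hden : 0 < 1 + x ^ r := by positivity
  have hnum := hasDerivAt_rpow_const (p := a) (Or.inl hx.ne')
  have hpow := ((hasDerivAt_rpow_const (p := r) (Or.inl hx.ne')).const_add 1).pow k
  refine (hnum.div hpow (pow_ne_zero k hden.ne')).congr_deriv ?_
  have e : x ^ a * x ^ (r - 1) = x ^ (a - 1) * x ^ r := by
    rw [← rpow_add hx, ← rpow_add hx]; ring_nf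
  have e' : x ^ (a + r - 1) = x ^ (a - 1) * x ^ r := by rw [← rpow_add hx]; ring_nf
  simp only [satPowDeriv, satPow, Pi.pow_apply, e']
  rcases k with _ | k
  · field_simp
    ring
  · rw [Nat.add_sub_cancel]
    field_simp
    push_cast
    linear_combination (-(k + 1) * r * (1 + x ^ r) ^ (2 * k + 2)) * e

theorem continuousOn (hr : 0 ≤ r) (ha : 0 ≤ a) : ContinuousOn (satPow r a k) (Ici 0) := by
  intro x hx
  have hden : 0 < 1 + x ^ r := by have := rpow_nonneg (mem_Ici.1 hx) r; linarith
  exact ((continuousAt_rpow_const x a (Or.inr ha)).div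
    (((continuousAt_rpow_const x r (Or.inr hr)).const_add 1).pow k)
    (pow_ne_zero k hden.ne')).continuousWithinAt

end satPow

namespace satPowDeriv

variable {r a : ℝ} {k : ℕ} {x : ℝ}

theorem abs_le_of_le {X : ℝ} (hr : 0 ≤ r) (ha : 1 ≤ a) (hx : 0 ≤ x) (hxX : x ≤ X) :
    |satPowDeriv r a k x| ≤ |a| * X ^ (a - 1) + |a - k * r| * X ^ (a + r - 1) := by
  refine (abs_add_le _ _).trans ?_
  rw [abs_mul, abs_mul]
  gcongr
  · exact satPow.abs_le_rpow_of_le (by linarith) hx hxX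
  · exact satPow.abs_le_rpow_of_le (by linarith) hx hxX

theorem mul_arg (hx : 0 < x) :
    satPowDeriv r a k x * x =
      a * satPow r a (k + 1) x + (a - k * r) * satPow r (a + r) (k + 1) x := by
  rw [satPowDeriv, add_mul, mul_assoc, mul_assoc, mul_comm (satPow _ _ _ x), satPow.arg_mul hx,
    mul_comm (satPow _ _ _ x), satPow.arg_mul hx, sub_add_cancel, sub_add_cancel]

end satPowDeriv

theorem satPow.exists_lipschitzOnWith {r a : ℝ} (hr : 0 ≤ r) (ha : 1 ≤ a) (k : ℕ) {X : ℝ}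
    (hX : 0 < X) :
    ∃ K, LipschitzOnWith K (satPow r a k) (Icc 0 X) :=
  ⟨_, lipschitzOnWith_Icc_of_hasDerivAt_Ioo hX
    ((continuousOn hr (by linarith)).mono Icc_subset_Ici_self) (fun x hx => hasDerivAt hx.1)
    fun x hx => (satPowDeriv.abs_le_of_le hr ha hx.1.le hx.2.le).trans (le_coe_toNNReal _)⟩

noncomputable def conjLinearMap (c₁ c₂ : ℂ) : ℂ →L[ℝ] ℂ :=
  c₁ • ContinuousLinearMap.id ℝ ℂ + c₂ • Complex.conjCLE.toContinuousLinearMap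

@[simp]
theorem conjLinearMap_apply (c₁ c₂ v : ℂ) : conjLinearMap c₁ c₂ v = c₁ * v + c₂ * conj v := by
  simp [conjLinearMap]

theorem norm_conjLinearMap_sub_le (c₁ c₂ d₁ d₂ : ℂ) :
    ‖conjLinearMap c₁ c₂ - conjLinearMap d₁ d₂‖ ≤ ‖c₁ - d₁‖ + ‖c₂ - d₂‖ := by
  refine ContinuousLinearMap.opNorm_le_bound _ (by positivity) fun v => ?_
  calc ‖(conjLinearMap c₁ c₂ - conjLinearMap d₁ d₂) v‖
      = ‖(c₁ - d₁) * v + (c₂ - d₂) * conj v‖ := by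
        rw [sub_apply, conjLinearMap_apply, conjLinearMap_apply]
        ring_nf
    _ ≤ (‖c₁ - d₁‖ + ‖c₂ - d₂‖) * ‖v‖ := by
      refine (norm_add_le _ _).trans_eq ?_
      rw [norm_mul, norm_mul, Complex.norm_conj, add_mul]

noncomputable def radialFDeriv (g g' : ℝ → ℝ) (z : ℂ) : ℂ →L[ℝ] ℂ :=
  conjLinearMap ((g (‖z‖ ^ 2) + g' (‖z‖ ^ 2) * ‖z‖ ^ 2 : ℝ) : ℂ) ((g' (‖z‖ ^ 2) : ℂ) * z ^ 2)

theorem hasFDerivAt_radial_of_hasDerivAt {g g' : ℝ → ℝ} {z : ℂ}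
    (hg : HasDerivAt g (g' (‖z‖ ^ 2)) (‖z‖ ^ 2)) :
    HasFDerivAt (fun w : ℂ => (g (‖w‖ ^ 2) : ℂ) * w) (radialFDeriv g g' z) z := by
  have hnorm := (hasStrictFDerivAt_norm_sq z).hasFDerivAt
  have h := ((Complex.ofRealCLM.hasFDerivAt.comp z (hg.comp_hasFDerivAt z hnorm)).mul
    (hasFDerivAt_id z))
  refine h.congr_fderiv ?_
  have hz : ‖z‖ ^ 2 = z.re ^ 2 + z.im ^ 2 := by rw [Complex.sq_norm, Complex.normSq_apply]; ring
  ext v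
  apply Complex.ext
  · simp [radialFDeriv, Complex.inner, -Complex.ofReal_pow, sq z, Complex.mul_re, Complex.mul_im]
    linear_combination -(v.re * g' (‖z‖ ^ 2)) * hz
  · simp [radialFDeriv, Complex.inner, -Complex.ofReal_pow, sq z, Complex.mul_re, Complex.mul_im]
    linear_combination -(v.im * g' (‖z‖ ^ 2)) * hz

theorem hasFDerivAt_radial_zero {g g' : ℝ → ℝ} (hc : ContinuousWithinAt g (Ici 0) 0)
    (h0 : g 0 = 0) :
    HasFDerivAt (fun w : ℂ => (g (‖w‖ ^ 2) : ℂ) * w) (radialFDeriv g g' 0) 0 := by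
  have hzero : radialFDeriv g g' 0 = 0 := by ext v; simp [radialFDeriv, h0]
  have hsq : Tendsto (fun w : ℂ => ‖w‖ ^ 2) (𝓝 0) (𝓝[≥] 0) :=
    tendsto_nhdsWithin_of_tendsto_nhds_of_eventually_within _
      ((by fun_prop : Continuous fun w : ℂ => ‖w‖ ^ 2).tendsto' 0 0 (by simp))
      (Eventually.of_forall fun w => sq_nonneg ‖w‖)
  have hlim : Tendsto (fun w : ℂ => (g (‖w‖ ^ 2) : ℂ)) (𝓝 0) (𝓝 0) := by
    have := (Complex.continuous_ofReal.tendsto (g 0)).comp (hc.tendsto.comp hsq)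
    rwa [h0, Complex.ofReal_zero] at this
  rw [hzero, hasFDerivAt_iff_isLittleO_nhds_zero]
  simpa [h0] using ((Asymptotics.isLittleO_one_iff ℂ).2 hlim).mul_isBigO
    (Asymptotics.isBigO_refl (fun w : ℂ => w) (𝓝 0))

theorem lipschitzOnWith_ofReal_norm_sq_mul_sq {g : ℝ → ℝ} {R M K : ℝ≥0}
    (hM : ∀ x ∈ Icc 0 ((R : ℝ) ^ 2), |g x| ≤ M)
    (hK : LipschitzOnWith K (fun x => g x * x) (Icc 0 ((R : ℝ) ^ 2))) :
    LipschitzOnWith (2 * R * (2 * M + K)) (fun z : ℂ => (g (‖z‖ ^ 2) : ℂ) * z ^ 2)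
      (closedBall 0 R) := by
  refine LipschitzOnWith.of_dist_le_mul fun z₁ h₁ z₂ h₂ => ?_
  set x₁ := ‖z₁‖ ^ 2
  set x₂ := ‖z₂‖ ^ 2
  have hx₁ : x₁ ∈ Icc 0 ((R : ℝ) ^ 2) := mapsTo_norm_sq_closedBall R h₁
  have hx₂ : x₂ ∈ Icc 0 ((R : ℝ) ^ 2) := mapsTo_norm_sq_closedBall R h₂
  have hdx : |x₁ - x₂| ≤ 2 * R * ‖z₁ - z₂‖ := by
    simpa [Real.dist_eq, dist_eq_norm] using
      (lipschitzOnWith_norm_sq_closedBall R).dist_le_mul z₁ h₁ z₂ h₂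
  have hsum : ‖z₁ + z₂‖ ≤ 2 * R := by
    rw [mem_closedBall_zero_iff] at h₁ h₂
    linarith [norm_add_le z₁ z₂]
  -- `g` need not be Lipschitz: `x₂ (g x₁ - g x₂) = (g x₁ x₁ - g x₂ x₂) - g x₁ (x₁ - x₂)`
  have hdiff : |g x₁ - g x₂| * x₂ ≤ (K + M) * |x₁ - x₂| :=
    calc |g x₁ - g x₂| * x₂ = |(g x₁ * x₁ - g x₂ * x₂) - g x₁ * (x₁ - x₂)| := by
          rw [← abs_of_nonneg hx₂.1, ← abs_mul, abs_of_nonneg hx₂.1]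
          ring_nf
      _ ≤ |g x₁ * x₁ - g x₂ * x₂| + |g x₁| * |x₁ - x₂| := by
          rw [← abs_mul]; exact abs_sub _ _
      _ ≤ K * |x₁ - x₂| + M * |x₁ - x₂| := by
          gcongr
          · simpa [Real.dist_eq] using hK.dist_le_mul x₁ hx₁ x₂ hx₂
          · exact hM x₁ hx₁
      _ = (K + M) * |x₁ - x₂| := by ring
  rw [dist_eq_norm, dist_eq_norm]
  calc ‖(g x₁ : ℂ) * z₁ ^ 2 - (g x₂ : ℂ) * z₂ ^ 2‖
      = ‖(g x₁ : ℂ) * ((z₁ + z₂) * (z₁ - z₂)) + ((g x₁ - g x₂ : ℝ) : ℂ) * z₂ ^ 2‖ := by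
        push_cast; ring_nf
    _ ≤ |g x₁| * (‖z₁ + z₂‖ * ‖z₁ - z₂‖) + |g x₁ - g x₂| * x₂ := by
        refine (norm_add_le _ _).trans_eq ?_
        simp only [norm_mul, norm_pow, Complex.norm_real, Real.norm_eq_abs, x₂]
    _ ≤ M * (2 * R * ‖z₁ - z₂‖) + (K + M) * (2 * R * ‖z₁ - z₂‖) := by
        refine add_le_add ?_ (hdiff.trans (by gcongr))
        exact mul_le_mul (hM x₁ hx₁) (by gcongr) (by positivity) M.2
    _ = ↑(2 * R * (2 * M + K)) * ‖z₁ - z₂‖ := by push_cast; ring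

theorem lipschitzOnWith_radialFDeriv {g g' : ℝ → ℝ} {R K₁ K₂ M : ℝ≥0}
    (hg : LipschitzOnWith K₁ g (Icc 0 ((R : ℝ) ^ 2)))
    (hg' : LipschitzOnWith K₂ (fun x => g' x * x) (Icc 0 ((R : ℝ) ^ 2)))
    (hM : ∀ x ∈ Icc 0 ((R : ℝ) ^ 2), |g' x| ≤ M) :
    LipschitzOnWith ((K₁ + K₂) * (2 * R) + 2 * R * (2 * M + K₂)) (radialFDeriv g g')
      (closedBall 0 R) := by
  have h₁ : LipschitzOnWith ((K₁ + K₂) * (2 * R))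
      (fun z : ℂ => ((g (‖z‖ ^ 2) + g' (‖z‖ ^ 2) * ‖z‖ ^ 2 : ℝ) : ℂ)) (closedBall 0 R) := by
    have := Complex.isometry_ofReal.lipschitz.comp_lipschitzOnWith
      ((hg.add hg').comp (lipschitzOnWith_norm_sq_closedBall (E := ℂ) R)
        (mapsTo_norm_sq_closedBall R))
    rwa [one_mul] at this
  have h₂ := lipschitzOnWith_ofReal_norm_sq_mul_sq hM hg'
  refine LipschitzOnWith.of_dist_le_mul fun z₁ hz₁ z₂ hz₂ => ?_
  rw [dist_eq_norm, NNReal.coe_add, add_mul]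
  refine (norm_conjLinearMap_sub_le _ _ _ _).trans (add_le_add ?_ ?_)
  · simpa [dist_eq_norm] using h₁.dist_le_mul z₁ hz₁ z₂ hz₂
  · simpa [dist_eq_norm] using h₂.dist_le_mul z₁ hz₁ z₂ hz₂

theorem hasFDerivAt_radial {g g' : ℝ → ℝ} (hd : ∀ x, 0 < x → HasDerivAt g (g' x) x)
    (hc : ContinuousWithinAt g (Ici 0) 0) (h0 : g 0 = 0) (z : ℂ) :
    HasFDerivAt (fun w : ℂ => (g (‖w‖ ^ 2) : ℂ) * w) (radialFDeriv g g' z) z := by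
  rcases eq_or_ne z 0 with rfl | hz
  · exact hasFDerivAt_radial_zero hc h0
  · exact hasFDerivAt_radial_of_hasDerivAt (hd _ (by positivity))

section Saturated

variable {r s : ℝ} {F F' : ℝ → ℝ}

theorem eq_satPowDeriv_of_eqOn (hF : EqOn F (satPow r s 1) (Ici 0))
    (hF' : ∀ x, 0 < x → HasDerivAt F (F' x) x) {x : ℝ} (hx : 0 < x) :
    F' x = satPowDeriv r s 1 x := by
  have heq : F =ᶠ[𝓝 x] satPow r s 1 :=
    Filter.eventually_of_mem (Ioi_mem_nhds hx) fun y hy => hF (mem_Ici_of_Ioi hy)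
  exact (hF' x hx).unique ((satPow.hasDerivAt hx).congr_of_eventuallyEq heq)

theorem hasFDerivAt_radial_of_eqOn_satPow (hs : 0 < s) (hr : 0 ≤ r)
    (hF : EqOn F (satPow r s 1) (Ici 0)) (hF' : ∀ x, 0 < x → HasDerivAt F (F' x) x) (z : ℂ) :
    HasFDerivAt (fun w : ℂ => (F (‖w‖ ^ 2) : ℂ) * w) (radialFDeriv F F' z) z :=
  hasFDerivAt_radial hF'
    ((satPow.continuousOn hr hs.le 0 self_mem_Ici).congr (fun _ hy => hF hy) (hF self_mem_Ici))
    ((hF self_mem_Ici).trans (satPow.apply_zero hs.ne')) z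

theorem exists_lipschitzOnWith_radialFDeriv_of_eqOn_satPow (hs : 1 ≤ s) (hr : 0 ≤ r)
    (hF : EqOn F (satPow r s 1) (Ici 0)) (hF' : ∀ x, 0 < x → HasDerivAt F (F' x) x)
    {R : ℝ≥0} (hR : 0 < R) :
    ∃ K, LipschitzOnWith K (radialFDeriv F F') (closedBall 0 R) := by
  set X : ℝ := (R : ℝ) ^ 2
  have hX : 0 < X := by positivity
  obtain ⟨K₁, hK₁⟩ := satPow.exists_lipschitzOnWith hr hs 1 hX
  obtain ⟨K₂, hK₂⟩ := satPow.exists_lipschitzOnWith hr hs 2 hX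
  obtain ⟨K₃, hK₃⟩ := satPow.exists_lipschitzOnWith hr (by linarith : 1 ≤ s + r) 2 hX
  have hxF' : EqOn (fun x => s * satPow r s 2 x + (s - r) * satPow r (s + r) 2 x)
      (fun x => F' x * x) (Icc 0 X) := by
    rintro x ⟨hx, -⟩
    rcases hx.eq_or_lt with rfl | hx
    · simp [satPow.apply_zero, (by linarith : s ≠ 0), (by linarith : s + r ≠ 0)]
    · show _ = F' x * x
      rw [eq_satPowDeriv_of_eqOn hF hF' hx, satPowDeriv.mul_arg hx, Nat.cast_one, one_mul]
  -- `F' 0` is arbitrary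
  have hM : ∀ x ∈ Icc 0 X,
      |F' x| ≤ (|F' 0| + (|s| * X ^ (s - 1) + |s - r| * X ^ (s + r - 1))).toNNReal := by
    rintro x ⟨hx, hxX⟩
    refine le_trans ?_ (le_coe_toNNReal _)
    rcases hx.eq_or_lt with rfl | hx
    · exact le_add_of_nonneg_right (by positivity)
    · rw [eq_satPowDeriv_of_eqOn hF hF' hx]
      have := satPowDeriv.abs_le_of_le (k := 1) hr hs hx.le hxX
      rw [Nat.cast_one, one_mul] at this
      exact this.trans (le_add_of_nonneg_left (abs_nonneg _))
  exact ⟨_, lipschitzOnWith_radialFDeriv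
    (hK₁.congr fun x hx => (hF hx.1).symm)
    ((((lipschitzWith_smul s).comp_lipschitzOnWith hK₂).add
      ((lipschitzWith_smul (s - r)).comp_lipschitzOnWith hK₃)).congr hxF') hM⟩

end Saturated

theorem stmt_11_general (p q : ℝ) (hp : 10 / 3 < p) (hqp : q < p)
    (F F' : ℝ → ℝ)
    (hF : ∀ x : ℝ, 0 ≤ x → F x = x ^ (p / 2) / (1 + x ^ ((p - q) / 2)))
    (hF' : ∀ x : ℝ, 0 < x → HasDerivAt F (F' x) x)
    (Ga : ℂ → ℂ → ℂ)
    (hGa : ∀ a w : ℂ, Ga a w =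
      (F (‖a + w‖ ^ 2) : ℂ) * (a + w)
        - (F (‖a‖ ^ 2) : ℂ) * a
        - ((F (‖a‖ ^ 2) + F' (‖a‖ ^ 2) * ‖a‖ ^ 2 : ℝ) : ℂ) * w
        - ((F' (‖a‖ ^ 2) : ℝ) : ℂ) * a ^ 2 * (starRingEnd ℂ) w) :
    ∀ A : ℝ, 0 < A → ∃ C : ℝ, 0 < C ∧
      ∀ a : ℂ, ‖a‖ ≤ A →
        ∀ w₁ w₂ : ℂ, ‖w₁‖ ≤ 1 → ‖w₂‖ ≤ 1 →
          ‖Ga a w₁ - Ga a w₂‖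
            ≤ C * (‖w₁‖ + ‖w₂‖) * ‖w₁ - w₂‖ := by
  intro A hA
  have hs : 1 ≤ p / 2 := by linarith
  have hr : 0 ≤ (p - q) / 2 := by linarith
  have hFsat : EqOn F (satPow ((p - q) / 2) (p / 2) 1) (Ici 0) := fun x hx => by
    rw [hF x hx, satPow, pow_one]
  lift A to ℝ≥0 using hA.le
  obtain ⟨K, hK⟩ :=
    exists_lipschitzOnWith_radialFDeriv_of_eqOn_satPow hs hr hFsat hF' (R := A + 1) (by positivity)
  refine ⟨K + 1, by positivity, fun a ha w₁ w₂ h₁ h₂ => ?_⟩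
  have hball : ∀ w : ℂ, ‖w‖ ≤ 1 → a + w ∈ closedBall (0 : ℂ) ↑(A + 1) := fun w hw => by
    rw [mem_closedBall_zero_iff]
    push_cast
    linarith [norm_add_le a w]
  have hGa' : ∀ w, Ga a w = (F (‖a + w‖ ^ 2) : ℂ) * (a + w) - (F (‖a‖ ^ 2) : ℂ) * a
      - radialFDeriv F F' a w := fun w => by
    rw [hGa, radialFDeriv, conjLinearMap_apply]
    ring
  rw [hGa', hGa']
  calc _ ≤ K * (‖w₁‖ + ‖w₂‖) * ‖w₁ - w₂‖ :=
        (convex_closedBall (0 : ℂ) _).norm_sub_sub_fderiv_sub_le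
          (fun z _ => hasFDerivAt_radial_of_eqOn_satPow (by linarith) hr hFsat hF' z) hK
          (by simpa using hball 0 (by simp)) (hball w₁ h₁) (hball w₂ h₂)
    _ ≤ (K + 1) * (‖w₁‖ + ‖w₂‖) * ‖w₁ - w₂‖ := by gcongr; linarith

theorem stmt_11 (p q : ℝ) (hp : 10 / 3 < p) (hq : 0 < q) (hqp : q < p)
    (F F' : ℝ → ℝ)
    (hF : ∀ x : ℝ, 0 ≤ x → F x = x ^ (p / 2) / (1 + x ^ ((p - q) / 2)))
    (hF' : ∀ x : ℝ, 0 < x → HasDerivAt F (F' x) x)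
    (hF'0 : F' 0 = 0)
    (Ga : ℂ → ℂ → ℂ)
    (hGa : ∀ a w : ℂ, Ga a w =
      (F (‖a + w‖ ^ 2) : ℂ) * (a + w)
        - (F (‖a‖ ^ 2) : ℂ) * a
        - ((F (‖a‖ ^ 2) + F' (‖a‖ ^ 2) * ‖a‖ ^ 2 : ℝ) : ℂ) * w
        - ((F' (‖a‖ ^ 2) : ℝ) : ℂ) * a ^ 2 * (starRingEnd ℂ) w) :
    ∀ A : ℝ, 0 < A → ∃ C : ℝ, 0 < C ∧
      ∀ a : ℂ, ‖a‖ ≤ A →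
        ∀ w₁ w₂ : ℂ, ‖w₁‖ ≤ 1 → ‖w₂‖ ≤ 1 →
          ‖Ga a w₁ - Ga a w₂‖
            ≤ C * (‖w₁‖ + ‖w₂‖) * ‖w₁ - w₂‖ :=
  stmt_11_general p q hp hqp F F' hF hF' Ga hGa
end

section
/- Let p > 10/3, p > q > 0, F(x) = x^{p/2}/(1 + x^{(p−q)/2}) for x ≥ 0 with F(0)=0, and F' its derivative (extended by F'(0)=0). For R ≥ 0 and v ∈ ℂ define f₀(R, v) = F(|R+v|²)(R+v) − F(R²)R − ( F(R²) + F'(R²)R² )·v − F'(R²)R²·conj(v). Then for every R₀ > 0 there is a constant C > 0 such that for all real R with 0 ≤ R ≤ R₀ and all v₁, v₂ ∈ ℂ with |v₁| ≤ 1 and |v₂| ≤ 1: | f₀(R, v₁) − f₀(R, v₂) | ≤ C·( R·(|v₁| + |v₂|) + |v₁|^p + |v₂|^p )·| v₁ − v₂ |. -/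
/-!
With `G z = F (‖z‖²) z`, the function `f₀ R v` is `G (R + v) - G R - DG(R) v`. Applying the mean
value theorem to `F` between `‖R + v₁‖²` and `‖R + v₂‖²` splits `f₀ R v₁ - f₀ R v₂` into four terms,
each `v₁ - v₂` or its conjugate times a coefficient built from `F` and `F'` at points of `[0, X]`,
`X = (R + ‖v₁‖ + ‖v₂‖)²`, all within `(2R + ‖v₁‖ + ‖v₂‖)(‖v₁‖ + ‖v₂‖)` of `R²`. The coefficients
are controlled by `|F' x| ≲ X^(p/2-1)` and the weighted Lipschitz bound
`y |F' x - F' y| ≲ X^(p/2-1) |x - y|`, both read off from `F'(x) = x^(r-1) φ(x^s)`, `r = p/2`,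
`s = (p-q)/2`, where `φ(y) = (r-s)/(1+y) + s/(1+y)²` is bounded by `r` and `(r+s)`-Lipschitz on
`[0, ∞)`. Finally the weight `(R + u)^(p-2) (2R + u) u`, `u = ‖v₁‖ + ‖v₂‖`, is at most a constant
times `R u + ‖v₁‖^p + ‖v₂‖^p` for `R ≤ R₀`.
-/

open Real Set ComplexConjugate

namespace Real

lemma mul_rpow_sub_rpow_le {β a b : ℝ} (hb : 0 ≤ b) (hba : b ≤ a) :
    a * (a ^ β - b ^ β) ≤ max 1 β * a ^ β * (a - b) := by
  rcases (hb.trans hba).eq_or_lt with rfl | ha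
  · simp [le_antisymm hba hb]
  set t := b / a
  have ht0 : 0 ≤ t := div_nonneg hb ha.le
  have ht1 : t ≤ 1 := div_le_one_of_le₀ hba ha.le
  have hbt : b = a * t := (mul_div_cancel₀ b ha.ne').symm
  have hratio : 1 - t ^ β ≤ max 1 β * (1 - t) := by
    rcases le_total β 1 with h | h
    · have := self_le_rpow_of_le_one ht0 ht1 h
      nlinarith [le_max_left 1 β]
    · have := one_add_mul_self_le_rpow_one_add (by linarith : -1 ≤ t - 1) h
      simp only [add_sub_cancel] at this
      nlinarith [le_max_right 1 β]
  have haβ : 0 ≤ a ^ β := rpow_nonneg ha.le β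
  calc a * (a ^ β - b ^ β) = a * a ^ β * (1 - t ^ β) := by
        rw [hbt, mul_rpow ha.le ht0]; ring
    _ ≤ a * a ^ β * (max 1 β * (1 - t)) := by gcongr
    _ = max 1 β * a ^ β * (a - b) := by rw [hbt]; ring

lemma mul_abs_rpow_sub_rpow_le {β x y X : ℝ} (hβ : 0 ≤ β) (hx : 0 ≤ x) (hy : 0 ≤ y)
    (hxX : x ≤ X) (hyX : y ≤ X) :
    y * |x ^ β - y ^ β| ≤ max 1 β * X ^ β * |x - y| := by
  rcases le_total y x with h | h
  · rw [abs_of_nonneg (sub_nonneg.2 (rpow_le_rpow hy h hβ)), abs_of_nonneg (sub_nonneg.2 h)]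
    calc y * (x ^ β - y ^ β) ≤ x * (x ^ β - y ^ β) := by
          gcongr
          exact sub_nonneg.2 (rpow_le_rpow hy h hβ)
      _ ≤ max 1 β * x ^ β * (x - y) := mul_rpow_sub_rpow_le hy h
      _ ≤ max 1 β * X ^ β * (x - y) := by gcongr
  · rw [abs_sub_comm, abs_of_nonneg (sub_nonneg.2 (rpow_le_rpow hx h hβ)), abs_sub_comm,
      abs_of_nonneg (sub_nonneg.2 h)]
    calc y * (y ^ β - x ^ β) ≤ max 1 β * y ^ β * (y - x) := mul_rpow_sub_rpow_le hx h
      _ ≤ max 1 β * X ^ β * (y - x) := by gcongr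

lemma rpow_add_le_two_rpow_mul {p a b : ℝ} (hp : 1 ≤ p) (ha : 0 ≤ a) (hb : 0 ≤ b) :
    (a + b) ^ p ≤ 2 ^ (p - 1) * (a ^ p + b ^ p) := by
  lift a to NNReal using ha
  lift b to NNReal using hb
  exact_mod_cast NNReal.rpow_add_le_mul_rpow_add_rpow a b hp

end Real

lemma abs_inv_one_add_sub_inv_one_add_le {y y' : ℝ} (hy : 0 ≤ y) (hy' : 0 ≤ y') :
    |(1 + y)⁻¹ - (1 + y')⁻¹| ≤ |y - y'| := by
  rw [inv_sub_inv (by positivity) (by positivity), abs_div, add_sub_add_left_eq_sub,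
    abs_sub_comm, abs_of_pos (by positivity : 0 < (1 + y) * (1 + y'))]
  exact div_le_self (abs_nonneg (y - y')) (by nlinarith : (1:ℝ) ≤ (1 + y) * (1 + y'))

lemma abs_inv_one_add_sq_sub_le {y y' : ℝ} (hy : 0 ≤ y) (hy' : 0 ≤ y') :
    |(1 + y)⁻¹ ^ 2 - (1 + y')⁻¹ ^ 2| ≤ 2 * |y - y'| := by
  have h1 : (1 + y)⁻¹ ≤ 1 := inv_le_one_of_one_le₀ (by linarith)
  have h2 : (1 + y')⁻¹ ≤ 1 := inv_le_one_of_one_le₀ (by linarith)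
  rw [sq_sub_sq, abs_mul, abs_of_nonneg (by positivity : 0 ≤ (1 + y)⁻¹ + (1 + y')⁻¹)]
  exact mul_le_mul (by linarith) (abs_inv_one_add_sub_inv_one_add_le hy hy') (abs_nonneg _)
    zero_le_two

lemma exists_mem_uIcc_sub_eq_mul_sub {f f' : ℝ → ℝ} {a b : ℝ} (hf : ContinuousOn f (uIcc a b))
    (hf' : ∀ x ∈ Ioo (min a b) (max a b), HasDerivAt f (f' x) x) :
    ∃ ξ ∈ uIcc a b, f a - f b = f' ξ * (a - b) := by
  wlog hab : a ≤ b generalizing a b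
  · obtain ⟨ξ, hξ, h⟩ := this (uIcc_comm a b ▸ hf) (by rwa [min_comm, max_comm])
      (le_of_not_ge hab)
    exact ⟨ξ, uIcc_comm a b ▸ hξ, by linear_combination -h⟩
  rcases hab.eq_or_lt with rfl | hlt
  · exact ⟨a, left_mem_uIcc, by ring⟩
  rw [uIcc_of_le hab] at hf
  rw [min_eq_left hab, max_eq_right hab] at hf'
  obtain ⟨ξ, hξ, h⟩ := exists_hasDerivAt_eq_slope f f' hlt hf hf'
  refine ⟨ξ, Icc_subset_uIcc (Ioo_subset_Icc_self hξ), ?_⟩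
  rw [h]
  field_simp [(sub_pos.2 hlt).ne']
  ring

section

variable {r s : ℝ}

noncomputable def satDerivFactor (r s y : ℝ) : ℝ := (r - s) * (1 + y)⁻¹ + s * (1 + y)⁻¹ ^ 2

noncomputable def satDeriv (r s x : ℝ) : ℝ := x ^ (r - 1) * satDerivFactor r s (x ^ s)

lemma hasDerivAt_rpow_div {x : ℝ} (hx : 0 < x) :
    HasDerivAt (fun x : ℝ => x ^ r / (1 + x ^ s)) (satDeriv r s x) x := by
  have hden : 0 < 1 + x ^ s := by positivity
  refine ((hasDerivAt_rpow_const (p := r) (Or.inl hx.ne')).div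
    ((hasDerivAt_rpow_const (p := s) (Or.inl hx.ne')).const_add 1) hden.ne').congr_deriv ?_
  have e : x ^ r * x ^ (s - 1) = x ^ (r - 1) * x ^ s := by
    rw [← rpow_add hx, ← rpow_add hx]; ring_nf
  unfold satDeriv satDerivFactor
  field_simp
  linear_combination (-s) * e

lemma continuousOn_rpow_div (hr : 0 ≤ r) (hs : 0 ≤ s) :
    ContinuousOn (fun x : ℝ => x ^ r / (1 + x ^ s)) (Ici 0) := by
  intro x hx
  have hxs : 0 ≤ x ^ s := rpow_nonneg hx s
  refine ContinuousWithinAt.div ?_ ?_ (by positivity)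
  · exact (continuousAt_rpow_const x r (Or.inr hr)).continuousWithinAt
  · exact (continuousAt_const.add (continuousAt_rpow_const x s (Or.inr hs))).continuousWithinAt

lemma satDerivFactor_nonneg {y : ℝ} (hsr : s ≤ r) (hs : 0 ≤ s) (hy : 0 ≤ y) :
    0 ≤ satDerivFactor r s y := by
  unfold satDerivFactor
  have : 0 ≤ r - s := by linarith
  positivity

lemma satDerivFactor_le {y : ℝ} (hsr : s ≤ r) (hs : 0 ≤ s) (hy : 0 ≤ y) :
    satDerivFactor r s y ≤ r := by
  have h : (1 + y)⁻¹ ≤ 1 := inv_le_one_of_one_le₀ (by linarith)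
  have h0 : 0 ≤ (1 + y)⁻¹ := by positivity
  have h2 : (1 + y)⁻¹ ^ 2 ≤ 1 := pow_le_one₀ h0 h
  unfold satDerivFactor
  nlinarith [mul_le_mul_of_nonneg_left h (by linarith : 0 ≤ r - s)]

lemma abs_satDerivFactor_sub_le {y y' : ℝ} (hsr : s ≤ r) (hs : 0 ≤ s) (hy : 0 ≤ y) (hy' : 0 ≤ y') :
    |satDerivFactor r s y - satDerivFactor r s y'| ≤ (r + s) * |y - y'| := by
  have e : satDerivFactor r s y - satDerivFactor r s y'
      = (r - s) * ((1 + y)⁻¹ - (1 + y')⁻¹) + s * ((1 + y)⁻¹ ^ 2 - (1 + y')⁻¹ ^ 2) := by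
    unfold satDerivFactor; ring
  calc |satDerivFactor r s y - satDerivFactor r s y'|
      ≤ (r - s) * |(1 + y)⁻¹ - (1 + y')⁻¹| + s * |(1 + y)⁻¹ ^ 2 - (1 + y')⁻¹ ^ 2| := by
        rw [e]
        refine (abs_add_le _ _).trans ?_
        rw [abs_mul, abs_mul, abs_of_nonneg (by linarith : 0 ≤ r - s), abs_of_nonneg hs]
    _ ≤ (r - s) * |y - y'| + s * (2 * |y - y'|) :=
        add_le_add
          (mul_le_mul_of_nonneg_left (abs_inv_one_add_sub_inv_one_add_le hy hy') (by linarith))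
          (mul_le_mul_of_nonneg_left (abs_inv_one_add_sq_sub_le hy hy') hs)
    _ = (r + s) * |y - y'| := by ring

lemma abs_satDeriv_le {x X : ℝ} (hr : 1 ≤ r) (hsr : s ≤ r) (hs : 0 ≤ s) (hx : 0 ≤ x)
    (hxX : x ≤ X) : |satDeriv r s x| ≤ r * X ^ (r - 1) := by
  have h0 := satDerivFactor_nonneg hsr hs (rpow_nonneg hx s)
  rw [satDeriv, abs_of_nonneg (mul_nonneg (rpow_nonneg hx _) h0), mul_comm r]
  exact mul_le_mul (rpow_le_rpow hx hxX (by linarith))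
    (satDerivFactor_le hsr hs (rpow_nonneg hx s)) h0 (rpow_nonneg (hx.trans hxX) _)

lemma mul_abs_satDeriv_sub_le {x y X M : ℝ} (hr : 1 ≤ r) (hsr : s ≤ r) (hs : 0 ≤ s)
    (hx : 0 ≤ x) (hy : 0 ≤ y) (hxX : x ≤ X) (hyX : y ≤ X) (hXM : X ≤ M) :
    y * |satDeriv r s x - satDeriv r s y|
      ≤ (r * max 1 (r - 1) + (r + s) * max 1 s * M ^ s) * X ^ (r - 1) * |x - y| := by
  have hX : 0 ≤ X := hx.trans hxX
  have hφ := satDerivFactor_nonneg hsr hs (rpow_nonneg hx s)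
  have hpow : y * |x ^ (r - 1) - y ^ (r - 1)| ≤ max 1 (r - 1) * X ^ (r - 1) * |x - y| :=
    Real.mul_abs_rpow_sub_rpow_le (by linarith) hx hy hxX hyX
  have hfactor : y * |satDerivFactor r s (x ^ s) - satDerivFactor r s (y ^ s)|
      ≤ (r + s) * max 1 s * M ^ s * |x - y| :=
    calc y * |satDerivFactor r s (x ^ s) - satDerivFactor r s (y ^ s)|
        ≤ y * ((r + s) * |x ^ s - y ^ s|) := by
          gcongr
          exact abs_satDerivFactor_sub_le hsr hs (rpow_nonneg hx s) (rpow_nonneg hy s)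
      _ = (r + s) * (y * |x ^ s - y ^ s|) := by ring
      _ ≤ (r + s) * (max 1 s * X ^ s * |x - y|) :=
          mul_le_mul_of_nonneg_left (Real.mul_abs_rpow_sub_rpow_le hs hx hy hxX hyX)
            (by linarith)
      _ ≤ (r + s) * (max 1 s * M ^ s * |x - y|) := by
          have : 0 ≤ r + s := by linarith
          gcongr
      _ = (r + s) * max 1 s * M ^ s * |x - y| := by ring
  have e : satDeriv r s x - satDeriv r s y
      = (x ^ (r - 1) - y ^ (r - 1)) * satDerivFactor r s (x ^ s)
        + y ^ (r - 1) * (satDerivFactor r s (x ^ s) - satDerivFactor r s (y ^ s)) := by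
    unfold satDeriv; ring
  calc y * |satDeriv r s x - satDeriv r s y|
      ≤ y * |x ^ (r - 1) - y ^ (r - 1)| * satDerivFactor r s (x ^ s)
        + y ^ (r - 1) * (y * |satDerivFactor r s (x ^ s) - satDerivFactor r s (y ^ s)|) := by
        rw [e]
        refine (mul_le_mul_of_nonneg_left (abs_add_le _ _) hy).trans_eq ?_
        rw [abs_mul, abs_mul, abs_of_nonneg hφ, abs_of_nonneg (rpow_nonneg hy _)]
        ring
    _ ≤ max 1 (r - 1) * X ^ (r - 1) * |x - y| * r
        + X ^ (r - 1) * ((r + s) * max 1 s * M ^ s * |x - y|) := by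
        gcongr
        exact satDerivFactor_le hsr hs (rpow_nonneg hx s)
    _ = (r * max 1 (r - 1) + (r + s) * max 1 s * M ^ s) * X ^ (r - 1) * |x - y| := by ring

lemma eq_satDeriv_of_hasDerivAt {F F' : ℝ → ℝ} {x : ℝ} (hr : 1 < r)
    (hF : ∀ x : ℝ, 0 ≤ x → F x = x ^ r / (1 + x ^ s))
    (hF' : ∀ x : ℝ, 0 < x → HasDerivAt F (F' x) x) (hF'0 : F' 0 = 0) (hx : 0 ≤ x) :
    F' x = satDeriv r s x := by
  rcases hx.eq_or_lt with rfl | hx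
  · rw [hF'0, satDeriv, zero_rpow (by linarith), zero_mul]
  refine (hF' x hx).unique ((hasDerivAt_rpow_div hx).congr_of_eventuallyEq ?_)
  filter_upwards [Ioi_mem_nhds hx] with y hy using hF y (le_of_lt hy)

end

lemma exists_mem_uIcc_sub_eq_mul_sub_of_nonneg {F F' : ℝ → ℝ} {a b : ℝ}
    (hF : ContinuousOn F (Ici 0)) (hF' : ∀ x : ℝ, 0 < x → HasDerivAt F (F' x) x)
    (ha : 0 ≤ a) (hb : 0 ≤ b) : ∃ ξ ∈ uIcc a b, F a - F b = F' ξ * (a - b) :=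
  exists_mem_uIcc_sub_eq_mul_sub (hF.mono fun _ hx => le_trans (le_inf ha hb) hx.1)
    fun x hx => hF' x ((le_min ha hb).trans_lt hx.1)

noncomputable def linearizationRemainder (F F' : ℝ → ℝ) (R : ℝ) (v : ℂ) : ℂ :=
  (F (‖(R : ℂ) + v‖ ^ 2) : ℂ) * ((R : ℂ) + v)
    - (F (R ^ 2) : ℂ) * (R : ℂ)
    - ((F (R ^ 2) + F' (R ^ 2) * R ^ 2 : ℝ) : ℂ) * v
    - ((F' (R ^ 2) * R ^ 2 : ℝ) : ℂ) * conj v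

lemma ofReal_norm_sq_eq_mul_conj (z : ℂ) : ((‖z‖ ^ 2 : ℝ) : ℂ) = z * conj z := by
  rw [Complex.sq_norm, Complex.mul_conj]

lemma linearizationRemainder_sub_eq {F F' : ℝ → ℝ} {R c : ℝ} {v₁ v₂ : ℂ}
    (hc : F (‖(R : ℂ) + v₁‖ ^ 2) - F (‖(R : ℂ) + v₂‖ ^ 2)
      = c * (‖(R : ℂ) + v₁‖ ^ 2 - ‖(R : ℂ) + v₂‖ ^ 2)) :
    linearizationRemainder F F' R v₁ - linearizationRemainder F F' R v₂
      = ((F (‖(R : ℂ) + v₁‖ ^ 2) - F (R ^ 2) : ℝ) : ℂ) * (v₁ - v₂)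
        + ((c : ℂ) * ((‖(R : ℂ) + v₂‖ ^ 2 : ℝ) : ℂ) - ((F' (R ^ 2) * R ^ 2 : ℝ) : ℂ)) * (v₁ - v₂)
        + ((c : ℂ) * ((R : ℂ) + v₂) ^ 2 - ((F' (R ^ 2) * R ^ 2 : ℝ) : ℂ)) * conj (v₁ - v₂)
        + (c : ℂ) * ((R : ℂ) + v₂) * ((v₁ - v₂) * conj (v₁ - v₂)) := by
  have hcC := congrArg (fun t : ℝ => (t : ℂ)) hc
  have h₁ := ofReal_norm_sq_eq_mul_conj ((R : ℂ) + v₁)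
  have h₂ := ofReal_norm_sq_eq_mul_conj ((R : ℂ) + v₂)
  simp only [map_add, Complex.conj_ofReal] at h₁ h₂
  unfold linearizationRemainder
  rw [map_sub]
  push_cast at hcC h₁ h₂ ⊢
  linear_combination hcC * ((R : ℂ) + v₂) + (c : ℂ) * ((R : ℂ) + v₂) * h₁
    - (c : ℂ) * ((R : ℂ) + v₁) * h₂

section

variable {R u : ℝ} {v : ℂ}

lemma norm_ofReal_add_le (hR : 0 ≤ R) (hv : ‖v‖ ≤ u) : ‖(R : ℂ) + v‖ ≤ R + u :=
  (norm_add_le _ _).trans (by rw [Complex.norm_of_nonneg hR]; linarith)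

lemma abs_norm_ofReal_add_sq_sub_sq_le (hR : 0 ≤ R) (hv : ‖v‖ ≤ u) :
    |‖(R : ℂ) + v‖ ^ 2 - R ^ 2| ≤ (2 * R + u) * u := by
  have h : |‖(R : ℂ) + v‖ - R| ≤ ‖v‖ := by
    simpa [abs_of_nonneg hR] using abs_norm_sub_norm_le ((R : ℂ) + v) R
  have h' := norm_ofReal_add_le hR hv
  rw [sq_sub_sq, abs_mul, abs_of_nonneg (by positivity : 0 ≤ ‖(R : ℂ) + v‖ + R)]
  exact mul_le_mul (by linarith) (h.trans hv) (abs_nonneg _) (by linarith [norm_nonneg v])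

lemma norm_ofReal_add_sq_sub_sq_le (hR : 0 ≤ R) (hv : ‖v‖ ≤ u) :
    ‖((R : ℂ) + v) ^ 2 - ((R ^ 2 : ℝ) : ℂ)‖ ≤ (2 * R + u) * u := by
  have e : ((R : ℂ) + v) ^ 2 - ((R ^ 2 : ℝ) : ℂ) = ((2 * R : ℝ) + v) * v := by push_cast; ring
  rw [e, norm_mul]
  exact mul_le_mul (norm_ofReal_add_le (by positivity) hv) hv (norm_nonneg _)
    (by linarith [norm_nonneg v])

end

lemma norm_ofReal_mul_sub_ofReal_le (c d b : ℝ) (Z : ℂ) :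
    ‖(c : ℂ) * Z - ((d * b : ℝ) : ℂ)‖ ≤ |c| * ‖Z - b‖ + |b| * |c - d| := by
  have e : (c : ℂ) * Z - ((d * b : ℝ) : ℂ) = c * (Z - b) + ((b * (c - d) : ℝ) : ℂ) := by
    push_cast; ring
  rw [e]
  refine (norm_add_le _ _).trans_eq ?_
  rw [norm_mul, Complex.norm_real, Complex.norm_real, Real.norm_eq_abs, Real.norm_eq_abs, abs_mul]

lemma norm_linearizationRemainder_sub_le {F F' : ℝ → ℝ} {R X A B : ℝ} {v₁ v₂ : ℂ} (hR : 0 ≤ R)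
    (hX : (R + (‖v₁‖ + ‖v₂‖)) ^ 2 ≤ X)
    (hmvt : ∀ a b : ℝ, 0 ≤ a → 0 ≤ b → ∃ ξ ∈ uIcc a b, F a - F b = F' ξ * (a - b))
    (hA : ∀ x, 0 ≤ x → x ≤ X → |F' x| ≤ A) (hB0 : 0 ≤ B)
    (hB : ∀ x y, 0 ≤ x → 0 ≤ y → x ≤ X → y ≤ X → y * |F' x - F' y| ≤ B * |x - y|) :
    ‖linearizationRemainder F F' R v₁ - linearizationRemainder F F' R v₂‖
      ≤ (4 * A + 2 * B) * ((2 * R + (‖v₁‖ + ‖v₂‖)) * (‖v₁‖ + ‖v₂‖)) * ‖v₁ - v₂‖ := by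
  set u := ‖v₁‖ + ‖v₂‖
  set δ := (2 * R + u) * u
  have hu₁ : ‖v₁‖ ≤ u := le_add_of_nonneg_right (norm_nonneg _)
  have hu₂ : ‖v₂‖ ≤ u := le_add_of_nonneg_left (norm_nonneg _)
  have hmemX : ∀ v : ℂ, ‖v‖ ≤ u → ‖(R : ℂ) + v‖ ^ 2 ∈ Icc 0 X := fun v hv =>
    ⟨by positivity, (pow_le_pow_left₀ (norm_nonneg _) (norm_ofReal_add_le hR hv) 2).trans hX⟩
  have hnear : ∀ v : ℂ, ‖v‖ ≤ u → ‖(R : ℂ) + v‖ ^ 2 ∈ Icc (R ^ 2 - δ) (R ^ 2 + δ) := fun v hv =>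
    mem_Icc_iff_abs_le.1 ((abs_sub_comm _ _).trans_le (abs_norm_ofReal_add_sq_sub_sq_le hR hv))
  have hbX : R ^ 2 ∈ Icc 0 X := ⟨by positivity, le_trans (by gcongr; linarith) hX⟩
  have hA0 : 0 ≤ A := (abs_nonneg _).trans (hA _ hbX.1 hbX.2)
  obtain ⟨ξ, hξ, hξeq⟩ := hmvt _ _ (hmemX v₁ hu₁).1 (hmemX v₂ hu₂).1
  obtain ⟨η, hη, hηeq⟩ := hmvt _ _ (hmemX v₁ hu₁).1 hbX.1
  have hξX := uIcc_subset_Icc (hmemX v₁ hu₁) (hmemX v₂ hu₂) hξ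
  have hηX := uIcc_subset_Icc (hmemX v₁ hu₁) hbX hη
  have hξb := mem_Icc_iff_abs_le.2 (uIcc_subset_Icc (hnear v₁ hu₁) (hnear v₂ hu₂) hξ)
  have hT1 : |F (‖(R : ℂ) + v₁‖ ^ 2) - F (R ^ 2)| ≤ A * δ := by
    rw [hηeq, abs_mul]
    exact mul_le_mul (hA η hηX.1 hηX.2) (abs_norm_ofReal_add_sq_sub_sq_le hR hu₁)
      (abs_nonneg _) hA0
  have hcoeff : ∀ Z : ℂ, ‖Z - ((R ^ 2 : ℝ) : ℂ)‖ ≤ δ →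
      ‖(F' ξ : ℂ) * Z - ((F' (R ^ 2) * R ^ 2 : ℝ) : ℂ)‖ ≤ (A + B) * δ := fun Z hZ => by
    refine (norm_ofReal_mul_sub_ofReal_le _ _ _ Z).trans ?_
    rw [abs_of_nonneg hbX.1, add_mul]
    exact add_le_add (mul_le_mul (hA ξ hξX.1 hξX.2) hZ (norm_nonneg _) hA0)
      ((hB ξ _ hξX.1 hbX.1 hξX.2 hbX.2).trans (by rw [abs_sub_comm]; gcongr))
  have hT2 := hcoeff ((‖(R : ℂ) + v₂‖ ^ 2 : ℝ) : ℂ) (by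
    rw [← Complex.ofReal_sub, Complex.norm_real, Real.norm_eq_abs]
    exact abs_norm_ofReal_add_sq_sub_sq_le hR hu₂)
  have hT3 := hcoeff _ (norm_ofReal_add_sq_sub_sq_le hR hu₂)
  have hT4 : |F' ξ| * ‖(R : ℂ) + v₂‖ * ‖v₁ - v₂‖ ≤ A * δ := by
    rw [mul_assoc]
    refine mul_le_mul (hA ξ hξX.1 hξX.2) ?_ (by positivity) hA0
    calc ‖(R : ℂ) + v₂‖ * ‖v₁ - v₂‖ ≤ (R + u) * u :=
          mul_le_mul (norm_ofReal_add_le hR hu₂) (norm_sub_le v₁ v₂) (norm_nonneg _)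
            (by positivity)
      _ ≤ δ := by unfold δ; gcongr; linarith
  rw [linearizationRemainder_sub_eq hξeq]
  refine norm_add₄_le.trans ?_
  simp only [norm_mul, Complex.norm_conj, Complex.norm_real, Real.norm_eq_abs]
  have hd := norm_nonneg (v₁ - v₂)
  linarith [mul_le_mul_of_nonneg_right hT1 hd, mul_le_mul_of_nonneg_right hT2 hd,
    mul_le_mul_of_nonneg_right hT3 hd, mul_le_mul_of_nonneg_right hT4 hd]

lemma rpow_mul_le_mul_add_rpow_add_rpow {p R R₀ u₁ u₂ : ℝ} (hp : 2 ≤ p) (hR : 0 ≤ R)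
    (hRR₀ : R ≤ R₀) (hu₁ : 0 ≤ u₁) (hu₂ : 0 ≤ u₂) :
    ((R + (u₁ + u₂)) ^ 2) ^ (p / 2 - 1) * ((2 * R + (u₁ + u₂)) * (u₁ + u₂))
      ≤ 2 * 2 ^ (p - 2) * (R₀ ^ (p - 2) + 2 ^ (p - 1)) * (R * (u₁ + u₂) + u₁ ^ p + u₂ ^ p) := by
  set u := u₁ + u₂
  have hu : 0 ≤ u := by positivity
  have hS : 0 ≤ R + u := by positivity
  have hsq : ((R + u) ^ 2) ^ (p / 2 - 1) = (R + u) ^ (p - 2) := by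
    rw [← rpow_natCast, ← rpow_mul hS]
    congr 1
    push_cast
    ring
  have hadd : (R + u) ^ (p - 1) ≤ 2 ^ (p - 2) * (R ^ (p - 1) + u ^ (p - 1)) := by
    have := rpow_add_le_two_rpow_mul (p := p - 1) (by linarith) hR hu
    rwa [show p - 1 - 1 = p - 2 by ring] at this
  have hsucc : ∀ x : ℝ, 0 ≤ x → x ^ (p - 2) * x = x ^ (p - 1) := fun x hx => by
    rw [← rpow_add_one' hx (by linarith)]; ring_nf
  have hR' : R ^ (p - 1) ≤ R₀ ^ (p - 2) * R := by
    rw [← hsucc R hR]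
    gcongr
  have hu' : u ^ (p - 1) * u = u ^ p := by
    rw [← rpow_add_one' hu (by linarith)]; ring_nf
  have hsplit : u ^ p ≤ 2 ^ (p - 1) * (u₁ ^ p + u₂ ^ p) :=
    rpow_add_le_two_rpow_mul (by linarith) hu₁ hu₂
  have hR₀ : (0 : ℝ) ≤ R₀ ^ (p - 2) := rpow_nonneg (hR.trans hRR₀) _
  have h2' : (0 : ℝ) ≤ 2 ^ (p - 1) := by positivity
  have hup : 0 ≤ u₁ ^ p + u₂ ^ p := by positivity
  calc ((R + u) ^ 2) ^ (p / 2 - 1) * ((2 * R + u) * u)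
      ≤ (R + u) ^ (p - 2) * (2 * ((R + u) * u)) := by
        rw [hsq]
        exact mul_le_mul_of_nonneg_left (by nlinarith) (rpow_nonneg hS _)
    _ = 2 * (R + u) ^ (p - 1) * u := by rw [← hsucc _ hS]; ring
    _ ≤ 2 * (2 ^ (p - 2) * (R ^ (p - 1) + u ^ (p - 1))) * u := by gcongr
    _ = 2 * 2 ^ (p - 2) * (R ^ (p - 1) * u + u ^ (p - 1) * u) := by ring
    _ ≤ 2 * 2 ^ (p - 2) * (R₀ ^ (p - 2) * (R * u) + 2 ^ (p - 1) * (u₁ ^ p + u₂ ^ p)) := by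
        rw [hu']
        have := mul_le_mul_of_nonneg_right hR' hu
        exact mul_le_mul_of_nonneg_left (by nlinarith) (by positivity)
    _ ≤ 2 * 2 ^ (p - 2) * (R₀ ^ (p - 2) + 2 ^ (p - 1)) * (R * u + u₁ ^ p + u₂ ^ p) := by
        rw [mul_assoc _ (_ + _)]
        exact mul_le_mul_of_nonneg_left (by nlinarith [mul_nonneg hR hu]) (by positivity)

theorem stmt_12 (p q : ℝ) (hp : 10 / 3 < p) (hq : 0 < q) (hqp : q < p)
    (F F' : ℝ → ℝ)
    (hF : ∀ x : ℝ, 0 ≤ x → F x = x ^ (p / 2) / (1 + x ^ ((p - q) / 2)))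
    (hF' : ∀ x : ℝ, 0 < x → HasDerivAt F (F' x) x)
    (hF'0 : F' 0 = 0)
    (f₀ : ℝ → ℂ → ℂ)
    (hf₀ : ∀ (R : ℝ) (v : ℂ), f₀ R v =
      (F (‖(R : ℂ) + v‖ ^ 2) : ℂ) * ((R : ℂ) + v)
        - (F (R ^ 2) : ℂ) * (R : ℂ)
        - ((F (R ^ 2) + F' (R ^ 2) * R ^ 2 : ℝ) : ℂ) * v
        - ((F' (R ^ 2) * R ^ 2 : ℝ) : ℂ) * (starRingEnd ℂ) v) :
    ∀ R₀ : ℝ, 0 < R₀ → ∃ C : ℝ, 0 < C ∧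
      ∀ R : ℝ, 0 ≤ R → R ≤ R₀ →
        ∀ v₁ v₂ : ℂ, ‖v₁‖ ≤ 1 → ‖v₂‖ ≤ 1 →
          ‖f₀ R v₁ - f₀ R v₂‖
            ≤ C * (R * (‖v₁‖ + ‖v₂‖)
                + ‖v₁‖ ^ p + ‖v₂‖ ^ p) * ‖v₁ - v₂‖ := by
  intro R₀ hR₀
  obtain rfl : f₀ = linearizationRemainder F F' := funext fun R => funext (hf₀ R)
  set r := p / 2
  set s := (p - q) / 2
  have hr : 1 < r := by unfold r; linarith
  have hs : 0 < s := by unfold s; linarith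
  have hsr : s < r := by unfold r s; linarith
  have hF'eq : ∀ x, 0 ≤ x → F' x = satDeriv r s x :=
    fun x hx => eq_satDeriv_of_hasDerivAt hr hF hF' hF'0 hx
  have hmvt : ∀ a b : ℝ, 0 ≤ a → 0 ≤ b → ∃ ξ ∈ uIcc a b, F a - F b = F' ξ * (a - b) :=
    fun a b => exists_mem_uIcc_sub_eq_mul_sub_of_nonneg
      ((continuousOn_rpow_div (by linarith) hs.le).congr hF) hF'
  set M := (R₀ + 2) ^ 2
  set K := r * max 1 (r - 1) + (r + s) * max 1 s * M ^ s
  have hK : 0 ≤ K := by positivity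
  refine ⟨(4 * r + 2 * K) * (2 * 2 ^ (p - 2) * (R₀ ^ (p - 2) + 2 ^ (p - 1))), by positivity, ?_⟩
  intro R hR hRR₀ v₁ v₂ hv₁ hv₂
  set X := (R + (‖v₁‖ + ‖v₂‖)) ^ 2
  have hXM : X ≤ M := pow_le_pow_left₀ (by positivity) (by linarith) 2
  calc _ ≤ (4 * (r * X ^ (r - 1)) + 2 * (K * X ^ (r - 1)))
        * ((2 * R + (‖v₁‖ + ‖v₂‖)) * (‖v₁‖ + ‖v₂‖)) * ‖v₁ - v₂‖ :=
        norm_linearizationRemainder_sub_le hR le_rfl hmvt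
          (fun x hx hxX => hF'eq x hx ▸ abs_satDeriv_le hr.le hsr.le hs.le hx hxX)
          (by positivity)
          (fun x y hx hy hxX hyX => hF'eq x hx ▸ hF'eq y hy ▸
            mul_abs_satDeriv_sub_le hr.le hsr.le hs.le hx hy hxX hyX hXM)
    _ = (4 * r + 2 * K) * (X ^ (r - 1) * ((2 * R + (‖v₁‖ + ‖v₂‖)) * (‖v₁‖ + ‖v₂‖)))
        * ‖v₁ - v₂‖ := by ring
    _ ≤ (4 * r + 2 * K) * (2 * 2 ^ (p - 2) * (R₀ ^ (p - 2) + 2 ^ (p - 1))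
        * (R * (‖v₁‖ + ‖v₂‖) + ‖v₁‖ ^ p + ‖v₂‖ ^ p)) * ‖v₁ - v₂‖ :=
        mul_le_mul_of_nonneg_right (mul_le_mul_of_nonneg_left
          (rpow_mul_le_mul_add_rpow_add_rpow (by linarith) hR hRR₀ (norm_nonneg _)
            (norm_nonneg _)) (by positivity)) (norm_nonneg _)
    _ = _ := by ring
end

section
/- Let d ≥ 1, let M be a natural number, and let c > 0. Let φ : ℝ^d → ℂ be a Schwartz function such that ∫_{ℝ^d} y^α φ(y) dy = 0 for every multi-index α with |α| ≤ 2M. Then there is a constant C > 0 such that for all t ≥ 1 and all x ∈ ℝ^d: | ∫_{ℝ^d} e^{ i |x−y|² / (4t) } φ(y) dy | ≤ C · e^{c|x|} · t^{−M}. -/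
/-!
Expand `exp (i s)`, `s = ‖x - y‖² / (4t)`, to order `M` in `s`. As a function of `y`, each
Taylor term `s ^ k` with `k ≤ M` is a polynomial of degree `≤ 2M`, so the Taylor polynomial
integrates to zero against `φ`. The remainder is at most
`s ^ (M + 1) ≤ ((1 + ‖x‖) (1 + ‖y‖)) ^ (2M + 2) / (4t) ^ (M + 1)`, and `(1 + ‖x‖) ^ (2M + 2)` is
dominated by a multiple of `exp (c ‖x‖)`.
-/

open Real MeasureTheory
open Complex Finset MvPolynomial
open scoped SchwartzMap

namespace Complex

lemma hasDerivAt_exp_I_mul_sub_sum (n : ℕ) (z : ℂ) :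
    HasDerivAt (fun w => cexp (I * w) - ∑ k ∈ range (n + 1), (I * w) ^ k / k.factorial)
      (I * (cexp (I * z) - ∑ k ∈ range n, (I * z) ^ k / k.factorial)) z := by
  have hexp : HasDerivAt (fun w => cexp (I * w)) (cexp (I * z) * I) z := by
    simpa using ((hasDerivAt_id z).const_mul I).cexp
  have hterm : ∀ k : ℕ, HasDerivAt (fun w => (I * w) ^ k / k.factorial)
      (k * (I * z) ^ (k - 1) * I / k.factorial) z := fun k => by
    simpa using (((hasDerivAt_id z).const_mul I).pow k).div_const (k.factorial : ℂ)
  have hsum : ∑ k ∈ range (n + 1), (k * (I * z) ^ (k - 1) * I / k.factorial : ℂ)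
      = I * ∑ k ∈ range n, (I * z) ^ k / k.factorial := by
    rw [sum_range_succ', mul_sum]
    simp only [CharP.cast_eq_zero, zero_mul, zero_div, add_zero, Nat.factorial_succ,
      Nat.cast_mul, Nat.add_sub_cancel, Nat.cast_succ]
    refine sum_congr rfl fun k _ => ?_
    have : (k.factorial : ℂ) ≠ 0 := by exact_mod_cast k.factorial_ne_zero
    field_simp
  have h := hexp.fun_sub (HasDerivAt.fun_sum (u := range (n + 1)) fun k _ => hterm k)
  rw [hsum] at h
  exact h.congr_deriv (by ring)

lemma norm_exp_I_mul_ofReal_sub_sum_le (n : ℕ) (s : ℝ) :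
    ‖cexp (I * s) - ∑ k ∈ range n, (I * s) ^ k / (k.factorial : ℂ)‖ ≤ |s| ^ n := by
  induction n generalizing s with
  | zero => simp [norm_exp_I_mul_ofReal]
  | succ n ih =>
    set R : ℕ → ℝ → ℂ := fun m u => cexp (I * u) - ∑ k ∈ range m, (I * u) ^ k / (k.factorial : ℂ)
    have hftc : ∫ u in (0 : ℝ)..s, I * R n u = R (n + 1) s := by
      rw [intervalIntegral.integral_eq_sub_of_hasDerivAt
        (fun u _ => (hasDerivAt_exp_I_mul_sub_sum n u).comp_ofReal)
        ((by fun_prop : Continuous fun u => I * R n u).intervalIntegrable 0 s)]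
      simp [R, sum_range_succ']
    have hR : ∀ u ∈ Set.uIoc (0 : ℝ) s, ‖I * R n u‖ ≤ |s| ^ n := fun u hu => by
      have hus : |u| ≤ |s| := by simpa using Set.abs_sub_left_of_mem_uIcc (Set.uIoc_subset_uIcc hu)
      rw [norm_mul, norm_I, one_mul]
      exact (ih u).trans (pow_le_pow_left₀ (abs_nonneg u) hus n)
    calc ‖R (n + 1) s‖ = ‖∫ u in (0 : ℝ)..s, I * R n u‖ := by rw [hftc]
      _ ≤ |s| ^ n * |s - 0| := intervalIntegral.norm_integral_le_of_norm_le_const hR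
      _ = |s| ^ (n + 1) := by rw [sub_zero, pow_succ]

end Complex

lemma norm_sub_le_one_add_mul_one_add {E : Type*} [SeminormedAddCommGroup E] (x y : E) :
    ‖x - y‖ ≤ (1 + ‖x‖) * (1 + ‖y‖) := by
  nlinarith [norm_sub_le x y, mul_nonneg (norm_nonneg x) (norm_nonneg y)]

lemma one_add_pow_le_mul_exp {c : ℝ} (hc : 0 < c) (n : ℕ) {r : ℝ} (hr : 0 ≤ r) :
    (1 + r) ^ n ≤ n.factorial * Real.exp c / c ^ n * Real.exp (c * r) := by
  have h := Real.pow_div_factorial_le_exp _ (by positivity : 0 ≤ c * (1 + r)) n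
  rw [div_le_iff₀ (by positivity), mul_pow, mul_add, mul_one, Real.exp_add] at h
  rw [div_mul_eq_mul_div, le_div_iff₀ (by positivity)]
  linarith

section SquaredDistance

variable {ι : Type*} [Fintype ι]

noncomputable def sqDistPoly (x : EuclideanSpace ℝ ι) : MvPolynomial ι ℝ :=
  ∑ i, (C (x i) - X i) ^ 2

lemma eval_sqDistPoly (x y : EuclideanSpace ℝ ι) :
    eval (fun i => y i) (sqDistPoly x) = ‖x - y‖ ^ 2 := by
  simp [sqDistPoly, EuclideanSpace.real_norm_sq_eq]

lemma totalDegree_sqDistPoly_le (x : EuclideanSpace ℝ ι) : (sqDistPoly x).totalDegree ≤ 2 := by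
  refine totalDegree_finsetSum_le fun i _ => (totalDegree_pow _ _).trans ?_
  have : (C (x i) - X i : MvPolynomial ι ℝ).totalDegree ≤ 1 :=
    (totalDegree_sub _ _).trans (by simp)
  omega

end SquaredDistance

namespace SchwartzMap

section

variable {D V : Type*} [NormedAddCommGroup D] [NormedSpace ℝ D] [MeasurableSpace D] [BorelSpace D]
  [SecondCountableTopology D] [NormedAddCommGroup V] [NormedSpace ℝ V]

lemma integrable_one_add_norm_pow_mul (μ : Measure D) [μ.HasTemperateGrowth] (φ : 𝓢(D, V))
    (n : ℕ) : Integrable (fun x => (1 + ‖x‖) ^ n * ‖φ x‖) μ := by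
  refine (((φ.integrable_pow_mul μ 0).add (φ.integrable_pow_mul μ n)).const_mul (2 ^ (n - 1))).mono'
    (by fun_prop) (.of_forall fun x => ?_)
  have h := add_pow_le zero_le_one (norm_nonneg x) n
  simp only [Pi.add_apply, norm_mul, norm_pow, norm_norm, pow_zero, one_pow, one_mul] at h ⊢
  rw [Real.norm_of_nonneg (by positivity)]
  nlinarith [norm_nonneg (φ x)]

end

variable {ι : Type*} [Fintype ι] (φ : 𝓢(EuclideanSpace ℝ ι, ℂ))

lemma integrable_monomial_mul (α : ι → ℕ) :
    Integrable fun y : EuclideanSpace ℝ ι => ((∏ i, y i ^ α i : ℝ) : ℂ) * φ y := by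
  refine (φ.integrable_pow_mul volume (∑ i, α i)).mono' (by fun_prop) (.of_forall fun y => ?_)
  rw [norm_mul, Complex.norm_real, norm_prod, ← prod_pow_eq_pow_sum]
  gcongr with i
  rw [norm_pow]
  exact pow_le_pow_left₀ (norm_nonneg _) (PiLp.norm_apply_le y i) _

lemma ofReal_eval_mul_eq_sum (p : MvPolynomial ι ℝ) (y : EuclideanSpace ℝ ι) :
    (eval (fun i => y i) p : ℂ) * φ y
      = ∑ v ∈ p.support, ((p.coeff v : ℝ) : ℂ) * (((∏ i, y i ^ v i : ℝ) : ℂ) * φ y) := by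
  rw [eval_eq', ofReal_sum, sum_mul]
  exact sum_congr rfl fun v _ => by push_cast; ring

lemma integrable_ofReal_eval_mul (p : MvPolynomial ι ℝ) :
    Integrable fun y : EuclideanSpace ℝ ι => (eval (fun i => y i) p : ℂ) * φ y := by
  simp_rw [ofReal_eval_mul_eq_sum]
  exact integrable_finsetSum _ fun v _ => (φ.integrable_monomial_mul v).const_mul _

lemma integral_ofReal_eval_mul_eq_zero {m : ℕ}
    (hmom : ∀ α : ι → ℕ, ∑ i, α i ≤ m →
      ∫ y : EuclideanSpace ℝ ι, ((∏ i, y i ^ α i : ℝ) : ℂ) * φ y = 0)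
    {p : MvPolynomial ι ℝ} (hp : p.totalDegree ≤ m) :
    ∫ y : EuclideanSpace ℝ ι, (eval (fun i => y i) p : ℂ) * φ y = 0 := by
  simp_rw [ofReal_eval_mul_eq_sum]
  rw [integral_finsetSum p.support fun v _ => (φ.integrable_monomial_mul v).const_mul _]
  refine sum_eq_zero fun v hv => ?_
  have hv_deg : ∑ i, v i ≤ m := by
    simpa [Finsupp.sum_fintype] using (le_totalDegree hv).trans hp
  rw [integral_const_mul, hmom v hv_deg, mul_zero]

lemma taylor_exp_mul_eq_sum_eval (n : ℕ) (x y : EuclideanSpace ℝ ι) (a : ℝ) :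
    (∑ k ∈ range n, (I * ((‖x - y‖ ^ 2 / a : ℝ) : ℂ)) ^ k / (k.factorial : ℂ)) * φ y
      = ∑ k ∈ range n, (I / a) ^ k / (k.factorial : ℂ) *
          ((eval (fun i => y i) (sqDistPoly x ^ k) : ℂ) * φ y) := by
  rw [sum_mul]
  refine sum_congr rfl fun k _ => ?_
  rw [map_pow, eval_sqDistPoly]
  push_cast
  ring

lemma integral_taylor_exp_mul_eq_zero {M : ℕ}
    (hmom : ∀ α : ι → ℕ, ∑ i, α i ≤ 2 * M →
      ∫ y : EuclideanSpace ℝ ι, ((∏ i, y i ^ α i : ℝ) : ℂ) * φ y = 0)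
    (x : EuclideanSpace ℝ ι) (a : ℝ) :
    ∫ y : EuclideanSpace ℝ ι,
      (∑ k ∈ range (M + 1), (I * ((‖x - y‖ ^ 2 / a : ℝ) : ℂ)) ^ k / (k.factorial : ℂ)) * φ y
      = 0 := by
  simp_rw [taylor_exp_mul_eq_sum_eval]
  rw [integral_finsetSum _ fun k _ => (φ.integrable_ofReal_eval_mul _).const_mul _]
  refine sum_eq_zero fun k hk => ?_
  have hdeg : (sqDistPoly x ^ k).totalDegree ≤ 2 * M :=
    (totalDegree_pow _ _).trans <| by
      nlinarith [totalDegree_sqDistPoly_le x, mem_range.1 hk]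
  rw [integral_const_mul, φ.integral_ofReal_eval_mul_eq_zero hmom hdeg, mul_zero]

lemma norm_integral_exp_I_mul_norm_sub_sq_div_le {M : ℕ}
    (hmom : ∀ α : ι → ℕ, ∑ i, α i ≤ 2 * M →
      ∫ y : EuclideanSpace ℝ ι, ((∏ i, y i ^ α i : ℝ) : ℂ) * φ y = 0)
    (x : EuclideanSpace ℝ ι) {a : ℝ} (ha : 0 < a) :
    ‖∫ y : EuclideanSpace ℝ ι, cexp (I * ((‖x - y‖ ^ 2 / a : ℝ) : ℂ)) * φ y‖
      ≤ (1 + ‖x‖) ^ (2 * (M + 1)) *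
          (∫ y : EuclideanSpace ℝ ι, (1 + ‖y‖) ^ (2 * (M + 1)) * ‖φ y‖) / a ^ (M + 1) := by
  set s : EuclideanSpace ℝ ι → ℝ := fun y => ‖x - y‖ ^ 2 / a
  set T : EuclideanSpace ℝ ι → ℂ := fun y =>
    ∑ k ∈ range (M + 1), (I * (s y : ℂ)) ^ k / (k.factorial : ℂ)
  have hT_int : Integrable fun y => T y * φ y := by
    simp_rw [T, s, taylor_exp_mul_eq_sum_eval]
    exact integrable_finsetSum _ fun k _ => (φ.integrable_ofReal_eval_mul _).const_mul _
  have hexp_int : Integrable fun y => cexp (I * (s y : ℂ)) * φ y :=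
    φ.integrable.norm.mono' (by fun_prop) (.of_forall fun y => by
      rw [norm_mul, norm_exp_I_mul_ofReal, one_mul])
  have hremainder : ∀ y, ‖(cexp (I * (s y : ℂ)) - T y) * φ y‖
      ≤ (1 + ‖x‖) ^ (2 * (M + 1)) / a ^ (M + 1) * ((1 + ‖y‖) ^ (2 * (M + 1)) * ‖φ y‖) := by
    intro y
    have hs : |s y| ^ (M + 1) ≤ ((1 + ‖x‖) * (1 + ‖y‖)) ^ (2 * (M + 1)) / a ^ (M + 1) := by
      rw [abs_of_nonneg (by positivity), div_pow, pow_mul]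
      gcongr
      exact norm_sub_le_one_add_mul_one_add x y
    calc ‖(cexp (I * (s y : ℂ)) - T y) * φ y‖ ≤ |s y| ^ (M + 1) * ‖φ y‖ := by
          rw [norm_mul]; gcongr; exact norm_exp_I_mul_ofReal_sub_sum_le (M + 1) (s y)
      _ ≤ ((1 + ‖x‖) * (1 + ‖y‖)) ^ (2 * (M + 1)) / a ^ (M + 1) * ‖φ y‖ := by gcongr
      _ = _ := by rw [mul_pow]; ring
  calc ‖∫ y, cexp (I * (s y : ℂ)) * φ y‖
      = ‖∫ y, (cexp (I * (s y : ℂ)) - T y) * φ y‖ := by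
        simp_rw [sub_mul]
        rw [integral_sub hexp_int hT_int, φ.integral_taylor_exp_mul_eq_zero hmom, sub_zero]
    _ ≤ ∫ y, (1 + ‖x‖) ^ (2 * (M + 1)) / a ^ (M + 1) * ((1 + ‖y‖) ^ (2 * (M + 1)) * ‖φ y‖) :=
        norm_integral_le_of_norm_le ((φ.integrable_one_add_norm_pow_mul volume _).const_mul _)
          (.of_forall hremainder)
    _ = _ := by rw [integral_const_mul]; ring

end SchwartzMap

theorem stmt_13_general (d : ℕ) (M : ℕ) (c : ℝ) (hc : 0 < c)
    (φ : SchwartzMap (EuclideanSpace ℝ (Fin d)) ℂ)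
    (hmom : ∀ α : Fin d → ℕ, (∑ i, α i) ≤ 2 * M →
      ∫ y : EuclideanSpace ℝ (Fin d), ((∏ i, (y i) ^ (α i) : ℝ) : ℂ) * φ y = 0) :
    ∃ C : ℝ, 0 < C ∧ ∀ t : ℝ, 1 ≤ t → ∀ x : EuclideanSpace ℝ (Fin d),
      ‖∫ y : EuclideanSpace ℝ (Fin d),
          Complex.exp (Complex.I * ((‖x - y‖ ^ 2 / (4 * t) : ℝ) : ℂ)) * φ y‖
        ≤ C * Real.exp (c * ‖x‖) * t ^ (-(M : ℝ)) := by
  set n := 2 * (M + 1)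
  set B := ∫ y : EuclideanSpace ℝ (Fin d), (1 + ‖y‖) ^ n * ‖φ y‖
  set K := n.factorial * Real.exp c / c ^ n
  have hB : 0 ≤ B := integral_nonneg fun y => by positivity
  refine ⟨K * (B + 1), by positivity, fun t ht x => ?_⟩
  have ht_pow : t ^ M ≤ (4 * t) ^ (M + 1) :=
    (pow_le_pow_right₀ ht M.le_succ).trans (pow_le_pow_left₀ (by linarith) (by linarith) _)
  calc _ ≤ (1 + ‖x‖) ^ n * B / (4 * t) ^ (M + 1) :=
        φ.norm_integral_exp_I_mul_norm_sub_sq_div_le hmom x (by linarith)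
    _ ≤ K * Real.exp (c * ‖x‖) * (B + 1) / t ^ M := by
        gcongr
        · exact one_add_pow_le_mul_exp hc n (norm_nonneg x)
        · linarith
    _ = K * (B + 1) * Real.exp (c * ‖x‖) * t ^ (-(M : ℝ)) := by
        rw [rpow_neg (by linarith), rpow_natCast]
        ring

theorem stmt_13 (d : ℕ) (hd : 1 ≤ d) (M : ℕ) (c : ℝ) (hc : 0 < c)
    (φ : SchwartzMap (EuclideanSpace ℝ (Fin d)) ℂ)
    (hmom : ∀ α : Fin d → ℕ, (∑ i, α i) ≤ 2 * M →
      ∫ y : EuclideanSpace ℝ (Fin d), ((∏ i, (y i) ^ (α i) : ℝ) : ℂ) * φ y = 0) :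
    ∃ C : ℝ, 0 < C ∧ ∀ t : ℝ, 1 ≤ t → ∀ x : EuclideanSpace ℝ (Fin d),
      ‖∫ y : EuclideanSpace ℝ (Fin d),
          Complex.exp (Complex.I * ((‖x - y‖ ^ 2 / (4 * t) : ℝ) : ℂ)) * φ y‖
        ≤ C * Real.exp (c * ‖x‖) * t ^ (-(M : ℝ)) :=
  stmt_13_general d M c hc φ hmom
end

section
/- Let d ≥ 1, let β : ℝ → ℝ be continuous, set G(t) = ∫₀ᵗ β(s) ds, and let u : ℝ × ℝ^d → ℂ be a smooth map such that for every compact interval J ⊆ ℝ, every n ∈ ℕ, and all spatial multi-indices α, the quantities sup_{t∈J, x} (1+|x|)^n |∂_x^α u(t,x)| and sup_{t∈J, x} (1+|x|)^n |∂_x^α ∂_t u(t,x)| are finite. Assume that for all (t,x): i ∂_t u(t,x) + Δu(t,x) + β(|u(t,x)|²) u(t,x) = 0. Then for every t ∈ ℝ: ∫_{ℝ^d} |∇_x u(t,x)|² dx − ∫_{ℝ^d} G(|u(t,x)|²) dx = ∫_{ℝ^d} |∇_x u(0,x)|² dx − ∫_{ℝ^d} G(|u(0,x)|²) dx. -/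
open Real MeasureTheory Complex ContinuousLinearMap

set_option maxHeartbeats 1000000

noncomputable def Bre : ℂ →L[ℝ] ℂ →L[ℝ] ℝ :=
  (ContinuousLinearMap.compL ℝ ℂ ℂ ℝ Complex.reCLM).comp
    (((ContinuousLinearMap.compL ℝ ℂ ℂ ℂ).flip
        (Complex.conjCLE : ℂ ≃L[ℝ] ℂ).toContinuousLinearMap).comp
      (ContinuousLinearMap.mul ℝ ℂ))

@[simp] lemma Bre_apply (z w : ℂ) : Bre z w = (z * (starRingEnd ℂ) w).re := rfl

lemma norm_Bre_le (z w : ℂ) : ‖Bre z w‖ ≤ ‖z‖ * ‖w‖ := by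
  simp only [Bre_apply, Real.norm_eq_abs]
  calc |(z * (starRingEnd ℂ) w).re| ≤ ‖z * (starRingEnd ℂ) w‖ :=
        Complex.abs_re_le_norm _
    _ = ‖z‖ * ‖w‖ := by simp

lemma hasDerivAt_normSq {z : ℝ → ℂ} {z' : ℂ} {t : ℝ} (h : HasDerivAt z z' t) :
    HasDerivAt (fun s => Complex.normSq (z s)) (2 * (z' * (starRingEnd ℂ) (z t)).re) t := by
  have hre : HasDerivAt (fun s => (z s).re) z'.re t :=
    (Complex.reCLM.hasFDerivAt.comp_hasDerivAt t h)
  have him : HasDerivAt (fun s => (z s).im) z'.im t :=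
    (Complex.imCLM.hasFDerivAt.comp_hasDerivAt t h)
  have := ((hre.mul hre).add (him.mul him))
  have h2 : (2:ℝ) * (z' * (starRingEnd ℂ) (z t)).re
      = z'.re * (z t).re + (z t).re * z'.re + (z'.im * (z t).im + (z t).im * z'.im) := by
    simp [Complex.mul_re, Complex.conj_re, Complex.conj_im]; ring
  rw [h2]
  refine this.congr_of_eventuallyEq (Filter.Eventually.of_forall fun s => ?_)
  simp [Complex.normSq_apply]

lemma integrable_invpow {d : ℕ} :
    Integrable (fun x : EuclideanSpace ℝ (Fin d) => ((1 + ‖x‖) ^ (d + 1) : ℝ)⁻¹) := by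
  have h : ((Module.finrank ℝ (EuclideanSpace ℝ (Fin d)) : ℝ)) < (d + 1 : ℝ) := by
    simp [finrank_euclideanSpace_fin]
  have := integrable_one_add_norm (E := EuclideanSpace ℝ (Fin d)) (μ := volume) h
  refine this.congr (Filter.Eventually.of_forall fun x => ?_)
  have h1 : (0:ℝ) < 1 + ‖x‖ := by positivity
  simp only []
  rw [show (-(↑d + 1) : ℝ) = (-((d+1:ℕ):ℝ)) by push_cast; ring]
  rw [Real.rpow_neg h1.le, Real.rpow_natCast]

lemma hasDerivAt_G {β : ℝ → ℝ} (hβ : Continuous β) {G : ℝ → ℝ}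
    (hG : ∀ t : ℝ, G t = ∫ s in (0:ℝ)..t, β s) (r : ℝ) :
    HasDerivAt G (β r) r := by
  have : HasDerivAt (fun t => ∫ s in (0:ℝ)..t, β s) (β r) r :=
    intervalIntegral.integral_hasDerivAt_right (hβ.intervalIntegrable _ _)
      (hβ.stronglyMeasurableAtFilter _ _) hβ.continuousAt
  exact this.congr_deriv rfl |>.congr_of_eventuallyEq (Filter.Eventually.of_forall fun t => (hG t)) |>.congr_deriv rfl

section Core
variable {d : ℕ} {u : ℝ → EuclideanSpace ℝ (Fin d) → ℂ}


variable (hsmooth : ContDiff ℝ (⊤ : ℕ∞) (fun p : ℝ × (EuclideanSpace ℝ (Fin d)) => u p.1 p.2))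
include hsmooth

lemma hV (p : ℝ × (EuclideanSpace ℝ (Fin d))) :
    HasFDerivAt (fun p : ℝ × (EuclideanSpace ℝ (Fin d)) => u p.1 p.2)
      (fderiv ℝ (fun p : ℝ × (EuclideanSpace ℝ (Fin d)) => u p.1 p.2) p) p :=
  (hsmooth.differentiable (by simp) p).hasFDerivAt

lemma smooth_F1 : ContDiff ℝ (⊤ : ℕ∞) (fderiv ℝ (fun p : ℝ × (EuclideanSpace ℝ (Fin d)) => u p.1 p.2)) :=
  hsmooth.fderiv_right (by simp)

lemma hF1 (p : ℝ × (EuclideanSpace ℝ (Fin d))) :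
    HasFDerivAt (fderiv ℝ (fun p : ℝ × (EuclideanSpace ℝ (Fin d)) => u p.1 p.2))
      (fderiv ℝ (fderiv ℝ (fun p : ℝ × (EuclideanSpace ℝ (Fin d)) => u p.1 p.2)) p) p :=
  ((smooth_F1 hsmooth).differentiable (by simp) p).hasFDerivAt

lemma symmF2 (p a b) :
    fderiv ℝ (fderiv ℝ (fun p : ℝ × (EuclideanSpace ℝ (Fin d)) => u p.1 p.2)) p a b
      = fderiv ℝ (fderiv ℝ (fun p : ℝ × (EuclideanSpace ℝ (Fin d)) => u p.1 p.2)) p b a :=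
  second_derivative_symmetric (hV hsmooth) (hF1 hsmooth p) a b

lemma hasDerivAt_u (t : ℝ) (x : (EuclideanSpace ℝ (Fin d))) :
    HasDerivAt (fun s => u s x)
      (fderiv ℝ (fun p : ℝ × (EuclideanSpace ℝ (Fin d)) => u p.1 p.2) (t, x) (1, 0)) t := by
  have h1 : HasDerivAt (fun s : ℝ => (s, x)) ((1 : ℝ), (0 : (EuclideanSpace ℝ (Fin d)))) t :=
    (hasDerivAt_id t).prodMk (hasDerivAt_const t x)
  exact (hV hsmooth (t, x)).comp_hasDerivAt t h1

lemma deriv_u_eq (t : ℝ) (x : (EuclideanSpace ℝ (Fin d))) :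
    deriv (fun s => u s x) t = fderiv ℝ (fun p : ℝ × (EuclideanSpace ℝ (Fin d)) => u p.1 p.2) (t, x) (1, 0) :=
  (hasDerivAt_u hsmooth t x).deriv

lemma hasFDerivAt_ux (t : ℝ) (x : (EuclideanSpace ℝ (Fin d))) :
    HasFDerivAt (u t)
      ((fderiv ℝ (fun p : ℝ × (EuclideanSpace ℝ (Fin d)) => u p.1 p.2) (t, x)).comp (ContinuousLinearMap.inr ℝ ℝ (EuclideanSpace ℝ (Fin d)))) x := by
  have h1 : HasFDerivAt (fun y : (EuclideanSpace ℝ (Fin d)) => ((t : ℝ), y)) (ContinuousLinearMap.inr ℝ ℝ (EuclideanSpace ℝ (Fin d))) x :=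
    (hasFDerivAt_const t x).prodMk (hasFDerivAt_id x)
  exact (hV hsmooth (t, x)).comp x h1

lemma fderiv_ux_apply (t : ℝ) (x : (EuclideanSpace ℝ (Fin d))) (w : (EuclideanSpace ℝ (Fin d))) :
    fderiv ℝ (u t) x w = fderiv ℝ (fun p : ℝ × (EuclideanSpace ℝ (Fin d)) => u p.1 p.2) (t, x) (0, w) :=
  congrFun (congrArg _ (hasFDerivAt_ux hsmooth t x).fderiv) w

lemma contDiff_ux (t : ℝ) : ContDiff ℝ (⊤ : ℕ∞) (u t) := by
  have : (u t) = (fun p : ℝ × (EuclideanSpace ℝ (Fin d)) => u p.1 p.2) ∘ (fun y : (EuclideanSpace ℝ (Fin d)) => (t, y)) := rfl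
  rw [this]
  exact hsmooth.comp (ContDiff.prodMk contDiff_const contDiff_id)

lemma contDiff_ut (t : ℝ) : ContDiff ℝ (⊤ : ℕ∞) (fun y => deriv (fun s => u s y) t) := by
  have he : (fun y => deriv (fun s => u s y) t)
      = fun y : (EuclideanSpace ℝ (Fin d)) => fderiv ℝ (fun p : ℝ × (EuclideanSpace ℝ (Fin d)) => u p.1 p.2) (t, y) (1, 0) := by
    funext y; exact deriv_u_eq hsmooth t y
  rw [he]
  exact (((smooth_F1 hsmooth).comp (ContDiff.prodMk contDiff_const contDiff_id)).clm_apply contDiff_const)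

lemma hasFDerivAt_utx (t : ℝ) (x : (EuclideanSpace ℝ (Fin d))) :
    HasFDerivAt (fun y => deriv (fun s => u s y) t)
      (((ContinuousLinearMap.apply ℝ ℂ ((1 : ℝ), (0 : (EuclideanSpace ℝ (Fin d))))).comp
          (fderiv ℝ (fderiv ℝ (fun p : ℝ × (EuclideanSpace ℝ (Fin d)) => u p.1 p.2)) (t, x))).comp
        (ContinuousLinearMap.inr ℝ ℝ (EuclideanSpace ℝ (Fin d)))) x := by
  have he : (fun y => deriv (fun s => u s y) t)
      = fun y : (EuclideanSpace ℝ (Fin d)) => fderiv ℝ (fun p : ℝ × (EuclideanSpace ℝ (Fin d)) => u p.1 p.2) (t, y) (1, 0) := by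
    funext y; exact deriv_u_eq hsmooth t y
  rw [he]
  have h1 : HasFDerivAt (fun y : (EuclideanSpace ℝ (Fin d)) => ((t : ℝ), y)) (ContinuousLinearMap.inr ℝ ℝ (EuclideanSpace ℝ (Fin d))) x :=
    (hasFDerivAt_const t x).prodMk (hasFDerivAt_id x)
  exact ((ContinuousLinearMap.apply ℝ ℂ ((1 : ℝ), (0 : (EuclideanSpace ℝ (Fin d))))).hasFDerivAt.comp (t, x)
    (hF1 hsmooth (t, x))).comp x h1

lemma fderiv_ut_apply (t : ℝ) (x : (EuclideanSpace ℝ (Fin d))) (w : (EuclideanSpace ℝ (Fin d))) :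
    fderiv ℝ (fun y => deriv (fun s => u s y) t) x w
      = fderiv ℝ (fderiv ℝ (fun p : ℝ × (EuclideanSpace ℝ (Fin d)) => u p.1 p.2)) (t, x) (0, w) (1, 0) :=
  congrFun (congrArg _ (hasFDerivAt_utx hsmooth t x).fderiv) w

/-- Clairaut: time derivative of a spatial directional derivative. -/
lemma hasDerivAt_fderiv (t : ℝ) (x : (EuclideanSpace ℝ (Fin d))) (w : (EuclideanSpace ℝ (Fin d))) :
    HasDerivAt (fun s => fderiv ℝ (u s) x w)
      (fderiv ℝ (fun y => deriv (fun s => u s y) t) x w) t := by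
  have he : (fun s => fderiv ℝ (u s) x w)
      = fun s : ℝ => fderiv ℝ (fun p : ℝ × (EuclideanSpace ℝ (Fin d)) => u p.1 p.2) (s, x) (0, w) := by
    funext s; exact fderiv_ux_apply hsmooth s x w
  rw [he, fderiv_ut_apply hsmooth t x w, ← symmF2 hsmooth (t, x) (1, 0) (0, w)]
  have h1 : HasDerivAt (fun s : ℝ => (s, x)) ((1 : ℝ), (0 : (EuclideanSpace ℝ (Fin d)))) t :=
    (hasDerivAt_id t).prodMk (hasDerivAt_const t x)
  exact (ContinuousLinearMap.apply ℝ ℂ ((0 : ℝ), w)).hasFDerivAt.comp_hasDerivAt t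
    ((hF1 hsmooth (t, x)).comp_hasDerivAt t h1)

lemma fderiv2_ux (t : ℝ) (x : (EuclideanSpace ℝ (Fin d))) (v w : (EuclideanSpace ℝ (Fin d))) :
    fderiv ℝ (fun y => fderiv ℝ (u t) y w) x v
      = fderiv ℝ (fderiv ℝ (fun p : ℝ × (EuclideanSpace ℝ (Fin d)) => u p.1 p.2)) (t, x) (0, v) (0, w) := by
  have he : (fun y => fderiv ℝ (u t) y w)
      = fun y : (EuclideanSpace ℝ (Fin d)) => fderiv ℝ (fun p : ℝ × (EuclideanSpace ℝ (Fin d)) => u p.1 p.2) (t, y) (0, w) := by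
    funext y; exact fderiv_ux_apply hsmooth t y w
  rw [he]
  have h1 : HasFDerivAt (fun y : (EuclideanSpace ℝ (Fin d)) => ((t : ℝ), y)) (ContinuousLinearMap.inr ℝ ℝ (EuclideanSpace ℝ (Fin d))) x :=
    (hasFDerivAt_const t x).prodMk (hasFDerivAt_id x)
  have := ((ContinuousLinearMap.apply ℝ ℂ ((0 : ℝ), w)).hasFDerivAt.comp (t, x)
    (hF1 hsmooth (t, x))).comp x h1
  exact congrFun (congrArg _ this.fderiv) v

end Core

lemma norm_ee {d : ℕ} (i : Fin d) : ‖(EuclideanSpace.single i (1:ℝ) : EuclideanSpace ℝ (Fin d))‖ = 1 := by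
  rw [EuclideanSpace.norm_single]; norm_num

lemma norm_fd1 {d : ℕ} (f : EuclideanSpace ℝ (Fin d) → ℂ) (x : EuclideanSpace ℝ (Fin d)) (i : Fin d) :
    ‖fderiv ℝ f x (EuclideanSpace.single i 1)‖ ≤ ‖iteratedFDeriv ℝ 1 f x‖ := by
  calc ‖fderiv ℝ f x (EuclideanSpace.single i 1)‖
      = ‖iteratedFDeriv ℝ 1 f x ![EuclideanSpace.single i 1]‖ := by
        rw [iteratedFDeriv_one_apply]; simp
    _ ≤ ‖iteratedFDeriv ℝ 1 f x‖ * ∏ j : Fin 1, ‖(![EuclideanSpace.single i 1] :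
          Fin 1 → EuclideanSpace ℝ (Fin d)) j‖ := ContinuousMultilinearMap.le_opNorm _ _
    _ = ‖iteratedFDeriv ℝ 1 f x‖ := by simp [norm_ee]

lemma fderiv_fderiv_apply {d : ℕ} {f : EuclideanSpace ℝ (Fin d) → ℂ} (hf : ContDiff ℝ (⊤ : ℕ∞) f)
    (x : EuclideanSpace ℝ (Fin d)) (v w : EuclideanSpace ℝ (Fin d)) :
    fderiv ℝ (fun y => fderiv ℝ f y w) x v = fderiv ℝ (fderiv ℝ f) x v w := by
  have hdf : HasFDerivAt (fun y => fderiv ℝ f y w)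
      ((ContinuousLinearMap.apply ℝ ℂ w).comp (fderiv ℝ (fderiv ℝ f) x)) x :=
    (ContinuousLinearMap.apply ℝ ℂ w).hasFDerivAt.comp x
      (((hf.fderiv_right (m := (⊤ : ℕ∞)) (by simp)).differentiable (by simp)) x).hasFDerivAt
  rw [hdf.fderiv]; rfl

lemma norm_fd2 {d : ℕ} {f : EuclideanSpace ℝ (Fin d) → ℂ} (hf : ContDiff ℝ (⊤ : ℕ∞) f)
    (x : EuclideanSpace ℝ (Fin d)) (i : Fin d) :
    ‖fderiv ℝ (fun y => fderiv ℝ f y (EuclideanSpace.single i 1)) x (EuclideanSpace.single i 1)‖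
      ≤ ‖iteratedFDeriv ℝ 2 f x‖ := by
  rw [fderiv_fderiv_apply hf]
  calc ‖fderiv ℝ (fderiv ℝ f) x (EuclideanSpace.single i 1) (EuclideanSpace.single i 1)‖
      = ‖iteratedFDeriv ℝ 2 f x ![EuclideanSpace.single i 1, EuclideanSpace.single i 1]‖ := by
        rw [iteratedFDeriv_two_apply]; simp
    _ ≤ ‖iteratedFDeriv ℝ 2 f x‖ * ∏ j : Fin 2, ‖(![EuclideanSpace.single i 1,
          EuclideanSpace.single i 1] : Fin 2 → EuclideanSpace ℝ (Fin d)) j‖ :=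
        ContinuousMultilinearMap.le_opNorm _ _
    _ = ‖iteratedFDeriv ℝ 2 f x‖ := by simp [norm_ee, Fin.prod_univ_two]

lemma norm_fd0 {d : ℕ} (f : EuclideanSpace ℝ (Fin d) → ℂ) (x : EuclideanSpace ℝ (Fin d)) :
    ‖f x‖ = ‖iteratedFDeriv ℝ 0 f x‖ := by
  rw [norm_iteratedFDeriv_zero]

lemma le_mul_inv {a C p : ℝ} (hp : 0 < p) (h : p * a ≤ C) : a ≤ C * p⁻¹ := by
  rw [mul_comm, ← div_eq_inv_mul, le_div_iff₀ hp, mul_comm]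
  exact h

lemma re_mul_conj_le (z w : ℂ) : |(z * (starRingEnd ℂ) w).re| ≤ ‖z‖ * ‖w‖ := by
  have := norm_Bre_le z w
  simpa [Real.norm_eq_abs] using this

section Main
variable {d : ℕ} {u : ℝ → EuclideanSpace ℝ (Fin d) → ℂ}
variable (hsmooth : ContDiff ℝ (⊤ : ℕ∞) (fun p : ℝ × EuclideanSpace ℝ (Fin d) => u p.1 p.2))
include hsmooth

lemma hasDerivAt_u' (t : ℝ) (x : EuclideanSpace ℝ (Fin d)) :
    HasDerivAt (fun s => u s x) (deriv (fun s => u s x) t) t := by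
  rw [deriv_u_eq hsmooth t x]; exact hasDerivAt_u hsmooth t x

lemma cont_u (t : ℝ) : Continuous (u t) := (contDiff_ux hsmooth t).continuous

lemma cont_ut (t : ℝ) : Continuous (fun y => deriv (fun s => u s y) t) :=
  (contDiff_ut hsmooth t).continuous

lemma contDiff_fdu (t : ℝ) (i : Fin d) :
    ContDiff ℝ (⊤ : ℕ∞) (fun x => fderiv ℝ (u t) x (EuclideanSpace.single i 1)) :=
  ((contDiff_ux hsmooth t).fderiv_right (by simp)).clm_apply contDiff_const

lemma contDiff_fdut (t : ℝ) (i : Fin d) :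
    ContDiff ℝ (⊤ : ℕ∞) (fun x => fderiv ℝ (fun y => deriv (fun s => u s y) t) x
      (EuclideanSpace.single i 1)) :=
  ((contDiff_ut hsmooth t).fderiv_right (by simp)).clm_apply contDiff_const

lemma contDiff_ddv (t : ℝ) (i : Fin d) :
    ContDiff ℝ (⊤ : ℕ∞) (fun x => fderiv ℝ
      (fun y => fderiv ℝ (u t) y (EuclideanSpace.single i 1)) x (EuclideanSpace.single i 1)) :=
  ((contDiff_fdu hsmooth t i).fderiv_right (by simp)).clm_apply contDiff_const

lemma hasDerivAt_energy {β : ℝ → ℝ} (hβ : Continuous β) {G : ℝ → ℝ}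
    (hG : ∀ t : ℝ, G t = ∫ s in (0:ℝ)..t, β s) (t : ℝ) (x : EuclideanSpace ℝ (Fin d)) :
    HasDerivAt (fun s =>
        (∑ i : Fin d, ‖fderiv ℝ (u s) x (EuclideanSpace.single i 1)‖ ^ 2)
          - G (‖u s x‖ ^ 2))
      ((∑ i : Fin d, 2 * ((fderiv ℝ (fun y => deriv (fun s' => u s' y) t) x
            (EuclideanSpace.single i 1))
          * (starRingEnd ℂ) (fderiv ℝ (u t) x (EuclideanSpace.single i 1))).re)
        - β (‖u t x‖ ^ 2)
            * (2 * ((deriv (fun s' => u s' x) t) * (starRingEnd ℂ) (u t x)).re)) t := by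
  have h1 : ∀ i : Fin d, HasDerivAt
      (fun s => Complex.normSq (fderiv ℝ (u s) x (EuclideanSpace.single i 1)))
      (2 * ((fderiv ℝ (fun y => deriv (fun s' => u s' y) t) x (EuclideanSpace.single i 1))
        * (starRingEnd ℂ) (fderiv ℝ (u t) x (EuclideanSpace.single i 1))).re) t :=
    fun i => hasDerivAt_normSq (hasDerivAt_fderiv hsmooth t x (EuclideanSpace.single i 1))
  have hsum := HasDerivAt.sum (u := Finset.univ) (fun i _ => h1 i)
  have h2 : HasDerivAt (fun s => Complex.normSq (u s x))
      (2 * ((deriv (fun s' => u s' x) t) * (starRingEnd ℂ) (u t x)).re) t :=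
    hasDerivAt_normSq (hasDerivAt_u' hsmooth t x)
  have h3 : HasDerivAt (fun s => G (Complex.normSq (u s x)))
      (β (Complex.normSq (u t x))
        * (2 * ((deriv (fun s' => u s' x) t) * (starRingEnd ℂ) (u t x)).re)) t :=
    (hasDerivAt_G hβ hG (Complex.normSq (u t x))).comp t h2
  have := hsum.sub h3
  simp only [← Complex.sq_norm] at this
  exact this.congr_of_eventuallyEq (Filter.Eventually.of_forall fun s => by simp [Finset.sum_apply])

end Main

lemma cont_G {β : ℝ → ℝ} (hβ : Continuous β) {G : ℝ → ℝ}
    (hG : ∀ t : ℝ, G t = ∫ s in (0:ℝ)..t, β s) : Continuous G :=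
  continuous_iff_continuousAt.2 fun r => (hasDerivAt_G hβ hG r).continuousAt

lemma G_le {β : ℝ → ℝ} (hβ : Continuous β) {G : ℝ → ℝ}
    (hG : ∀ t : ℝ, G t = ∫ s in (0:ℝ)..t, β s) {M B : ℝ}
    (hB : ∀ r ∈ Set.Icc (0:ℝ) M, ‖β r‖ ≤ B) {r : ℝ} (hr : r ∈ Set.Icc (0:ℝ) M) :
    |G r| ≤ B * r := by
  rw [hG r]
  have h := intervalIntegral.norm_integral_le_of_norm_le_const
    (f := β) (a := 0) (b := r) (C := B) ?_
  · rw [Real.norm_eq_abs] at h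
    calc |∫ s in (0:ℝ)..r, β s| ≤ B * |r - 0| := h
      _ = B * r := by rw [sub_zero, _root_.abs_of_nonneg hr.1]
  · intro y hy
    rw [Set.uIoc_of_le hr.1] at hy
    exact hB y ⟨hy.1.le, hy.2.trans hr.2⟩

section Main2
variable {d : ℕ} {u : ℝ → EuclideanSpace ℝ (Fin d) → ℂ}
variable (hsmooth : ContDiff ℝ (⊤ : ℕ∞) (fun p : ℝ × EuclideanSpace ℝ (Fin d) => u p.1 p.2))
variable (hdecay : ∀ J : Set ℝ, IsCompact J → ∀ n k : ℕ, ∃ C : ℝ,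
      ∀ t ∈ J, ∀ x : EuclideanSpace ℝ (Fin d),
        (1 + ‖x‖) ^ n * ‖iteratedFDeriv ℝ k (fun y => u t y) x‖ ≤ C ∧
        (1 + ‖x‖) ^ n *
            ‖iteratedFDeriv ℝ k (fun y => deriv (fun s => u s y) t) x‖ ≤ C)

include hdecay in
lemma decay' (J : Set ℝ) (hJ : IsCompact J) (n k : ℕ) : ∃ C : ℝ, 0 ≤ C ∧
    ∀ t ∈ J, ∀ x : EuclideanSpace ℝ (Fin d),
      (1 + ‖x‖) ^ n * ‖iteratedFDeriv ℝ k (fun y => u t y) x‖ ≤ C ∧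
      (1 + ‖x‖) ^ n *
          ‖iteratedFDeriv ℝ k (fun y => deriv (fun s => u s y) t) x‖ ≤ C := by
  obtain ⟨C, hC⟩ := hdecay J hJ n k
  exact ⟨max C 0, le_max_right _ _, fun t ht x =>
    ⟨(hC t ht x).1.trans (le_max_left _ _), (hC t ht x).2.trans (le_max_left _ _)⟩⟩

lemma integrable_of_le_invpow {f : EuclideanSpace ℝ (Fin d) → ℝ} (hc : Continuous f) {K : ℝ}
    (hb : ∀ x, |f x| ≤ K * ((1 + ‖x‖) ^ (d + 1))⁻¹) : Integrable f := by
  refine (integrable_invpow.const_mul K).mono' hc.aestronglyMeasurable ?_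
  refine Filter.Eventually.of_forall fun x => ?_
  rw [Real.norm_eq_abs]
  exact hb x

-- positivity of the weight
lemma wpos (x : EuclideanSpace ℝ (Fin d)) : (0:ℝ) < (1 + ‖x‖) ^ (d + 1) := by positivity

include hsmooth hdecay in
lemma integrable_P1 (t : ℝ) :
    Integrable (fun x : EuclideanSpace ℝ (Fin d) =>
      ∑ i : Fin d, ‖fderiv ℝ (u t) x (EuclideanSpace.single i 1)‖ ^ 2) := by
  obtain ⟨C1, hC1pos, hC1⟩ := decay' hdecay {t} isCompact_singleton (d + 1) 1
  obtain ⟨C2, hC2pos, hC2⟩ := decay' hdecay {t} isCompact_singleton 0 1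
  have hcont : Continuous (fun x : EuclideanSpace ℝ (Fin d) =>
      ∑ i : Fin d, ‖fderiv ℝ (u t) x (EuclideanSpace.single i 1)‖ ^ 2) := by
    refine continuous_finset_sum _ fun i _ => ?_
    have := (contDiff_fdu hsmooth t i).continuous
    continuity
  refine integrable_of_le_invpow hcont (K := d * (C2 * C1)) fun x => ?_
  have hfd : ∀ i : Fin d, ‖fderiv ℝ (u t) x (EuclideanSpace.single i 1)‖ ^ 2
      ≤ C2 * (C1 * ((1 + ‖x‖) ^ (d + 1))⁻¹) := by
    intro i
    have h1 : ‖fderiv ℝ (u t) x (EuclideanSpace.single i 1)‖ ≤ C2 := by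
      refine (norm_fd1 (u t) x i).trans ?_
      have := (hC2 t rfl x).1
      simpa using this
    have h2 : ‖fderiv ℝ (u t) x (EuclideanSpace.single i 1)‖
        ≤ C1 * ((1 + ‖x‖) ^ (d + 1))⁻¹ := by
      refine le_mul_inv (wpos x) ?_
      calc (1 + ‖x‖) ^ (d + 1) * ‖fderiv ℝ (u t) x (EuclideanSpace.single i 1)‖
          ≤ (1 + ‖x‖) ^ (d + 1) * ‖iteratedFDeriv ℝ 1 (u t) x‖ := by
            exact mul_le_mul_of_nonneg_left (norm_fd1 (u t) x i) (wpos x).le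
        _ ≤ C1 := (hC1 t rfl x).1
    calc ‖fderiv ℝ (u t) x (EuclideanSpace.single i 1)‖ ^ 2
        = ‖fderiv ℝ (u t) x (EuclideanSpace.single i 1)‖
            * ‖fderiv ℝ (u t) x (EuclideanSpace.single i 1)‖ := by
          ring
      _ ≤ C2 * (C1 * ((1 + ‖x‖) ^ (d + 1))⁻¹) :=
          mul_le_mul h1 h2 (norm_nonneg _) hC2pos
  have hsum : ∑ i : Fin d, ‖fderiv ℝ (u t) x (EuclideanSpace.single i 1)‖ ^ 2
      ≤ d * (C2 * C1) * ((1 + ‖x‖) ^ (d + 1))⁻¹ := by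
    calc ∑ i : Fin d, ‖fderiv ℝ (u t) x (EuclideanSpace.single i 1)‖ ^ 2
        ≤ ∑ _i : Fin d, C2 * (C1 * ((1 + ‖x‖) ^ (d + 1))⁻¹) := Finset.sum_le_sum fun i _ => hfd i
      _ = d * (C2 * C1) * ((1 + ‖x‖) ^ (d + 1))⁻¹ := by
          rw [Finset.sum_const, Finset.card_univ, Fintype.card_fin]; push_cast; ring
  rw [_root_.abs_of_nonneg (by positivity)]
  exact hsum

include hsmooth hdecay in
lemma integrable_P2 {β : ℝ → ℝ} (hβ : Continuous β) {G : ℝ → ℝ}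
    (hG : ∀ t : ℝ, G t = ∫ s in (0:ℝ)..t, β s) (t : ℝ) :
    Integrable (fun x : EuclideanSpace ℝ (Fin d) => G (‖u t x‖ ^ 2)) := by
  obtain ⟨C0, hC0pos, hC0⟩ := decay' hdecay {t} isCompact_singleton 0 0
  obtain ⟨Cd, hCdpos, hCd⟩ := decay' hdecay {t} isCompact_singleton (d + 1) 0
  obtain ⟨B, hB⟩ := (isCompact_Icc (a := (0:ℝ)) (b := C0 ^ 2)).exists_bound_of_continuousOn
    hβ.continuousOn
  have hBpos : 0 ≤ B := le_trans (norm_nonneg (β 0)) (hB 0 ⟨le_refl _, by positivity⟩)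
  have hu0 : ∀ x, ‖u t x‖ ≤ C0 := by
    intro x
    have := (hC0 t rfl x).1
    rw [norm_fd0 (u t) x]
    simpa using this
  have hud : ∀ x, ‖u t x‖ ≤ Cd * ((1 + ‖x‖) ^ (d + 1))⁻¹ := by
    intro x
    refine le_mul_inv (wpos x) ?_
    have := (hCd t rfl x).1
    rw [norm_fd0 (u t) x]
    exact this
  have hmem : ∀ x, ‖u t x‖ ^ 2 ∈ Set.Icc (0:ℝ) (C0 ^ 2) := by
    intro x
    constructor
    · positivity
    · exact pow_le_pow_left₀ (norm_nonneg _) (hu0 x) 2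
  have hcont : Continuous (fun x : EuclideanSpace ℝ (Fin d) => G (‖u t x‖ ^ 2)) := by
    refine (cont_G hβ hG).comp ?_
    have := cont_u hsmooth t
    continuity
  refine integrable_of_le_invpow hcont (K := B * (Cd * C0)) fun x => ?_
  calc |G (‖u t x‖ ^ 2)| ≤ B * (‖u t x‖ ^ 2) :=
      G_le hβ hG hB (hmem x)
    _ ≤ B * ((Cd * ((1 + ‖x‖) ^ (d + 1))⁻¹) * C0) := by
        refine mul_le_mul_of_nonneg_left ?_ hBpos
        rw [sq]
        exact mul_le_mul (hud x) (hu0 x) (norm_nonneg _) (by positivity)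
    _ = B * (Cd * C0) * ((1 + ‖x‖) ^ (d + 1))⁻¹ := by ring

end Main2

noncomputable def Phi {d : ℕ} (β : ℝ → ℝ) (u : ℝ → EuclideanSpace ℝ (Fin d) → ℂ)
    (t : ℝ) (x : EuclideanSpace ℝ (Fin d)) : ℝ :=
  (∑ i : Fin d, 2 * ((fderiv ℝ (fun y => deriv (fun s' => u s' y) t) x
        (EuclideanSpace.single i 1))
      * (starRingEnd ℂ) (fderiv ℝ (u t) x (EuclideanSpace.single i 1))).re)
    - β (‖u t x‖ ^ 2)
        * (2 * ((deriv (fun s' => u s' x) t) * (starRingEnd ℂ) (u t x)).re)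

section Main3
variable {d : ℕ} {u : ℝ → EuclideanSpace ℝ (Fin d) → ℂ}
variable (hsmooth : ContDiff ℝ (⊤ : ℕ∞) (fun p : ℝ × EuclideanSpace ℝ (Fin d) => u p.1 p.2))
variable (hdecay : ∀ J : Set ℝ, IsCompact J → ∀ n k : ℕ, ∃ C : ℝ,
      ∀ t ∈ J, ∀ x : EuclideanSpace ℝ (Fin d),
        (1 + ‖x‖) ^ n * ‖iteratedFDeriv ℝ k (fun y => u t y) x‖ ≤ C ∧
        (1 + ‖x‖) ^ n *
            ‖iteratedFDeriv ℝ k (fun y => deriv (fun s => u s y) t) x‖ ≤ C)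

include hsmooth in
lemma cont_F {β : ℝ → ℝ} (hβ : Continuous β) {G : ℝ → ℝ}
    (hG : ∀ t : ℝ, G t = ∫ s in (0:ℝ)..t, β s) (s : ℝ) :
    Continuous (fun x : EuclideanSpace ℝ (Fin d) =>
      (∑ i : Fin d, ‖fderiv ℝ (u s) x (EuclideanSpace.single i 1)‖ ^ 2)
        - G (‖u s x‖ ^ 2)) := by
  have h1 : Continuous (fun x : EuclideanSpace ℝ (Fin d) =>
      ∑ i : Fin d, ‖fderiv ℝ (u s) x (EuclideanSpace.single i 1)‖ ^ 2) := by
    refine continuous_finset_sum _ fun i _ => ?_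
    have := (contDiff_fdu hsmooth s i).continuous
    continuity
  have h2 : Continuous (fun x : EuclideanSpace ℝ (Fin d) => G (‖u s x‖ ^ 2)) := by
    refine (cont_G hβ hG).comp ?_
    have := cont_u hsmooth s
    continuity
  exact h1.sub h2

include hsmooth in
lemma cont_Phi {β : ℝ → ℝ} (hβ : Continuous β) (t : ℝ) : Continuous (Phi β u t) := by
  unfold Phi
  have h1 : Continuous (fun x : EuclideanSpace ℝ (Fin d) =>
      ∑ i : Fin d, 2 * ((fderiv ℝ (fun y => deriv (fun s' => u s' y) t) x
          (EuclideanSpace.single i 1))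
        * (starRingEnd ℂ) (fderiv ℝ (u t) x (EuclideanSpace.single i 1))).re) := by
    refine continuous_finset_sum _ fun i _ => ?_
    exact continuous_const.mul (Complex.continuous_re.comp
      (((contDiff_fdut hsmooth t i).continuous).mul
        (Complex.continuous_conj.comp (contDiff_fdu hsmooth t i).continuous)))
  have h2 : Continuous (fun x : EuclideanSpace ℝ (Fin d) =>
      β (‖u t x‖ ^ 2)
        * (2 * ((deriv (fun s' => u s' x) t) * (starRingEnd ℂ) (u t x)).re)) := by
    have hc1 : Continuous (fun x : EuclideanSpace ℝ (Fin d) => β (‖u t x‖ ^ 2)) := by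
      refine hβ.comp ?_
      have := cont_u hsmooth t
      continuity
    refine hc1.mul (continuous_const.mul (Complex.continuous_re.comp
      ((cont_ut hsmooth t).mul (Complex.continuous_conj.comp (cont_u hsmooth t)))))
  exact h1.sub h2

include hsmooth hdecay in
lemma hasDerivAt_En {β : ℝ → ℝ} (hβ : Continuous β) {G : ℝ → ℝ}
    (hG : ∀ t : ℝ, G t = ∫ s in (0:ℝ)..t, β s) (t : ℝ) :
    HasDerivAt (fun s => ∫ x : EuclideanSpace ℝ (Fin d),
        ((∑ i : Fin d, ‖fderiv ℝ (u s) x (EuclideanSpace.single i 1)‖ ^ 2)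
          - G (‖u s x‖ ^ 2)))
      (∫ x : EuclideanSpace ℝ (Fin d), Phi β u t x) t := by
  obtain ⟨C00, hC00pos, hC00⟩ := decay' hdecay (Set.Icc (t-1) (t+1)) isCompact_Icc 0 0
  obtain ⟨Cd0, hCd0pos, hCd0⟩ := decay' hdecay (Set.Icc (t-1) (t+1)) isCompact_Icc (d+1) 0
  obtain ⟨C01, hC01pos, hC01⟩ := decay' hdecay (Set.Icc (t-1) (t+1)) isCompact_Icc 0 1
  obtain ⟨Cd1, hCd1pos, hCd1⟩ := decay' hdecay (Set.Icc (t-1) (t+1)) isCompact_Icc (d+1) 1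
  obtain ⟨B, hB⟩ := (isCompact_Icc (a := (0:ℝ)) (b := C00 ^ 2)).exists_bound_of_continuousOn
    hβ.continuousOn
  have hBpos : 0 ≤ B := le_trans (norm_nonneg (β 0)) (hB 0 ⟨le_refl _, by positivity⟩)
  have hball : ∀ s ∈ Metric.ball t 1, s ∈ Set.Icc (t-1) (t+1) := by
    intro s hs
    rw [Real.ball_eq_Ioo] at hs
    exact ⟨hs.1.le, hs.2.le⟩
  have key := hasDerivAt_integral_of_dominated_loc_of_deriv_le (μ := volume)
    (F := fun s x => (∑ i : Fin d,
        ‖fderiv ℝ (u s) x (EuclideanSpace.single i 1)‖ ^ 2)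
      - G (‖u s x‖ ^ 2))
    (F' := fun s x => Phi β u s x)
    (x₀ := t) (s := Metric.ball t 1) (bound := fun x =>
      (2 * d * C01 * Cd1 + 2 * B * Cd0 * C00) * ((1 + ‖x‖) ^ (d + 1))⁻¹)
    (Metric.ball_mem_nhds t one_pos)
    (Filter.Eventually.of_forall fun s =>
      (cont_F hsmooth hβ hG s).aestronglyMeasurable)
    ((integrable_P1 hsmooth hdecay t).sub (integrable_P2 hsmooth hdecay hβ hG t))
    ((cont_Phi hsmooth hβ t).aestronglyMeasurable)
    ?_ ?_ ?_
  · exact key.2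
  · -- bound
    refine Filter.Eventually.of_forall fun x => fun s hs => ?_
    have hsJ := hball s hs
    have hfdut : ∀ i : Fin d, ‖fderiv ℝ (fun y => deriv (fun s' => u s' y) s) x
        (EuclideanSpace.single i 1)‖ ≤ C01 := by
      intro i
      refine (norm_fd1 _ x i).trans ?_
      have := (hC01 s hsJ x).2
      simpa using this
    have hfdu : ∀ i : Fin d, ‖fderiv ℝ (u s) x (EuclideanSpace.single i 1)‖
        ≤ Cd1 * ((1 + ‖x‖) ^ (d + 1))⁻¹ := by
      intro i
      refine le_mul_inv (wpos x) ?_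
      calc (1 + ‖x‖) ^ (d + 1) * ‖fderiv ℝ (u s) x (EuclideanSpace.single i 1)‖
          ≤ (1 + ‖x‖) ^ (d + 1) * ‖iteratedFDeriv ℝ 1 (u s) x‖ :=
            mul_le_mul_of_nonneg_left (norm_fd1 (u s) x i) (wpos x).le
        _ ≤ Cd1 := (hCd1 s hsJ x).1
    have hu0 : ‖u s x‖ ≤ C00 := by
      have := (hC00 s hsJ x).1
      rw [norm_fd0 (u s) x]
      simpa using this
    have hut : ‖deriv (fun s' => u s' x) s‖ ≤ Cd0 * ((1 + ‖x‖) ^ (d + 1))⁻¹ := by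
      refine le_mul_inv (wpos x) ?_
      have := (hCd0 s hsJ x).2
      rw [norm_fd0 (fun y => deriv (fun s' => u s' y) s) x]
      exact this
    have hβb : ‖β (‖u s x‖ ^ 2)‖ ≤ B := by
      refine hB _ ⟨by positivity, ?_⟩
      exact pow_le_pow_left₀ (norm_nonneg _) hu0 2
    rw [Real.norm_eq_abs]
    unfold Phi
    have h1 : |∑ i : Fin d, 2 * ((fderiv ℝ (fun y => deriv (fun s' => u s' y) s) x
          (EuclideanSpace.single i 1))
        * (starRingEnd ℂ) (fderiv ℝ (u s) x (EuclideanSpace.single i 1))).re|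
        ≤ 2 * d * C01 * Cd1 * ((1 + ‖x‖) ^ (d + 1))⁻¹ := by
      refine (Finset.abs_sum_le_sum_abs _ _).trans ?_
      have : ∀ i : Fin d, |2 * ((fderiv ℝ (fun y => deriv (fun s' => u s' y) s) x
            (EuclideanSpace.single i 1))
          * (starRingEnd ℂ) (fderiv ℝ (u s) x (EuclideanSpace.single i 1))).re|
          ≤ 2 * (C01 * (Cd1 * ((1 + ‖x‖) ^ (d + 1))⁻¹)) := by
        intro i
        rw [abs_mul, Nat.abs_ofNat]
        refine mul_le_mul_of_nonneg_left ?_ (by norm_num)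
        refine (re_mul_conj_le _ _).trans ?_
        exact mul_le_mul (hfdut i) (hfdu i) (norm_nonneg _) hC01pos
      refine (Finset.sum_le_sum fun i _ => this i).trans ?_
      rw [Finset.sum_const, Finset.card_univ, Fintype.card_fin, nsmul_eq_mul]
      ring_nf
      exact le_refl _
    have h2 : |β (‖u s x‖ ^ 2)
        * (2 * ((deriv (fun s' => u s' x) s) * (starRingEnd ℂ) (u s x)).re)|
        ≤ 2 * B * Cd0 * C00 * ((1 + ‖x‖) ^ (d + 1))⁻¹ := by
      rw [abs_mul, abs_mul, Nat.abs_ofNat]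
      calc |β (‖u s x‖ ^ 2)|
            * (2 * |((deriv (fun s' => u s' x) s) * (starRingEnd ℂ) (u s x)).re|)
          ≤ B * (2 * ((Cd0 * ((1 + ‖x‖) ^ (d + 1))⁻¹) * C00)) := by
            refine mul_le_mul hβb ?_ (by positivity) hBpos
            refine mul_le_mul_of_nonneg_left ?_ (by norm_num)
            refine (re_mul_conj_le _ _).trans ?_
            exact mul_le_mul hut hu0 (norm_nonneg _) (by positivity)
        _ = 2 * B * Cd0 * C00 * ((1 + ‖x‖) ^ (d + 1))⁻¹ := by ring
    calc |(∑ i : Fin d, 2 * ((fderiv ℝ (fun y => deriv (fun s' => u s' y) s) x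
          (EuclideanSpace.single i 1))
        * (starRingEnd ℂ) (fderiv ℝ (u s) x (EuclideanSpace.single i 1))).re)
        - β (‖u s x‖ ^ 2)
          * (2 * ((deriv (fun s' => u s' x) s) * (starRingEnd ℂ) (u s x)).re)|
        ≤ |∑ i : Fin d, 2 * ((fderiv ℝ (fun y => deriv (fun s' => u s' y) s) x
            (EuclideanSpace.single i 1))
          * (starRingEnd ℂ) (fderiv ℝ (u s) x (EuclideanSpace.single i 1))).re|
          + |β (‖u s x‖ ^ 2)
            * (2 * ((deriv (fun s' => u s' x) s) * (starRingEnd ℂ) (u s x)).re)| :=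
          abs_sub _ _
      _ ≤ 2 * d * C01 * Cd1 * ((1 + ‖x‖) ^ (d + 1))⁻¹
          + 2 * B * Cd0 * C00 * ((1 + ‖x‖) ^ (d + 1))⁻¹ := add_le_add h1 h2
      _ = (2 * d * C01 * Cd1 + 2 * B * Cd0 * C00) * ((1 + ‖x‖) ^ (d + 1))⁻¹ := by ring
  · -- integrability of bound
    exact integrable_invpow.const_mul _
  · -- differentiability
    refine Filter.Eventually.of_forall fun x => fun s _ => ?_
    exact hasDerivAt_energy hsmooth hβ hG s x

end Main3

section Main4
variable {d : ℕ} {u : ℝ → EuclideanSpace ℝ (Fin d) → ℂ}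
variable (hsmooth : ContDiff ℝ (⊤ : ℕ∞) (fun p : ℝ × EuclideanSpace ℝ (Fin d) => u p.1 p.2))
variable (hdecay : ∀ J : Set ℝ, IsCompact J → ∀ n k : ℕ, ∃ C : ℝ,
      ∀ t ∈ J, ∀ x : EuclideanSpace ℝ (Fin d),
        (1 + ‖x‖) ^ n * ‖iteratedFDeriv ℝ k (fun y => u t y) x‖ ≤ C ∧
        (1 + ‖x‖) ^ n *
            ‖iteratedFDeriv ℝ k (fun y => deriv (fun s => u s y) t) x‖ ≤ C)

lemma integrable_Bre {f g : EuclideanSpace ℝ (Fin d) → ℂ} (hf : Continuous f)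
    (hg : Continuous g) {K : ℝ}
    (hfg : ∀ x, ‖f x‖ * ‖g x‖ ≤ K * ((1 + ‖x‖) ^ (d + 1))⁻¹) :
    Integrable (fun x => Bre (f x) (g x)) := by
  have hc : Continuous (fun x => Bre (f x) (g x)) := by
    simp only [Bre_apply]
    exact Complex.continuous_re.comp (hf.mul (Complex.continuous_conj.comp hg))
  refine integrable_of_le_invpow hc (K := K) fun x => ?_
  simp only [Bre_apply]
  exact (re_mul_conj_le _ _).trans (hfg x)

include hsmooth hdecay in
lemma int_Phi_zero {β : ℝ → ℝ} (hβ : Continuous β)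
    (hPDE : ∀ (t : ℝ) (x : EuclideanSpace ℝ (Fin d)),
      Complex.I * deriv (fun s => u s x) t
        + (∑ i : Fin d,
            fderiv ℝ (fun y => fderiv ℝ (fun z => u t z) y (EuclideanSpace.single i 1)) x
              (EuclideanSpace.single i 1))
        + (β (‖u t x‖ ^ 2) : ℂ) * u t x = 0) (t : ℝ) :
    ∫ x : EuclideanSpace ℝ (Fin d), Phi β u t x = 0 := by
  obtain ⟨C00, hC00pos, hC00⟩ := decay' hdecay {t} isCompact_singleton 0 0
  obtain ⟨Cd0, hCd0pos, hCd0⟩ := decay' hdecay {t} isCompact_singleton (d+1) 0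
  obtain ⟨C01, hC01pos, hC01⟩ := decay' hdecay {t} isCompact_singleton 0 1
  obtain ⟨Cd1, hCd1pos, hCd1⟩ := decay' hdecay {t} isCompact_singleton (d+1) 1
  obtain ⟨C02, hC02pos, hC02⟩ := decay' hdecay {t} isCompact_singleton 0 2
  obtain ⟨B, hB⟩ := (isCompact_Icc (a := (0:ℝ)) (b := C00 ^ 2)).exists_bound_of_continuousOn
    hβ.continuousOn
  have hBpos : 0 ≤ B := le_trans (norm_nonneg (β 0)) (hB 0 ⟨le_refl _, by positivity⟩)
  -- pointwise bounds
  have hu0 : ∀ x, ‖u t x‖ ≤ C00 := fun x => by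
    have := (hC00 t rfl x).1; rw [norm_fd0 (u t) x]; simpa using this
  have hud : ∀ x, ‖u t x‖ ≤ Cd0 * ((1 + ‖x‖) ^ (d + 1))⁻¹ := fun x => by
    refine le_mul_inv (wpos x) ?_
    have := (hCd0 t rfl x).1; rw [norm_fd0 (u t) x]; exact this
  have hut0 : ∀ x, ‖deriv (fun s' => u s' x) t‖ ≤ C00 := fun x => by
    have := (hC00 t rfl x).2
    rw [norm_fd0 (fun y => deriv (fun s => u s y) t) x]
    simpa using this
  have hutd : ∀ x, ‖deriv (fun s' => u s' x) t‖ ≤ Cd0 * ((1 + ‖x‖) ^ (d + 1))⁻¹ := fun x => by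
    refine le_mul_inv (wpos x) ?_
    have := (hCd0 t rfl x).2
    rw [norm_fd0 (fun y => deriv (fun s => u s y) t) x]
    exact this
  have hfdu0 : ∀ (i : Fin d) x, ‖fderiv ℝ (u t) x (EuclideanSpace.single i 1)‖ ≤ C01 :=
    fun i x => by
      refine (norm_fd1 (u t) x i).trans ?_
      have := (hC01 t rfl x).1; simpa using this
  have hfdud : ∀ (i : Fin d) x, ‖fderiv ℝ (u t) x (EuclideanSpace.single i 1)‖
      ≤ Cd1 * ((1 + ‖x‖) ^ (d + 1))⁻¹ := fun i x => by
    refine le_mul_inv (wpos x) ?_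
    calc (1 + ‖x‖) ^ (d + 1) * ‖fderiv ℝ (u t) x (EuclideanSpace.single i 1)‖
        ≤ (1 + ‖x‖) ^ (d + 1) * ‖iteratedFDeriv ℝ 1 (u t) x‖ :=
          mul_le_mul_of_nonneg_left (norm_fd1 (u t) x i) (wpos x).le
      _ ≤ Cd1 := (hCd1 t rfl x).1
  have hfdut0 : ∀ (i : Fin d) x, ‖fderiv ℝ (fun y => deriv (fun s' => u s' y) t) x
      (EuclideanSpace.single i 1)‖ ≤ C01 := fun i x => by
    refine (norm_fd1 _ x i).trans ?_
    have := (hC01 t rfl x).2; simpa using this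
  have hddv0 : ∀ (i : Fin d) x, ‖fderiv ℝ (fun y => fderiv ℝ (u t) y
      (EuclideanSpace.single i 1)) x (EuclideanSpace.single i 1)‖ ≤ C02 := fun i x => by
    refine (norm_fd2 (contDiff_ux hsmooth t) x i).trans ?_
    have := (hC02 t rfl x).1; simpa using this
  -- continuity
  have hcut : Continuous (fun y => deriv (fun s' => u s' y) t) := cont_ut hsmooth t
  have hcu : Continuous (u t) := cont_u hsmooth t
  have hcfdu : ∀ i : Fin d, Continuous (fun x => fderiv ℝ (u t) x (EuclideanSpace.single i 1)) :=
    fun i => (contDiff_fdu hsmooth t i).continuous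
  have hcfdut : ∀ i : Fin d, Continuous (fun x => fderiv ℝ (fun y => deriv (fun s' => u s' y) t) x
      (EuclideanSpace.single i 1)) := fun i => (contDiff_fdut hsmooth t i).continuous
  have hcddv : ∀ i : Fin d, Continuous (fun x => fderiv ℝ (fun y => fderiv ℝ (u t) y
      (EuclideanSpace.single i 1)) x (EuclideanSpace.single i 1)) :=
    fun i => (contDiff_ddv hsmooth t i).continuous
  -- integrabilities
  have I1 : ∀ i : Fin d, Integrable (fun x => Bre (fderiv ℝ (fun y => deriv (fun s' => u s' y) t)
      x (EuclideanSpace.single i 1)) (fderiv ℝ (u t) x (EuclideanSpace.single i 1))) := by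
    intro i
    refine integrable_Bre (hcfdut i) (hcfdu i) (K := C01 * Cd1) fun x => ?_
    calc ‖fderiv ℝ (fun y => deriv (fun s' => u s' y) t) x (EuclideanSpace.single i 1)‖
          * ‖fderiv ℝ (u t) x (EuclideanSpace.single i 1)‖
        ≤ C01 * (Cd1 * ((1 + ‖x‖) ^ (d + 1))⁻¹) :=
          mul_le_mul (hfdut0 i x) (hfdud i x) (norm_nonneg _) hC01pos
      _ = C01 * Cd1 * ((1 + ‖x‖) ^ (d + 1))⁻¹ := by ring
  have I2 : ∀ i : Fin d, Integrable (fun x => Bre (deriv (fun s' => u s' x) t)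
      (fderiv ℝ (fun y => fderiv ℝ (u t) y (EuclideanSpace.single i 1)) x
        (EuclideanSpace.single i 1))) := by
    intro i
    refine integrable_Bre hcut (hcddv i) (K := Cd0 * C02) fun x => ?_
    calc ‖deriv (fun s' => u s' x) t‖ * ‖fderiv ℝ (fun y => fderiv ℝ (u t) y
          (EuclideanSpace.single i 1)) x (EuclideanSpace.single i 1)‖
        ≤ (Cd0 * ((1 + ‖x‖) ^ (d + 1))⁻¹) * C02 :=
          mul_le_mul (hutd x) (hddv0 i x) (norm_nonneg _) (by positivity)
      _ = Cd0 * C02 * ((1 + ‖x‖) ^ (d + 1))⁻¹ := by ring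
  have I3 : ∀ i : Fin d, Integrable (fun x => Bre (deriv (fun s' => u s' x) t)
      (fderiv ℝ (u t) x (EuclideanSpace.single i 1))) := by
    intro i
    refine integrable_Bre hcut (hcfdu i) (K := Cd0 * C01) fun x => ?_
    calc ‖deriv (fun s' => u s' x) t‖ * ‖fderiv ℝ (u t) x (EuclideanSpace.single i 1)‖
        ≤ (Cd0 * ((1 + ‖x‖) ^ (d + 1))⁻¹) * C01 :=
          mul_le_mul (hutd x) (hfdu0 i x) (norm_nonneg _) (by positivity)
      _ = Cd0 * C01 * ((1 + ‖x‖) ^ (d + 1))⁻¹ := by ring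
  have I4 : Integrable (fun x => β (‖u t x‖ ^ 2)
      * (2 * Bre (deriv (fun s' => u s' x) t) (u t x))) := by
    have hc : Continuous (fun x : EuclideanSpace ℝ (Fin d) => β (‖u t x‖ ^ 2)
        * (2 * Bre (deriv (fun s' => u s' x) t) (u t x))) := by
      simp only [Bre_apply]
      refine Continuous.mul (hβ.comp ?_) (continuous_const.mul
        (Complex.continuous_re.comp (hcut.mul (Complex.continuous_conj.comp hcu))))
      exact (continuous_norm.comp hcu).pow 2
    refine integrable_of_le_invpow hc (K := B * (2 * Cd0 * C00)) fun x => ?_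
    have hβb : ‖β (‖u t x‖ ^ 2)‖ ≤ B := by
      refine hB _ ⟨by positivity, ?_⟩
      exact pow_le_pow_left₀ (norm_nonneg _) (hu0 x) 2
    rw [abs_mul]
    calc |β (‖u t x‖ ^ 2)| * |2 * Bre (deriv (fun s' => u s' x) t) (u t x)|
        ≤ B * (2 * ((Cd0 * ((1 + ‖x‖) ^ (d + 1))⁻¹) * C00)) := by
          refine mul_le_mul hβb ?_ (abs_nonneg _) hBpos
          rw [abs_mul, Nat.abs_ofNat]
          refine mul_le_mul_of_nonneg_left ?_ (by norm_num)
          simp only [Bre_apply]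
          refine (re_mul_conj_le _ _).trans ?_
          exact mul_le_mul (hutd x) (hu0 x) (norm_nonneg _) (by positivity)
      _ = B * (2 * Cd0 * C00) * ((1 + ‖x‖) ^ (d + 1))⁻¹ := by ring
  -- integration by parts
  have hparts : ∀ i : Fin d,
      ∫ x, Bre (fderiv ℝ (fun y => deriv (fun s' => u s' y) t) x (EuclideanSpace.single i 1))
        (fderiv ℝ (u t) x (EuclideanSpace.single i 1))
      = - ∫ x, Bre (deriv (fun s' => u s' x) t)
          (fderiv ℝ (fun y => fderiv ℝ (u t) y (EuclideanSpace.single i 1)) x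
            (EuclideanSpace.single i 1)) := by
    intro i
    have hf : ∀ x : EuclideanSpace ℝ (Fin d),
        HasLineDerivAt ℝ (fun y => deriv (fun s' => u s' y) t)
          (fderiv ℝ (fun y => deriv (fun s' => u s' y) t) x (EuclideanSpace.single i 1)) x
          (EuclideanSpace.single i 1) := fun x =>
      (((contDiff_ut hsmooth t).differentiable (by simp) x).hasFDerivAt).hasLineDerivAt _
    have hg : ∀ x : EuclideanSpace ℝ (Fin d),
        HasLineDerivAt ℝ (fun y => fderiv ℝ (u t) y (EuclideanSpace.single i 1))
          (fderiv ℝ (fun y => fderiv ℝ (u t) y (EuclideanSpace.single i 1)) x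
            (EuclideanSpace.single i 1)) x (EuclideanSpace.single i 1) := fun x =>
      (((contDiff_fdu hsmooth t i).differentiable (by simp) x).hasFDerivAt).hasLineDerivAt _
    have h := integral_bilinear_hasLineDerivAt_right_eq_neg_left_of_integrable
      (μ := volume) (B := Bre) (I1 i) (I2 i) (I3 i) (fun x _ => hf x) (fun x _ => hg x)
    linarith [h]
  -- pointwise PDE identity
  have hPDE' : ∀ x : EuclideanSpace ℝ (Fin d),
      Complex.I * deriv (fun s => u s x) t
        + (∑ i : Fin d,
            fderiv ℝ (fun y => fderiv ℝ (u t) y (EuclideanSpace.single i 1)) x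
              (EuclideanSpace.single i 1))
        + (β (‖u t x‖ ^ 2) : ℂ) * u t x = 0 := fun x => hPDE t x
  have claim : ∀ x : EuclideanSpace ℝ (Fin d),
      (∑ i : Fin d, Bre (deriv (fun s' => u s' x) t)
        (fderiv ℝ (fun y => fderiv ℝ (u t) y (EuclideanSpace.single i 1)) x
          (EuclideanSpace.single i 1)))
      = -(β (‖u t x‖ ^ 2) * Bre (deriv (fun s' => u s' x) t) (u t x)) := by
    intro x
    have hΔ : (∑ i : Fin d,
        fderiv ℝ (fun y => fderiv ℝ (u t) y (EuclideanSpace.single i 1)) x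
          (EuclideanSpace.single i 1))
        = -(Complex.I * deriv (fun s => u s x) t)
          - (β (‖u t x‖ ^ 2) : ℂ) * u t x := by
      linear_combination hPDE' x
    rw [← map_sum, hΔ]
    simp only [Bre_apply]
    simp [Complex.mul_re, Complex.mul_im, Complex.conj_re, Complex.conj_im,
      Complex.sub_re, Complex.neg_re, Complex.I_re, Complex.I_im,
      Complex.ofReal_re, Complex.ofReal_im]
    ring
  -- assemble
  have hPhi : ∀ x, Phi β u t x
      = (∑ i : Fin d, 2 * Bre (fderiv ℝ (fun y => deriv (fun s' => u s' y) t) x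
          (EuclideanSpace.single i 1)) (fderiv ℝ (u t) x (EuclideanSpace.single i 1)))
        - β (‖u t x‖ ^ 2)
          * (2 * Bre (deriv (fun s' => u s' x) t) (u t x)) := fun x => rfl
  have hInt1 : Integrable (fun x => ∑ i : Fin d, 2 * Bre (fderiv ℝ
      (fun y => deriv (fun s' => u s' y) t) x (EuclideanSpace.single i 1))
      (fderiv ℝ (u t) x (EuclideanSpace.single i 1))) :=
    integrable_finset_sum _ fun i _ => (I1 i).const_mul 2
  calc ∫ x : EuclideanSpace ℝ (Fin d), Phi β u t x
      = (∫ x, ∑ i : Fin d, 2 * Bre (fderiv ℝ (fun y => deriv (fun s' => u s' y) t) x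
            (EuclideanSpace.single i 1)) (fderiv ℝ (u t) x (EuclideanSpace.single i 1)))
        - ∫ x, β (‖u t x‖ ^ 2)
            * (2 * Bre (deriv (fun s' => u s' x) t) (u t x)) := by
        rw [← integral_sub hInt1 I4]
        exact integral_congr_ae (Filter.Eventually.of_forall fun x => hPhi x)
    _ = (∑ i : Fin d, ∫ x, 2 * Bre (fderiv ℝ (fun y => deriv (fun s' => u s' y) t) x
            (EuclideanSpace.single i 1)) (fderiv ℝ (u t) x (EuclideanSpace.single i 1)))
        - ∫ x, β (‖u t x‖ ^ 2)
            * (2 * Bre (deriv (fun s' => u s' x) t) (u t x)) := by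
        rw [integral_finset_sum _ fun i _ => (I1 i).const_mul 2]
    _ = (∑ i : Fin d, -2 * ∫ x, Bre (deriv (fun s' => u s' x) t)
            (fderiv ℝ (fun y => fderiv ℝ (u t) y (EuclideanSpace.single i 1)) x
              (EuclideanSpace.single i 1)))
        - ∫ x, β (‖u t x‖ ^ 2)
            * (2 * Bre (deriv (fun s' => u s' x) t) (u t x)) := by
        congr 1
        refine Finset.sum_congr rfl fun i _ => ?_
        rw [integral_const_mul, hparts i]
        ring
    _ = -2 * (∫ x, ∑ i : Fin d, Bre (deriv (fun s' => u s' x) t)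
            (fderiv ℝ (fun y => fderiv ℝ (u t) y (EuclideanSpace.single i 1)) x
              (EuclideanSpace.single i 1)))
        - ∫ x, β (‖u t x‖ ^ 2)
            * (2 * Bre (deriv (fun s' => u s' x) t) (u t x)) := by
        rw [integral_finset_sum _ fun i _ => I2 i, Finset.mul_sum]
    _ = -2 * (∫ x, -(β (‖u t x‖ ^ 2)
            * Bre (deriv (fun s' => u s' x) t) (u t x)))
        - ∫ x, 2 * (β (‖u t x‖ ^ 2)
            * Bre (deriv (fun s' => u s' x) t) (u t x)) := by
        congr 1
        · congr 1
          exact integral_congr_ae (Filter.Eventually.of_forall fun x => claim x)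
        · exact integral_congr_ae (Filter.Eventually.of_forall fun x => by ring)
    _ = 0 := by
        rw [integral_neg, integral_const_mul]
        ring

end Main4

theorem stmt_18 (d : ℕ) (hd : 1 ≤ d)
    (β : ℝ → ℝ) (hβ : Continuous β)
    (G : ℝ → ℝ) (hG : ∀ t : ℝ, G t = ∫ s in (0:ℝ)..t, β s)
    (u : ℝ → EuclideanSpace ℝ (Fin d) → ℂ)
    (hsmooth : ContDiff ℝ (⊤ : ℕ∞) (fun p : ℝ × EuclideanSpace ℝ (Fin d) => u p.1 p.2))
    (hdecay : ∀ J : Set ℝ, IsCompact J → ∀ n k : ℕ, ∃ C : ℝ,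
      ∀ t ∈ J, ∀ x : EuclideanSpace ℝ (Fin d),
        (1 + ‖x‖) ^ n * ‖iteratedFDeriv ℝ k (fun y => u t y) x‖ ≤ C ∧
        (1 + ‖x‖) ^ n *
            ‖iteratedFDeriv ℝ k (fun y => deriv (fun s => u s y) t) x‖ ≤ C)
    (hPDE : ∀ (t : ℝ) (x : EuclideanSpace ℝ (Fin d)),
      Complex.I * deriv (fun s => u s x) t
        + (∑ i : Fin d,
            fderiv ℝ (fun y => fderiv ℝ (fun z => u t z) y (EuclideanSpace.single i 1)) x
              (EuclideanSpace.single i 1))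
        + (β (‖u t x‖ ^ 2) : ℂ) * u t x = 0) :
    ∀ t : ℝ,
      (∫ x : EuclideanSpace ℝ (Fin d),
          ∑ i : Fin d,
            ‖fderiv ℝ (fun z => u t z) x (EuclideanSpace.single i 1)‖ ^ 2)
        - (∫ x : EuclideanSpace ℝ (Fin d), G (‖u t x‖ ^ 2))
      = (∫ x : EuclideanSpace ℝ (Fin d),
          ∑ i : Fin d,
            ‖fderiv ℝ (fun z => u 0 z) x (EuclideanSpace.single i 1)‖ ^ 2)
        - ∫ x : EuclideanSpace ℝ (Fin d), G (‖u 0 x‖ ^ 2) := by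
  intro t
  have hEn : ∀ s : ℝ, HasDerivAt (fun s' => ∫ x : EuclideanSpace ℝ (Fin d),
      ((∑ i : Fin d, ‖fderiv ℝ (u s') x (EuclideanSpace.single i 1)‖ ^ 2)
        - G (‖u s' x‖ ^ 2))) 0 s := by
    intro s
    have h := hasDerivAt_En hsmooth hdecay hβ hG s
    rwa [int_Phi_zero hsmooth hdecay hβ hPDE s] at h
  have hdiff : Differentiable ℝ (fun s' => ∫ x : EuclideanSpace ℝ (Fin d),
      ((∑ i : Fin d, ‖fderiv ℝ (u s') x (EuclideanSpace.single i 1)‖ ^ 2)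
        - G (‖u s' x‖ ^ 2))) := fun s => (hEn s).differentiableAt
  have hconst := is_const_of_deriv_eq_zero hdiff (fun s => (hEn s).deriv) t 0
  have e1 : (∫ x : EuclideanSpace ℝ (Fin d),
        ∑ i : Fin d, ‖fderiv ℝ (u t) x (EuclideanSpace.single i 1)‖ ^ 2)
      - (∫ x : EuclideanSpace ℝ (Fin d), G (‖u t x‖ ^ 2))
      = ∫ x : EuclideanSpace ℝ (Fin d),
        ((∑ i : Fin d, ‖fderiv ℝ (u t) x (EuclideanSpace.single i 1)‖ ^ 2)
          - G (‖u t x‖ ^ 2)) :=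
    (integral_sub (integrable_P1 hsmooth hdecay t)
      (integrable_P2 hsmooth hdecay hβ hG t)).symm
  have e0 : (∫ x : EuclideanSpace ℝ (Fin d),
        ∑ i : Fin d, ‖fderiv ℝ (u 0) x (EuclideanSpace.single i 1)‖ ^ 2)
      - (∫ x : EuclideanSpace ℝ (Fin d), G (‖u 0 x‖ ^ 2))
      = ∫ x : EuclideanSpace ℝ (Fin d),
        ((∑ i : Fin d, ‖fderiv ℝ (u 0) x (EuclideanSpace.single i 1)‖ ^ 2)
          - G (‖u 0 x‖ ^ 2)) :=
    (integral_sub (integrable_P1 hsmooth hdecay 0)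
      (integrable_P2 hsmooth hdecay hβ hG 0)).symm
  exact e1.trans (hconst.trans e0.symm)
end
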